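/- arXiv:1909.09471 — 6 statements merged into one kernel-verified Lean document; each statement's English description precedes it below -/
import Mathlib

section
/- Every threshold graph is word-representable. -/
open Classical in
/-- Letters `x` and `y` alternate in the word `w`: the subword of `w` consisting of
all occurrences of `x` and `y` contains no two equal consecutive letters. -/
def Alternate {V : Type*} (w : List V) (x y : V) : Prop :=
  (w.filter fun v => decide (v = x ∨ v = y)).Chain' (· ≠ ·)

/-- The word `w` represents the simple graph `G`: every vertex occurs in `w`, and two
distinct vertices alternate in `w` iff they are adjacent in `G`. -/
def Represents {V : Type*} (G : SimpleGraph V) (w : List V) : Prop :=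
  (∀ v : V, v ∈ w) ∧ ∀ x y : V, x ≠ y → (Alternate w x y ↔ G.Adj x y)

/-- A simple graph is word-representable if some word represents it. -/
def WordRepresentable {V : Type*} (G : SimpleGraph V) : Prop :=
  ∃ w : List V, Represents G w

/-- A threshold graph: a graph built from a single vertex by repeatedly adding either an
isolated vertex or a dominating vertex.  Equivalently, the vertices can be enumerated
`0, 1, …, n` (the order of addition) together with a flag `f` saying whether each vertex
was added as a dominating vertex, so that two distinct vertices are adjacent iff the later
of the two was added as a dominating vertex. -/
def IsThresholdGraph {V : Type*} (G : SimpleGraph V) : Prop :=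
  ∃ (n : ℕ) (e : V ≃ Fin (n + 1)) (f : Fin (n + 1) → Bool),
    ∀ u v : V, G.Adj u v ↔
      u ≠ v ∧ ((e u < e v ∧ f (e v) = true) ∨ (e v < e u ∧ f (e u) = true))

open Classical in
lemma filter_pair_aux {V : Type*} {l : List V} {x y : V} (hnd : l.Nodup)
    (hx : x ∈ l) (hy : y ∈ l) (hxy : x ≠ y) :
    l.filter (fun v => decide (v = x ∨ v = y)) = [x, y] ∨
    l.filter (fun v => decide (v = x ∨ v = y)) = [y, x] := by
  set t := l.filter (fun v => decide (v = x ∨ v = y)) with ht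
  have htnd : t.Nodup := hnd.filter _
  have hmem : ∀ v ∈ t, v = x ∨ v = y := by
    intro v hv
    have := List.of_mem_filter hv
    simpa using this
  have hxt : x ∈ t := List.mem_filter.2 ⟨hx, by simp⟩
  have hyt : y ∈ t := List.mem_filter.2 ⟨hy, by simp⟩
  clear_value t
  match t, htnd, hmem, hxt, hyt with
  | [], _, _, hxt, _ => simp at hxt
  | [a], _, hmem, hxt, hyt =>
    simp only [List.mem_singleton] at hxt hyt
    exact absurd (hxt.trans hyt.symm) hxy
  | a :: b :: rest, htnd, hmem, hxt, hyt =>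
    have hab : a ≠ b := by
      intro hEq
      exact (List.nodup_cons.1 htnd).1 (hEq ▸ List.mem_cons_self (a := b) (l := rest))
    have ha : a = x ∨ a = y := hmem a (by simp)
    have hb : b = x ∨ b = y := hmem b (by simp)
    have hrest : rest = [] := by
      rcases rest with _ | ⟨c, rest'⟩
      · rfl
      · exfalso
        have hc : c = x ∨ c = y := hmem c (by simp)
        have hna : ¬ (a ∈ b :: c :: rest') := (List.nodup_cons.1 htnd).1
        have hnb : ¬ (b ∈ c :: rest') := (List.nodup_cons.1 (List.nodup_cons.1 htnd).2).1
        rcases ha with rfl | rfl <;> rcases hb with rfl | rfl <;>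
          rcases hc with rfl | rfl <;> simp_all
    subst hrest
    rcases ha with rfl | rfl <;> rcases hb with rfl | rfl <;> simp_all

lemma rel_of_filter_pair {V : Type*} {l : List V} {p : V → Bool} {x y : V} {r : V → V → Prop}
    (hp : l.Pairwise r) (h : l.filter p = [x, y]) : r x y := by
  have := List.Pairwise.sublist (List.filter_sublist (p := p) (l := l)) hp
  rw [h] at this
  simpa using this

/-- Every threshold graph is word-representable. -/
theorem threshold_wordRepresentable {V : Type*} (G : SimpleGraph V)
    (h : IsThresholdGraph G) : WordRepresentable G := by
  classical
  obtain ⟨n, e, f, hadj⟩ := h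
  -- first permutation: natural order
  set L1 : List V := (List.finRange (n + 1)).map e.symm with hL1
  -- second permutation: non-dominating in decreasing order, then dominating in increasing order
  set L2 : List V :=
    (((List.finRange (n + 1)).reverse.filter (fun i => !(f i))) ++
      ((List.finRange (n + 1)).filter (fun i => f i))).map e.symm with hL2
  -- the second strict order
  set r2 : V → V → Prop := fun a b =>
    (f (e a) = false ∧ f (e b) = false ∧ e b < e a) ∨
    (f (e a) = true ∧ f (e b) = true ∧ e a < e b) ∨
    (f (e a) = false ∧ f (e b) = true) with hr2def
  have hL1nd : L1.Nodup := (List.nodup_finRange _).map e.symm.injective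
  have hL2nd : L2.Nodup := by
    refine List.Nodup.map e.symm.injective ?_
    refine List.Nodup.append ((List.nodup_reverse.2 (List.nodup_finRange _)).filter _)
      ((List.nodup_finRange _).filter _) ?_
    intro i hi hj
    have h1 := List.of_mem_filter hi
    have h2 := List.of_mem_filter hj
    simp_all
  have hL1mem : ∀ v : V, v ∈ L1 := by
    intro v
    rw [hL1, List.mem_map]
    exact ⟨e v, List.mem_finRange _, by simp⟩
  have hL2mem : ∀ v : V, v ∈ L2 := by
    intro v
    rw [hL2, List.mem_map]
    refine ⟨e v, ?_, by simp⟩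
    rw [List.mem_append]
    by_cases hf : f (e v) = true
    · right; exact List.mem_filter.2 ⟨List.mem_finRange _, by simp [hf]⟩
    · left; exact List.mem_filter.2 ⟨by simp, by simp [hf]⟩
  have hL1p : L1.Pairwise (fun a b => e a < e b) := by
    rw [hL1, List.pairwise_map]
    simpa using List.pairwise_lt_finRange (n + 1)
  have hL2p : L2.Pairwise r2 := by
    rw [hL2, List.pairwise_map]
    rw [List.pairwise_append]
    refine ⟨?_, ?_, ?_⟩
    · have hgt : ((List.finRange (n + 1)).reverse.filter (fun i => !(f i))).Pairwise
          (fun i j => j < i) :=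
        (List.Pairwise.sublist (List.filter_sublist)
          (List.pairwise_reverse.2 (List.pairwise_lt_finRange (n + 1))))
      refine hgt.imp_of_mem ?_
      intro a b ha hb hab
      have hfa := List.of_mem_filter ha
      have hfb := List.of_mem_filter hb
      simp only [Bool.not_eq_true'] at hfa hfb
      left
      simp_all
    · have hlt : ((List.finRange (n + 1)).filter (fun i => f i)).Pairwise (· < ·) :=
        List.Pairwise.sublist (List.filter_sublist) (List.pairwise_lt_finRange (n + 1))
      refine hlt.imp_of_mem ?_
      intro a b ha hb hab
      have hfa := List.of_mem_filter ha
      have hfb := List.of_mem_filter hb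
      right; left
      simp_all
    · intro a ha b hb
      have hfa := List.of_mem_filter ha
      have hfb := List.of_mem_filter hb
      simp only [Bool.not_eq_true'] at hfa
      right; right
      simp_all
  refine ⟨L1 ++ L2, fun v => List.mem_append.2 (Or.inl (hL1mem v)), ?_⟩
  intro x y hxy
  have hfilt : (L1 ++ L2).filter (fun v => decide (v = x ∨ v = y)) =
      L1.filter (fun v => decide (v = x ∨ v = y)) ++
      L2.filter (fun v => decide (v = x ∨ v = y)) := List.filter_append _ _
  have h1 := filter_pair_aux hL1nd (hL1mem x) (hL1mem y) hxy
  have h2 := filter_pair_aux hL2nd (hL2mem x) (hL2mem y) hxy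
  have hexy : e x ≠ e y := fun hEq => hxy (e.injective hEq)
  rw [hadj]
  rcases h1 with h1 | h1 <;> rcases h2 with h2 | h2 <;>
    unfold Alternate <;> rw [hfilt, h1, h2]
  · -- [x,y] ++ [x,y] : alternate; e x < e y and r2 x y
    have hlt : e x < e y := rel_of_filter_pair (r := fun a b => e a < e b) hL1p h1
    have hr : r2 x y := rel_of_filter_pair hL2p h2
    have hch : ([x, y] ++ [x, y] : List V).Chain' (· ≠ ·) := by
      simp [List.Chain', List.isChain_cons_cons, hxy, hxy.symm]
    simp only [hch, true_iff]
    refine ⟨hxy, Or.inl ⟨hlt, ?_⟩⟩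
    rcases hr with ⟨_, _, hba⟩ | ⟨_, hb, _⟩ | ⟨_, hb⟩
    · exact absurd hlt (not_lt.2 hba.le)
    · exact hb
    · exact hb
  · -- [x,y] ++ [y,x] : not alternate; e x < e y and r2 y x
    have hlt : e x < e y := rel_of_filter_pair (r := fun a b => e a < e b) hL1p h1
    have hr : r2 y x := rel_of_filter_pair hL2p h2
    have hch : ¬ ([x, y] ++ [y, x] : List V).Chain' (· ≠ ·) := by
      simp [List.Chain', List.isChain_cons_cons]
    simp only [hch, false_iff]
    rintro ⟨-, ⟨-, hfy⟩ | ⟨hyx, -⟩⟩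
    · rcases hr with ⟨hA, -, -⟩ | ⟨-, -, hB⟩ | ⟨hA, -⟩
      · rw [hfy] at hA; exact Bool.true_eq_false ▸ (by simp at hA)
      · exact absurd hlt (not_lt.2 hB.le)
      · rw [hfy] at hA; exact Bool.true_eq_false ▸ (by simp at hA)
    · exact absurd hlt (not_lt.2 hyx.le)
  · -- [y,x] ++ [x,y] : not alternate; e y < e x and r2 x y
    have hlt : e y < e x := rel_of_filter_pair (r := fun a b => e a < e b) hL1p h1
    have hr : r2 x y := rel_of_filter_pair hL2p h2
    have hch : ¬ ([y, x] ++ [x, y] : List V).Chain' (· ≠ ·) := by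
      simp [List.Chain', List.isChain_cons_cons]
    simp only [hch, false_iff]
    rintro ⟨-, ⟨hxy2, -⟩ | ⟨-, hfx⟩⟩
    · exact absurd hxy2 (not_lt.2 hlt.le)
    · rcases hr with ⟨hA, -, -⟩ | ⟨-, -, hB⟩ | ⟨hA, -⟩
      · rw [hfx] at hA; exact Bool.true_eq_false ▸ (by simp at hA)
      · exact absurd hB (not_lt.2 hlt.le)
      · rw [hfx] at hA; exact Bool.true_eq_false ▸ (by simp at hA)
  · -- [y,x] ++ [y,x] : alternate; e y < e x and r2 y x
    have hlt : e y < e x := rel_of_filter_pair (r := fun a b => e a < e b) hL1p h1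
    have hr : r2 y x := rel_of_filter_pair hL2p h2
    have hch : ([y, x] ++ [y, x] : List V).Chain' (· ≠ ·) := by
      simp [List.Chain', List.isChain_cons_cons, hxy, hxy.symm]
    simp only [hch, true_iff]
    refine ⟨hxy, Or.inr ⟨hlt, ?_⟩⟩
    rcases hr with ⟨-, -, hB⟩ | ⟨-, hb, -⟩ | ⟨-, hb⟩
    · exact absurd hB (not_lt.2 hlt.le)
    · exact hb
    · exact hb
end

section
/- Let S be a split graph whose vertex set is partitioned into a maximal clique C of size m and an independent set I, and suppose every vertex of C has degree at most m in S (i.e., each vertex of C is adjacent to at most one vertex of I). Then S is word-representable. -/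
private lemma filter_eq_nil' {α : Type*} {q : α → Bool} {l : List α}
    (h : ∀ a ∈ l, q a = false) : l.filter q = [] :=
  List.filter_eq_nil_iff.mpr (fun a ha => by simp [h a ha])

private lemma filter_eq_singleton' {α : Type*} {q : α → Bool} {c : α} :
    ∀ {l : List α}, l.Nodup → c ∈ l → q c = true →
      (∀ z ∈ l, q z = true → z = c) → l.filter q = [c]
  | [], _, h, _, _ => absurd h (by simp)
  | a :: l, hn, hc, hq, hall => by
    rcases List.mem_cons.mp hc with rfl | hc'
    · rw [List.filter_cons_of_pos hq]
      have hnil : l.filter q = [] := filter_eq_nil' (fun z hz => by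
        by_contra hzq
        have hzc : z = c := hall z (List.mem_cons_of_mem _ hz)
          (by revert hzq; cases q z <;> simp)
        exact (List.nodup_cons.mp hn).1 (hzc ▸ hz))
      rw [hnil]
    · have ha : q a = false := by
        by_contra hqa
        have hac : a = c := hall a List.mem_cons_self
          (by revert hqa; cases q a <;> simp)
        exact (List.nodup_cons.mp hn).1 (hac ▸ hc')
      rw [List.filter_cons_of_neg (by simp [ha])]
      exact filter_eq_singleton' (List.nodup_cons.mp hn).2 hc' hq
        (fun z hz => hall z (List.mem_cons_of_mem _ hz))

private lemma flatMap_filter_nil' {α β : Type*} {q : β → Bool} {f : α → List β} :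
    ∀ {l : List α}, (∀ a ∈ l, (f a).filter q = []) → (l.flatMap f).filter q = []
  | [], _ => rfl
  | a :: l, h => by
    rw [List.flatMap_cons, List.filter_append, h a (by simp),
      flatMap_filter_nil' (fun b hb => h b (by simp [hb]))]
    rfl

private lemma flatMap_filter_single' {α β : Type*} {q : β → Bool} {f : α → List β} {i : α} :
    ∀ {l : List α}, l.Nodup → i ∈ l → (∀ a ∈ l, a ≠ i → (f a).filter q = []) →
      (l.flatMap f).filter q = (f i).filter q
  | [], _, h, _ => absurd h (by simp)
  | a :: l, hn, hi, h => by
    rw [List.flatMap_cons, List.filter_append]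
    rcases List.mem_cons.mp hi with rfl | hi'
    · rw [flatMap_filter_nil' (fun b hb => h b (by simp [hb])
        (fun hbi => (List.nodup_cons.mp hn).1 (hbi ▸ hb))), List.append_nil]
    · rw [h a (by simp) (fun hai => (List.nodup_cons.mp hn).1 (hai ▸ hi')),
        flatMap_filter_single' (List.nodup_cons.mp hn).2 hi'
          (fun b hb => h b (by simp [hb])), List.nil_append]

private lemma flatMap_congr' {α β : Type*} {f g : α → List β} :
    ∀ {l : List α}, (∀ a ∈ l, f a = g a) → l.flatMap f = l.flatMap g
  | [], _ => rfl
  | a :: l, h => by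
    rw [List.flatMap_cons, List.flatMap_cons, h a (by simp),
      flatMap_congr' (fun b hb => h b (by simp [hb]))]

private lemma nodup_two' {α : Type*} {x y : α} {l : List α} (hn : l.Nodup)
    (hx : x ∈ l) (hy : y ∈ l) (hxy : x ≠ y) (hall : ∀ z ∈ l, z = x ∨ z = y) :
    l = [x, y] ∨ l = [y, x] := by
  rcases l with _ | ⟨a, _ | ⟨b, t⟩⟩
  · simp at hx
  · simp only [List.mem_singleton] at hx hy
    exact absurd (hx.trans hy.symm) hxy
  · have ht : t = [] := by
      rcases t with _ | ⟨c, t⟩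
      · rfl
      · exfalso
        rcases hall a (by simp) with rfl | rfl <;>
          rcases hall b (by simp) with hb | hb <;>
          rcases hall c (by simp) with hc | hc <;>
          simp_all
    subst ht
    rcases hall a (by simp) with rfl | rfl <;> rcases hall b (by simp) with hb | hb <;>
      simp_all

private lemma chain'_abab {α : Type*} {x y : α} (h : x ≠ y) :
    List.Chain' (· ≠ ·) [x, y, x, y] := by
  simp [List.Chain', List.isChain_cons_cons, h, h.symm]

private lemma chain_filter_congr {α : Type*} {q q' : α → Bool} (w : List α)
    (h : ∀ v ∈ w, q v = q' v) :
    (w.filter q).Chain' (· ≠ ·) ↔ (w.filter q').Chain' (· ≠ ·) := by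
  rw [List.filter_congr h]

private theorem aux_represents {V : Type*} (G : SimpleGraph V) (iL R : List V) (A : V → List V)
    (hiN : iL.Nodup)
    (hA : ∀ i ∈ iL, (A i).Nodup)
    (hAA : ∀ i ∈ iL, ∀ j ∈ iL, i ≠ j → ∀ c ∈ A i, c ∉ A j)
    (hAR : ∀ i ∈ iL, ∀ c ∈ A i, c ∉ R)
    (hR : R.Nodup)
    (hIA : ∀ i ∈ iL, ∀ j ∈ iL, i ∉ A j)
    (hIR : ∀ i ∈ iL, i ∉ R)
    (cover : ∀ v, v ∈ iL ∨ v ∈ iL.flatMap A ∨ v ∈ R)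
    (adj : ∀ x y : V, x ≠ y → (G.Adj x y ↔
      ((x ∈ iL.flatMap A ∨ x ∈ R) ∧ (y ∈ iL.flatMap A ∨ y ∈ R)) ∨
      (x ∈ iL ∧ y ∈ A x) ∨ (y ∈ iL ∧ x ∈ A y))) :
    WordRepresentable G := by
  set f : V → List V := fun i => i :: (A i ++ [i]) with hf
  set w : List V := iL.flatMap f ++ R ++ iL.flatMap A ++ R with hw
  -- nodup of the clique list
  have hACnd : (iL.flatMap A ++ R).Nodup := by
    refine List.Nodup.append ?_ hR ?_
    · exact List.nodup_flatMap.mpr ⟨hA, hiN.imp_of_mem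
        (fun {a b} ha hb hab => fun c hca hcb => hAA a ha b hb hab c hca hcb)⟩
    · intro a haA haR
      rcases List.mem_flatMap.mp haA with ⟨j, hj, haj⟩
      exact hAR j hj a haj haR
  -- symmetry of Alternate
  have hsymm : ∀ x y : V, Alternate w x y ↔ Alternate w y x := by
    intro x y
    unfold Alternate
    exact chain_filter_congr w (fun v _ => decide_eq_decide.mpr or_comm)
  -- positive case: both in the clique part
  have posCC : ∀ (q : V → Bool) (x y : V), x ≠ y → q x = true → q y = true →
      (∀ v, v ≠ x → v ≠ y → q v = false) →
      (x ∈ iL.flatMap A ∨ x ∈ R) → (y ∈ iL.flatMap A ∨ y ∈ R) →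
      (w.filter q).Chain' (· ≠ ·) := by
    intro q x y hxy hqx hqy hqo hx hy
    have hnotC : ∀ i ∈ iL, ¬ (i ∈ iL.flatMap A ∨ i ∈ R) := by
      rintro i hi (h | h)
      · rcases List.mem_flatMap.mp h with ⟨j, hj, hij⟩
        exact hIA i hi j hj hij
      · exact hIR i hi h
    have hqiL : ∀ i ∈ iL, q i = false := fun i hi => hqo i
      (fun h => hnotC i hi (by rw [h]; exact hx)) (fun h => hnotC i hi (by rw [h]; exact hy))
    have hblock : ∀ i ∈ iL, (f i).filter q = (A i).filter q := by
      intro i hi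
      simp [hf, List.filter_cons, List.filter_append, hqiL i hi]
    have e1 : w.filter q = ((iL.flatMap A ++ R).filter q) ++ ((iL.flatMap A ++ R).filter q) := by
      rw [hw]
      simp only [List.filter_append, List.filter_flatMap]
      rw [flatMap_congr' hblock]
      simp [List.append_assoc]
    have hxF : x ∈ (iL.flatMap A ++ R).filter q :=
      List.mem_filter.mpr ⟨List.mem_append.mpr hx, hqx⟩
    have hyF : y ∈ (iL.flatMap A ++ R).filter q :=
      List.mem_filter.mpr ⟨List.mem_append.mpr hy, hqy⟩
    have hFall : ∀ z ∈ (iL.flatMap A ++ R).filter q, z = x ∨ z = y := by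
      intro z hz
      by_contra h
      push_neg at h
      have := (List.mem_filter.mp hz).2
      rw [hqo z h.1 h.2] at this
      simp at this
    rcases nodup_two' (hACnd.filter _) hxF hyF hxy hFall with hF | hF
    · rw [e1, hF]; exact chain'_abab hxy
    · rw [e1, hF]; exact chain'_abab hxy.symm
  -- positive case: i in iL, y a neighbor of i
  have posIC : ∀ (q : V → Bool) (x y : V), x ∈ iL → y ∈ A x →
      q x = true → q y = true → (∀ v, v ≠ x → v ≠ y → q v = false) →
      (w.filter q).Chain' (· ≠ ·) := by
    intro q x y hx hy hqx hqy hqo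
    have hxy : x ≠ y := fun h => hIA x hx x hx (h ▸ hy)
    have hAother : ∀ j ∈ iL, j ≠ x → (A j).filter q = [] := by
      intro j hj hjx
      refine filter_eq_nil' (fun z hz => hqo z ?_ ?_)
      · exact fun h => hIA x hx j hj (h ▸ hz)
      · exact fun h => hAA x hx j hj (fun h' => hjx h'.symm) y hy (h ▸ hz)
    have hAx : (A x).filter q = [y] := by
      refine filter_eq_singleton' (hA x hx) hy hqy (fun z hz hqz => ?_)
      by_contra hzy
      have hzx : z ≠ x := fun h => hIA x hx x hx (h ▸ hz)
      rw [hqo z hzx hzy] at hqz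
      simp at hqz
    have hblocks : (iL.flatMap f).filter q = [x, y, x] := by
      rw [flatMap_filter_single' hiN hx (fun a ha hax => ?_)]
      · simp [hf, List.filter_cons, List.filter_append, hqx, hAx]
      · have hqa : q a = false := hqo a hax (fun h => hIA a ha x hx (h ▸ hy))
        simp [hf, List.filter_cons, List.filter_append, hqa, hAother a ha hax]
    have hfmA : (iL.flatMap A).filter q = [y] := by
      rw [flatMap_filter_single' hiN hx hAother]
      exact hAx
    have hRf : R.filter q = [] := filter_eq_nil' (fun z hz => hqo z
      (fun h => hIR x hx (h ▸ hz)) (fun h => hAR x hx y hy (h ▸ hz)))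
    have e1 : w.filter q = [x, y, x, y] := by
      rw [hw]
      simp only [List.filter_append, hblocks, hRf, hfmA, List.append_nil]
      rfl
    rw [e1]
    exact chain'_abab hxy
  -- negative case: x in iL, y not a neighbor of x
  have negI : ∀ (q : V → Bool) (x y : V), x ∈ iL → x ≠ y → y ∉ A x →
      q x = true → (∀ v, v ≠ x → v ≠ y → q v = false) →
      ¬ (w.filter q).Chain' (· ≠ ·) := by
    intro q x y hx hxy hyA hqx hqo hchain
    have hAx : (A x).filter q = [] := filter_eq_nil' (fun z hz => hqo z
      (fun h => hIA x hx x hx (h ▸ hz)) (fun h => hyA (h ▸ hz)))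
    have hblockx : (f x).filter q = [x, x] := by
      simp [hf, List.filter_cons, List.filter_append, hqx, hAx]
    have hinf : [x, x] <:+: w.filter q := by
      rw [← hblockx]
      refine List.IsInfix.filter q ?_
      have h1 : f x <:+: iL.flatMap f := by
        obtain ⟨s, t, hst⟩ := List.append_of_mem hx
        rw [hst, List.flatMap_append, List.flatMap_cons]
        exact ⟨s.flatMap f, t.flatMap f, List.append_assoc _ _ _⟩
      have h2 : iL.flatMap f <+: w := by
        rw [hw, List.append_assoc, List.append_assoc]
        exact List.prefix_append _ _
      exact h1.trans h2.isInfix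
    have := hchain.infix hinf
    rw [List.isChain_pair] at this
    exact this rfl
  -- assemble
  refine ⟨w, fun v => ?_, fun x y hxy => ?_⟩
  · have hvf : v ∈ iL → v ∈ iL.flatMap f := fun hv =>
      List.mem_flatMap.mpr ⟨v, hv, by simp [hf]⟩
    rw [hw]
    rcases cover v with hv | hv | hv
    · exact List.mem_append_left _ (List.mem_append_left _ (List.mem_append_left _ (hvf hv)))
    · exact List.mem_append_left _ (List.mem_append_right _ hv)
    · exact List.mem_append_right _ hv
  · rw [adj x y hxy]
    by_cases hx : x ∈ iL
    · by_cases hy : y ∈ A x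
      · refine iff_of_true ?_ (Or.inr (Or.inl ⟨hx, hy⟩))
        unfold Alternate
        refine posIC _ x y hx hy ?_ ?_ ?_
        · simp
        · simp
        · exact fun v h1 h2 => by simp only [decide_eq_false_iff_not]; rintro (rfl | rfl); exacts [h1 rfl, h2 rfl]
      · refine iff_of_false ?_ ?_
        · unfold Alternate
          refine negI _ x y hx hxy hy ?_ ?_
          · simp
          · exact fun v h1 h2 => by simp only [decide_eq_false_iff_not]; rintro (rfl | rfl); exacts [h1 rfl, h2 rfl]
        · rintro (⟨hx', _⟩ | ⟨_, hy'⟩ | ⟨hyI, hx'⟩)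
          · rcases hx' with hx' | hx'
            · rcases List.mem_flatMap.mp hx' with ⟨j, hj, hxj⟩
              exact hIA x hx j hj hxj
            · exact hIR x hx hx'
          · exact hy hy'
          · exact hIA x hx y hyI hx'
    · by_cases hy : y ∈ iL
      · rw [hsymm x y]
        by_cases hxA : x ∈ A y
        · refine iff_of_true ?_ (Or.inr (Or.inr ⟨hy, hxA⟩))
          unfold Alternate
          refine posIC _ y x hy hxA ?_ ?_ ?_
          · simp
          · simp
          · exact fun v h1 h2 => by simp only [decide_eq_false_iff_not]; rintro (rfl | rfl); exacts [h1 rfl, h2 rfl]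
        · refine iff_of_false ?_ ?_
          · unfold Alternate
            refine negI _ y x hy (Ne.symm hxy) hxA ?_ ?_
            · simp
            · exact fun v h1 h2 => by simp only [decide_eq_false_iff_not]; rintro (rfl | rfl); exacts [h1 rfl, h2 rfl]
          · rintro (⟨_, hy'⟩ | ⟨hx', _⟩ | ⟨_, hx'⟩)
            · rcases hy' with h | h
              · rcases List.mem_flatMap.mp h with ⟨j, hj, hyj⟩
                exact hIA y hy j hj hyj
              · exact hIR y hy h
            · exact hx hx'
            · exact hxA hx'
      · have hx' := (cover x).resolve_left hx
        have hy' := (cover y).resolve_left hy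
        refine iff_of_true ?_ (Or.inl ⟨hx', hy'⟩)
        unfold Alternate
        refine posCC _ x y hxy ?_ ?_ ?_ hx' hy'
        · simp
        · simp
        · exact fun v h1 h2 => by simp only [decide_eq_false_iff_not]; rintro (rfl | rfl); exacts [h1 rfl, h2 rfl]

/-- Let `S` be a split graph whose vertex set is partitioned into a maximal clique `C` of
size `m` and an independent set `I`, and suppose every vertex of `C` has degree at most
`m` in `S`.  Then `S` is word-representable. -/
theorem split_clique_small_degree_wordRepresentable {V : Type*} [Fintype V]
    (G : SimpleGraph V) (C I : Set V)
    (hUnion : C ∪ I = Set.univ) (hdisj : Disjoint C I)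
    (hClique : G.IsClique C)
    (hMax : ∀ C' : Set V, G.IsClique C' → C ⊆ C' → C' = C)
    (hIndep : ∀ u ∈ I, ∀ v ∈ I, ¬ G.Adj u v)
    (hdeg : ∀ v ∈ C, (G.neighborSet v).ncard ≤ C.ncard) :
    WordRepresentable G := by
  classical
  have hmem : ∀ v : V, v ∈ C ∨ v ∈ I := fun v => by
    have h : v ∈ C ∪ I := hUnion ▸ Set.mem_univ v
    exact h
  have hNC : ∀ i ∈ I, ∀ v, G.Adj i v → v ∈ C := by
    intro i hi v hadj
    rcases hmem v with h | h
    · exact h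
    · exact absurd hadj (hIndep i hi v h)
  have hIC : ∀ i ∈ I, i ∉ C := fun i hi hci => Set.disjoint_right.mp hdisj hi hci
  -- disjointness of neighborhoods of distinct independent vertices
  have hdisjN : ∀ i ∈ I, ∀ j ∈ I, i ≠ j → ∀ c, G.Adj i c → ¬ G.Adj j c := by
    intro i hi j hj hij c hci hcj
    have hcC : c ∈ C := hNC i hi c hci
    have hiC : i ∉ C := hIC i hi
    have hjC : j ∉ C := hIC j hj
    have hsub : (C \ {c}) ∪ {i, j} ⊆ G.neighborSet c := by
      rintro z (⟨hzC, hzc⟩ | hz)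
      · exact hClique hcC hzC (fun h => hzc (by simp [h.symm]))
      · rcases hz with rfl | rfl
        · exact hci.symm
        · exact hcj.symm
    have h1 : ((C \ {c}) ∪ {i, j}).ncard ≤ (G.neighborSet c).ncard :=
      Set.ncard_le_ncard hsub (Set.toFinite _)
    have h2 : ((C \ {c}) ∪ {i, j}).ncard = (C \ {c}).ncard + 2 := by
      rw [Set.ncard_union_eq ?_ (Set.toFinite _) (Set.toFinite _), Set.ncard_pair hij]
      rw [Set.disjoint_left]
      rintro z ⟨hzC, _⟩ hz
      rcases hz with rfl | rfl
      · exact hiC hzC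
      · exact hjC hzC
    have h3 : (C \ {c}).ncard = C.ncard - 1 :=
      Set.ncard_diff_singleton_of_mem hcC
    have h4 : 0 < C.ncard := (Set.ncard_pos (Set.toFinite _)).mpr ⟨c, hcC⟩
    have h5 := hdeg c hcC
    omega
  -- the data
  set A : V → List V := fun i => (G.neighborSet i).toFinite.toFinset.toList with hAdef
  set iL : List V := I.toFinite.toFinset.toList with hiLdef
  set R : List V := (C \ ⋃ i ∈ I, G.neighborSet i).toFinite.toFinset.toList with hRdef
  have miL : ∀ v, v ∈ iL ↔ v ∈ I := fun v => by
    simp [hiLdef, Set.Finite.mem_toFinset]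
  have mA : ∀ i v, v ∈ A i ↔ G.Adj i v := fun i v => by
    simp [hAdef, Set.Finite.mem_toFinset]
  have mR : ∀ v, v ∈ R ↔ v ∈ C ∧ ∀ i ∈ I, ¬ G.Adj i v := fun v => by
    rw [hRdef, Finset.mem_toList, Set.Finite.mem_toFinset, Set.mem_diff]
    simp [Set.mem_iUnion]
  have hCL : ∀ v, (v ∈ iL.flatMap A ∨ v ∈ R) ↔ v ∈ C := by
    intro v
    constructor
    · rintro (h | h)
      · rcases List.mem_flatMap.mp h with ⟨j, hj, hvj⟩
        exact hNC j ((miL j).mp hj) v ((mA j v).mp hvj)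
      · exact ((mR v).mp h).1
    · intro hvC
      by_cases h : ∀ i ∈ I, ¬ G.Adj i v
      · exact Or.inr ((mR v).mpr ⟨hvC, h⟩)
      · push_neg at h
        obtain ⟨i, hi, hadj⟩ := h
        exact Or.inl (List.mem_flatMap.mpr ⟨i, (miL i).mpr hi, (mA i v).mpr hadj⟩)
  refine aux_represents G iL R A (Finset.nodup_toList _) (fun i _ => Finset.nodup_toList _)
    ?_ ?_ (Finset.nodup_toList _) ?_ ?_ ?_ ?_
  · intro i hi j hj hij c hci hcj
    exact hdisjN i ((miL i).mp hi) j ((miL j).mp hj) hij c ((mA i c).mp hci) ((mA j c).mp hcj)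
  · intro i hi c hc hcR
    exact ((mR c).mp hcR).2 i ((miL i).mp hi) ((mA i c).mp hc)
  · intro i hi j hj hiA
    exact hIndep j ((miL j).mp hj) i ((miL i).mp hi) ((mA j i).mp hiA)
  · intro i hi hiR
    exact hIC i ((miL i).mp hi) ((mR i).mp hiR).1
  · intro v
    rcases hmem v with hv | hv
    · rcases (hCL v).mpr hv with h | h
      · exact Or.inr (Or.inl h)
      · exact Or.inr (Or.inr h)
    · exact Or.inl ((miL v).mpr hv)
  · intro x y hxy
    constructor
    · intro hadj
      rcases hmem x with hxC | hxI
      · rcases hmem y with hyC | hyI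
        · exact Or.inl ⟨(hCL x).mpr hxC, (hCL y).mpr hyC⟩
        · exact Or.inr (Or.inr ⟨(miL y).mpr hyI, (mA y x).mpr hadj.symm⟩)
      · exact Or.inr (Or.inl ⟨(miL x).mpr hxI, (mA x y).mpr hadj⟩)
    · rintro (⟨hx, hy⟩ | ⟨_, hy⟩ | ⟨_, hx⟩)
      · exact hClique ((hCL x).mp hx) ((hCL y).mp hy) hxy
      · exact (mA x y).mp hy
      · exact ((mA y x).mp hx).symm
end

section
/- Let S be a split graph whose vertex set is partitioned into a maximal clique C of size m and an independent set I, where the neighbourhoods of the vertices of I are pairwise distinct. If there exist a vertex v in C and a natural number d with d \u2264 m\u22122 such that v is adjacent to at least d+1 vertices of I each having degree exactly d in S, then S is not word-representable. -/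
set_option linter.unusedSectionVars false
set_option linter.unusedVariables false
set_option linter.unnecessarySeqFocus false

namespace SplitWR
variable {V : Type*} [DecidableEq V]

/-- count of letter `a` among first `t` letters of `w` -/
def cnt (w : List V) (a : V) (t : ℕ) : ℕ :=
  (w.take t).countP (fun z => decide (z = a))

lemma cnt_zero (w : List V) (a : V) : cnt w a 0 = 0 := rfl

lemma cnt_add (w : List V) (a : V) {s t : ℕ} (h : s ≤ t) :
    cnt w a t = cnt w a s + ((w.drop s).take (t - s)).countP (fun z => decide (z = a)) := by
  have : w.take t = w.take s ++ (w.drop s).take (t - s) := by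
    rw [← List.take_add]; congr 1; omega
  rw [cnt, this, List.countP_append]; rfl

lemma cnt_mono (w : List V) (a : V) {s t : ℕ} (h : s ≤ t) : cnt w a s ≤ cnt w a t := by
  rw [cnt_add w a h]; omega

lemma cnt_succ (w : List V) (a : V) (t : ℕ) :
    cnt w a (t + 1) = cnt w a t + (Option.toList w[t]?).countP (fun z => decide (z = a)) := by
  rw [cnt, List.take_succ, List.countP_append]; rfl

lemma cnt_succ_le (w : List V) (a : V) (t : ℕ) : cnt w a (t + 1) ≤ cnt w a t + 1 := by
  rw [cnt_succ]
  have : (Option.toList w[t]?).countP (fun z => decide (z = a)) ≤ (Option.toList w[t]?).length :=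
    List.countP_le_length
  cases h : w[t]? <;> simp [h] at this ⊢ <;> omega

lemma cnt_step_eq (w : List V) (a : V) (t : ℕ)
    (h : cnt w a t + 1 ≤ cnt w a (t + 1)) : w[t]? = some a := by
  rw [cnt_succ] at h
  cases ho : w[t]? with
  | none => rw [ho] at h; simp at h
  | some b =>
    rw [ho] at h
    by_cases hb : b = a
    · rw [hb]
    · exfalso; simp [hb] at h

lemma cnt_step_ne (w : List V) (a b : V) (t : ℕ) (hab : b ≠ a)
    (h : w[t]? = some a) : cnt w b (t + 1) = cnt w b t := by
  rw [cnt_succ, h]; simp only [Option.toList_some, List.countP_singleton, decide_eq_true_eq]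
  rw [if_neg (fun h => hab h.symm)]
  omega

lemma cnt_le_total (w : List V) (a : V) (t : ℕ) : cnt w a t ≤ cnt w a w.length := by
  by_cases h : t ≤ w.length
  · exact cnt_mono w a h
  · rw [cnt, List.take_of_length_le (by omega), cnt, List.take_length]

lemma cnt_total_eq (w : List V) (a : V) {t : ℕ} (h : w.length ≤ t) :
    cnt w a t = cnt w a w.length := by
  rw [cnt, List.take_of_length_le h, cnt, List.take_length]

/-- an alternating word over letters {x,y} has `#x ≤ #y + (head = x)` -/
private lemma alt_count {x y : V} :
    ∀ (l : List V), l.Chain' (· ≠ ·) → (∀ z ∈ l, z = x ∨ z = y) →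
      l.countP (fun z => decide (z = x)) ≤
        l.countP (fun z => decide (z = y)) + (if l.head? = some x then 1 else 0)
  | [], _, _ => by simp
  | a :: l, hc, hm => by
      have hcl : l.Chain' (· ≠ ·) := hc.tail
      have hml : ∀ z ∈ l, z = x ∨ z = y := fun z hz => hm z (List.mem_cons_of_mem _ hz)
      have IH := alt_count l hcl hml
      rcases hm a List.mem_cons_self with ha | ha
      · -- a = x : head of l is not x
        subst ha
        have hhead : ¬ (l.head? = some a) := by
          cases l with
          | nil => simp
          | cons b l' =>
            have : a ≠ b := List.isChain_cons_cons.mp hc |>.1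
            simp [this.symm]
        rw [List.countP_cons, List.countP_cons]
        simp only [List.head?_cons, if_pos rfl, decide_eq_true_eq, if_pos (rfl : a = a)]
        rw [if_neg hhead] at IH
        by_cases hxy : a = y
        · rw [if_pos hxy]; omega
        · rw [if_neg hxy]; omega
      · -- a = y
        subst ha
        by_cases hxy : x = a
        · subst hxy
          simp only [List.countP_cons, List.head?_cons]
          simp only [decide_eq_true_eq, if_pos rfl]
          omega
        · have h1 : ¬ ((a :: l).head? = some x) := by
            simp only [List.head?_cons, Option.some.injEq]
            exact fun h => hxy h.symm
          rw [List.countP_cons, List.countP_cons, if_neg h1]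
          have e1 : (decide (a = x)) = false := by
            simp only [decide_eq_false_iff_not]
            exact fun h => hxy h.symm
          have e2 : (decide (a = a)) = true := by simp
          rw [e1, e2]
          simp only [Bool.false_eq_true, if_false, if_true]
          split at IH <;> omega


def Win (w : List V) (x y : V) : Prop :=
  ∀ s t : ℕ, s ≤ t → cnt w x t + cnt w y s ≤ cnt w y t + cnt w x s + 1

lemma alternate_def (w : List V) (x y : V) :
    Alternate w x y ↔ (w.filter (fun z => decide (z = x ∨ z = y))).Chain' (· ≠ ·) := by
  unfold Alternate
  exact Iff.of_eq (congrArg (List.Chain' (· ≠ ·))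
    (List.filter_congr (fun a _ => decide_eq_decide.mpr Iff.rfl)))

lemma alternate_symm {w : List V} {x y : V} (h : Alternate w x y) : Alternate w y x := by
  rw [alternate_def] at h ⊢
  rw [List.filter_congr (l := w) (q := fun z => decide (z = x ∨ z = y))
    (fun a _ => decide_eq_decide.mpr or_comm)]
  · exact h

private lemma chain'_break {R : V → V → Prop} :
    ∀ (l : List V), ¬ l.Chain' R → ∃ l₁ a b l₂, l = l₁ ++ a :: b :: l₂ ∧ ¬ R a b
  | [], h => absurd List.isChain_nil h
  | [a], h => absurd (List.isChain_singleton a) h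
  | a :: b :: t, h => by
      by_cases hab : R a b
      · have : ¬ (b :: t).Chain' R := fun hc => h (List.isChain_cons_cons.mpr ⟨hab, hc⟩)
        obtain ⟨l₁, c, d, l₂, heq, hR⟩ := chain'_break (b :: t) this
        exact ⟨a :: l₁, c, d, l₂, by simp [heq], hR⟩
      · exact ⟨[], a, b, t, rfl, hab⟩

private lemma filter_cons_split {P : V → Bool} :
    ∀ (l : List V) (L₁ L₂ : List V) (z : V), l.filter P = L₁ ++ z :: L₂ →
      ∃ m₁ m₂, l = m₁ ++ z :: m₂ ∧ m₁.filter P = L₁ ∧ m₂.filter P = L₂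
  | [], L₁, L₂, z, h => by simp at h
  | a :: t, L₁, L₂, z, h => by
      by_cases hPa : P a
      · rw [List.filter_cons_of_pos hPa] at h
        cases L₁ with
        | nil =>
          simp only [List.nil_append] at h ⊢
          have hz : a = z := (List.cons_eq_cons.mp h).1
          exact ⟨[], t, by rw [hz, List.nil_append], rfl, by rw [(List.cons_eq_cons.mp h).2]⟩
        | cons a' L₁' =>
          have h1 : a = a' ∧ t.filter P = L₁' ++ z :: L₂ := by
            rw [List.cons_append] at h; exact List.cons_eq_cons.mp h
          obtain ⟨m₁, m₂, he, hf1, hf2⟩ := filter_cons_split t L₁' L₂ z h1.2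
          exact ⟨a :: m₁, m₂, by rw [he, List.cons_append], by
            rw [List.filter_cons_of_pos hPa, hf1, h1.1], hf2⟩
      · rw [List.filter_cons_of_neg hPa] at h
        obtain ⟨m₁, m₂, he, hf1, hf2⟩ := filter_cons_split t L₁ L₂ z h
        exact ⟨a :: m₁, m₂, by rw [he, List.cons_append], by
          rw [List.filter_cons_of_neg hPa, hf1], hf2⟩

lemma cnt_clip (w : List V) (a : V) (t : ℕ) :
    cnt w a (min t w.length) = cnt w a t := by
  rcases le_total t w.length with h | h
  · rw [min_eq_left h]
  · rw [min_eq_right h, cnt_total_eq w a h]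

theorem alternate_iff {w : List V} {x y : V} (hxy : x ≠ y) :
    Alternate w x y ↔ (Win w x y ∧ Win w y x) := by
  rw [alternate_def]
  set P : V → Bool := fun z => decide (z = x ∨ z = y) with hP
  constructor
  · intro hch
    have main : ∀ (x' y' : V), (∀ z:V, P z = true ↔ (z = x' ∨ z = y')) → Win w x' y' := by
      intro x' y' hPmem
      have key : ∀ s t : ℕ, s ≤ t → t ≤ w.length →
          cnt w x' t + cnt w y' s ≤ cnt w y' t + cnt w x' s + 1 := by
        intro s t hst ht
        have hw : w = w.take s ++ ((w.drop s).take (t - s) ++ w.drop t) := by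
          rw [← List.append_assoc]
          have h1 : w.take s ++ (w.drop s).take (t-s) = w.take t := by
            rw [← List.take_add]; congr 1; omega
          rw [h1, List.take_append_drop]
        set M := (w.drop s).take (t - s) with hM
        have hfil : w.filter P = (w.take s).filter P ++ (M.filter P ++ (w.drop t).filter P) := by
          conv_lhs => rw [hw]
          rw [List.filter_append, List.filter_append]
        rw [hfil] at hch
        have hchM : (M.filter P).Chain' (· ≠ ·) :=
          ((List.isChain_append.mp ((List.isChain_append.mp hch).2.1)).1)
        have hmem : ∀ z ∈ M.filter P, z = x' ∨ z = y' := by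
          intro z hz
          exact (hPmem z).mp (List.of_mem_filter hz)
        have hcount := alt_count (x := x') (y := y') (M.filter P) hchM hmem
        have hcx : cnt w x' t = cnt w x' s + (M.filter P).countP (fun z => decide (z = x')) := by
          rw [cnt_add w x' hst]
          congr 1
          rw [List.countP_filter, List.countP_congr]
          intro a _
          simp only [Bool.and_eq_true, decide_eq_true_eq]
          constructor
          · intro h; exact ⟨h, by simp [(hPmem a).mpr (Or.inl h)]⟩
          · intro h; exact h.1
        have hcy : cnt w y' t = cnt w y' s + (M.filter P).countP (fun z => decide (z = y')) := by
          rw [cnt_add w y' hst]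
          congr 1
          rw [List.countP_filter, List.countP_congr]
          intro a _
          simp only [Bool.and_eq_true, decide_eq_true_eq]
          constructor
          · intro h; exact ⟨h, by simp [(hPmem a).mpr (Or.inr h)]⟩
          · intro h; exact h.1
        have hd : (if (M.filter P).head? = some x' then 1 else 0) ≤ 1 := by split <;> omega
        rw [hcx, hcy]
        omega
      intro s t hst
      have h1 := key (min s w.length) (min t w.length)
        (by omega) (by omega)
      rw [cnt_clip, cnt_clip, cnt_clip, cnt_clip] at h1
      exact h1
    constructor
    · exact main x y (fun z => by simp [hP])
    · exact main y x (fun z => by simp [hP, or_comm])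
  · rintro ⟨h1, h2⟩
    by_contra hch
    obtain ⟨l₁, a, b, l₂, heq, hR⟩ := chain'_break _ hch
    have hab : a = b := not_not.mp hR
    subst hab
    -- w = m₁ ++ a :: (u₁ ++ a :: u₂) with filter u₁ = []
    obtain ⟨m₁, m₂, he1, hf1, hf2⟩ := filter_cons_split w l₁ (a :: l₂) a heq
    obtain ⟨u₁, u₂, he2, hg1, hg2⟩ := filter_cons_split m₂ [] l₂ a hf2
    subst he2
    have hPa : P a = true := by
      have : a ∈ w.filter P := by rw [heq]; exact List.mem_append_right _ List.mem_cons_self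
      exact List.of_mem_filter this
    have haxy : a = x ∨ a = y := by
      have := hPa
      rw [hP] at this
      simpa using this
    -- counts in window
    set s0 := m₁.length with hs0
    set t0 := m₁.length + 1 + u₁.length + 1 with ht0
    have hpre : w.take s0 = m₁ := by
      rw [he1, List.take_left]
    have hpre2 : w.take t0 = m₁ ++ a :: u₁ ++ [a] := by
      have : w = (m₁ ++ a :: u₁ ++ [a]) ++ u₂ := by
        rw [he1]; simp
      rw [this]
      have hl : (m₁ ++ a :: u₁ ++ [a]).length = t0 := by simp; omega
      rw [← hl, List.take_left]
    have hu₁ : ∀ q : V, P q = true → u₁.countP (fun z => decide (z = q)) = 0 := by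
      intro q hq
      rw [List.countP_eq_zero]
      intro b hb hbq
      have hbq' : b = q := by simpa using hbq
      subst hbq'
      have : b ∈ u₁.filter P := List.mem_filter.mpr ⟨hb, hq⟩
      rw [hg1] at this
      simp at this
    have hca : cnt w a t0 = cnt w a s0 + 2 := by
      rw [cnt, cnt, hpre, hpre2]
      rw [List.append_assoc, List.countP_append]
      have : ((a :: u₁) ++ [a]).countP (fun z => decide (z = a)) = 2 := by
        rw [List.countP_append, List.countP_cons]
        simp [hu₁ a hPa]
      omega
    have hco : ∀ o : V, o ≠ a → P o = true → cnt w o t0 = cnt w o s0 := by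
      intro o ho hPo
      rw [cnt, cnt, hpre, hpre2]
      rw [List.append_assoc, List.countP_append]
      have : ((a :: u₁) ++ [a]).countP (fun z => decide (z = o)) = 0 := by
        rw [List.countP_append, List.countP_cons]
        have h0 : (decide (a = o)) = false := by
          simp only [decide_eq_false_iff_not]
          exact fun h => ho h.symm
        simp [hu₁ o hPo, h0]
      omega
    have hst : s0 ≤ t0 := by omega
    rcases haxy with ha | ha
    · subst ha
      have hPy : P y = true := by rw [hP]; simp
      have := h1 s0 t0 hst
      rw [hca, hco y (fun h => hxy h.symm) hPy] at this
      omega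
    · subst ha
      have hPx : P x = true := by rw [hP]; simp
      have := h2 s0 t0 hst
      rw [hca, hco x hxy hPx] at this
      omega



section Theta
variable (w : List V) (v : V)

/-- position-counter: least `t` with `j` occurrences of `v` among first `t` letters -/
noncomputable def th (j : ℕ) : ℕ := sInf {t | j ≤ cnt w v t}

variable {w v}

lemma th_mem {j : ℕ} (hj : j ≤ cnt w v w.length) : j ≤ cnt w v (th w v j) :=
  Nat.sInf_mem (⟨w.length, hj⟩ : {t | j ≤ cnt w v t}.Nonempty)

lemma th_le {j t : ℕ} (h : j ≤ cnt w v t) : th w v j ≤ t := Nat.sInf_le h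

lemma lt_th {j t : ℕ} (h : t < th w v j) : cnt w v t + 1 ≤ j := by
  by_contra hc
  have h2 : j ≤ cnt w v t := by omega
  exact absurd (th_le h2) (by omega)

lemma th_pos {j : ℕ} (hj : 1 ≤ j) (hjc : j ≤ cnt w v w.length) : 1 ≤ th w v j := by
  by_contra h
  have h1 := th_mem hjc
  have h0 : th w v j = 0 := by omega
  rw [h0, cnt_zero] at h1
  omega

lemma cnt_th {j : ℕ} (hj1 : 1 ≤ j) (hj : j ≤ cnt w v w.length) :
    cnt w v (th w v j) = j := by
  have h1 := th_mem hj
  have hpos : 1 ≤ th w v j := by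
    by_contra h
    have : th w v j = 0 := by omega
    rw [this, cnt_zero] at h1; omega
  have h2 : cnt w v (th w v j - 1) + 1 ≤ j := lt_th (by omega)
  have h3 : cnt w v (th w v j) ≤ cnt w v (th w v j - 1) + 1 := by
    have := cnt_succ_le w v (th w v j - 1)
    have he : th w v j - 1 + 1 = th w v j := by omega
    rw [he] at this; exact this
  omega

lemma letter_at_th {j : ℕ} (hj1 : 1 ≤ j) (hj : j ≤ cnt w v w.length) :
    w[th w v j - 1]? = some v := by
  have hpos : 1 ≤ th w v j := by
    by_contra h
    have h1 := th_mem hj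
    have : th w v j = 0 := by omega
    rw [this, cnt_zero] at h1; omega
  have h2 : cnt w v (th w v j - 1) + 1 ≤ j := lt_th (by omega)
  have h1 := th_mem hj
  apply cnt_step_eq
  have he : th w v j - 1 + 1 = th w v j := by omega
  rw [he]; omega

lemma cnt_at_th_pred {z : V} (hzv : z ≠ v) {j : ℕ} (hj1 : 1 ≤ j)
    (hj : j ≤ cnt w v w.length) :
    cnt w z (th w v j) = cnt w z (th w v j - 1) := by
  have hpos : 1 ≤ th w v j := by
    by_contra h
    have h1 := th_mem hj
    have : th w v j = 0 := by omega
    rw [this, cnt_zero] at h1; omega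
  have := cnt_step_ne w v z (th w v j - 1) hzv (letter_at_th hj1 hj)
  have he : th w v j - 1 + 1 = th w v j := by omega
  rw [he] at this; exact this

end Theta

section Letter
variable {w : List V} {v z : V}

/-- the "head count" of letter z : number of its occurrences before the first v -/
noncomputable def hd (w : List V) (v z : V) : ℕ := cnt w z (th w v 1)

lemma hd_le_one (hzv : z ≠ v) (hc : 1 ≤ cnt w v w.length) (hzw : Win w z v) :
    hd w v z ≤ 1 := by
  have he := cnt_at_th_pred hzv (le_refl 1) hc
  have h0 : cnt w v (th w v 1 - 1) = 0 := by
    have hp := th_pos (w := w) (v := v) (j := 1) (le_refl 1) hc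
    have := lt_th (w := w) (v := v) (j := 1) (t := th w v 1 - 1) (by omega)
    omega
  have hwin := hzw 0 (th w v 1 - 1) (Nat.zero_le _)
  rw [cnt_zero, cnt_zero, h0] at hwin
  rw [hd, he]; omega

lemma cnt_th_formula (hzv : z ≠ v) (hzw : Win w z v) (hwz : Win w v z) :
    ∀ j, 1 ≤ j → j ≤ cnt w v w.length → cnt w z (th w v j) = j - 1 + hd w v z := by
  intro j
  induction j with
  | zero => omega
  | succ j IH =>
    intro _ hjc
    rcases Nat.eq_zero_or_pos j with hj0 | hj0
    · subst hj0; simp [hd]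
    · have IH' := IH hj0 (by omega)
      have hmono : th w v j < th w v (j+1) := by
        have h1 : th w v j ≤ th w v (j+1) := by
          apply th_le
          have := th_mem (w := w) (v := v) (j := j+1) hjc
          omega
        rcases Nat.lt_or_ge (th w v j) (th w v (j+1)) with h | h
        · exact h
        · exfalso
          have he : th w v j = th w v (j+1) := by omega
          have e1 := cnt_th hj0 (by omega : j ≤ cnt w v w.length)
          have e2 := cnt_th (by omega : 1 ≤ j + 1) hjc
          rw [he] at e1; omega
      -- upper bound
      have hub : cnt w z (th w v (j+1)) ≤ cnt w z (th w v j) + 1 := by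
        have he := cnt_at_th_pred hzv (by omega : 1 ≤ j+1) hjc
        have hwin := hzw (th w v j) (th w v (j+1) - 1) (by omega)
        have e1 := cnt_th hj0 (by omega : j ≤ cnt w v w.length)
        have e2 : cnt w v (th w v (j+1) - 1) + 1 ≤ j + 1 := lt_th (by omega)
        have e3 : cnt w v (th w v (j+1) - 1) ≥ cnt w v (th w v j) := cnt_mono w v (by omega)
        -- hwz window : cnt v b + cnt z a ≤ cnt z b + cnt v a + 1 : we need z-direction:
        have hwin2 := hwz (th w v j) (th w v (j+1) - 1) (by omega)
        omega
      -- lower bound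
      have hlb : cnt w z (th w v j) + 1 ≤ cnt w z (th w v (j+1)) := by
        have hpos : 1 ≤ th w v j := th_pos hj0 (by omega)
        have he := cnt_at_th_pred hzv hj0 (by omega : j ≤ cnt w v w.length)
        have e0 : cnt w v (th w v j - 1) + 1 ≤ j := lt_th (by omega)
        have e2 := cnt_th (by omega : 1 ≤ j+1) hjc
        have hwin := hwz (th w v j - 1) (th w v (j+1)) (by omega)
        omega
      omega

lemma pin_upper (hzv : z ≠ v) (hzw : Win w z v) (hwz : Win w v z) {t : ℕ}
    (ht : cnt w v t + 1 ≤ cnt w v w.length) :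
    cnt w z t ≤ cnt w v t + hd w v z := by
  set j := cnt w v t with hj
  have hlt : t < th w v (j+1) := by
    by_contra h
    have := cnt_mono w v (le_of_not_gt h)
    have h2 := cnt_th (w := w) (v := v) (by omega : 1 ≤ j+1) (by omega)
    omega
  have h1 : cnt w z t ≤ cnt w z (th w v (j+1) - 1) := cnt_mono w z (by omega)
  have h2 := cnt_at_th_pred (w := w) (v := v) hzv (by omega : 1 ≤ j+1) (by omega)
  have h3 := cnt_th_formula hzv hzw hwz (j+1) (by omega) (by omega)
  omega

lemma pin_lower (hzv : z ≠ v) (hzw : Win w z v) (hwz : Win w v z) {t : ℕ}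
    (ht : 1 ≤ cnt w v t) :
    cnt w v t + hd w v z ≤ cnt w z t + 1 := by
  set j := cnt w v t with hj
  have hjc : j ≤ cnt w v w.length := cnt_le_total w v t
  have h1 : th w v j ≤ t := th_le (le_refl _)
  have h2 := cnt_th_formula hzv hzw hwz j ht hjc
  have h3 : cnt w z (th w v j) ≤ cnt w z t := cnt_mono w z h1
  omega

lemma total_le (hzv : z ≠ v) (hzw : Win w z v) (hc : 1 ≤ cnt w v w.length)
    (hwz : Win w v z) {t : ℕ} :
    cnt w z t ≤ cnt w v w.length + hd w v z := by
  set c := cnt w v w.length with hcdef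
  have h1 : th w v c ≤ t ∨ t < th w v c := le_or_gt _ _
  rcases h1 with h1 | h1
  · have hwin := hzw (th w v c) t h1
    have e1 := cnt_th (w := w) (v := v) hc (le_refl c)
    have e2 : cnt w v t ≤ c := cnt_le_total w v t
    have e3 := cnt_th_formula hzv hzw hwz c hc (le_refl c)
    omega
  · have h2 : cnt w z t ≤ cnt w z (th w v c) := cnt_mono w z (by omega)
    have e3 := cnt_th_formula hzv hzw hwz c hc (le_refl c)
    omega

end Letter

section RB
variable {w : List V} {v : V}

/-- bundled hypotheses: letter z alternates with v (in window form) -/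
structure Lt (w : List V) (v z : V) : Prop where
  ne : z ≠ v
  wzv : Win w z v
  wvz : Win w v z

lemma Lt.hd_le (h : Lt w v z) (hc : 1 ≤ cnt w v w.length) : hd w v z ≤ 1 :=
  hd_le_one h.ne hc h.wzv

lemma Lt.pin_up (h : Lt w v z) {t : ℕ} (ht : cnt w v t + 1 ≤ cnt w v w.length) :
    cnt w z t ≤ cnt w v t + hd w v z := pin_upper h.ne h.wzv h.wvz ht

lemma Lt.pin_lo (h : Lt w v z) {t : ℕ} (ht : 1 ≤ cnt w v t) :
    cnt w v t + hd w v z ≤ cnt w z t + 1 := pin_lower h.ne h.wzv h.wvz ht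

lemma Lt.tot (h : Lt w v z) (hc : 1 ≤ cnt w v w.length) {t : ℕ} :
    cnt w z t ≤ cnt w v w.length + hd w v z := total_le h.ne h.wzv hc h.wvz

lemma Lt.formula (h : Lt w v z) {j : ℕ} (h1 : 1 ≤ j) (h2 : j ≤ cnt w v w.length) :
    cnt w z (th w v j) = j - 1 + hd w v z := cnt_th_formula h.ne h.wzv h.wvz j h1 h2

/-- `y` occurs before `z` in some (interior) `v`-region -/
def RB (w : List V) (v y z : V) : Prop := ∃ t,
  1 ≤ cnt w v t ∧ cnt w v t + 1 ≤ cnt w v w.length ∧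
  cnt w y t = cnt w v t + hd w v y ∧ cnt w z t + 1 = cnt w v t + hd w v z

/-- first time letter z completes its occurrence in region 1 -/
noncomputable def ft (w : List V) (v z : V) : ℕ := sInf {t | 1 + hd w v z ≤ cnt w z t}

lemma ft_spec (hz : Lt w v z) (hc2 : 2 ≤ cnt w v w.length) :
    cnt w z (ft w v z) = 1 + hd w v z ∧ cnt w v (ft w v z) = 1 ∧
    w[ft w v z - 1]? = some z ∧ 1 ≤ ft w v z ∧
    (∀ t < ft w v z, cnt w z t ≤ hd w v z) := by
  have hne : (2:ℕ) ≤ cnt w v w.length := hc2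
  have hth2 : cnt w z (th w v 2) = 1 + hd w v z := hz.formula (by omega) hne
  have hnonempty : (th w v 2) ∈ {t | 1 + hd w v z ≤ cnt w z t} := by
    simp only [Set.mem_setOf_eq, hth2]; omega
  have hmem : 1 + hd w v z ≤ cnt w z (ft w v z) := Nat.sInf_mem ⟨_, hnonempty⟩
  have hmin : ∀ t < ft w v z, cnt w z t ≤ hd w v z := by
    intro t ht
    by_contra hcon
    have hmemt : t ∈ {t | 1 + hd w v z ≤ cnt w z t} := by
      simp only [Set.mem_setOf_eq]; omega
    have hle2 : ft w v z ≤ t := Nat.sInf_le hmemt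
    omega
  have hpos : 1 ≤ ft w v z := by
    by_contra h
    have h0 : ft w v z = 0 := by omega
    rw [h0, cnt_zero] at hmem; omega
  have hstep : cnt w z (ft w v z) ≤ cnt w z (ft w v z - 1) + 1 := by
    have := cnt_succ_le w z (ft w v z - 1)
    have he : ft w v z - 1 + 1 = ft w v z := by omega
    rw [he] at this; exact this
  have hprev := hmin (ft w v z - 1) (by omega)
  have heq : cnt w z (ft w v z) = 1 + hd w v z := by omega
  have hletter : w[ft w v z - 1]? = some z := by
    apply cnt_step_eq
    have he : ft w v z - 1 + 1 = ft w v z := by omega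
    rw [he]; omega
  have hle : ft w v z ≤ th w v 2 := Nat.sInf_le hnonempty
  have hltth2 : ft w v z < th w v 2 := by
    rcases lt_or_eq_of_le hle with h | h
    · exact h
    · exfalso
      have hv := letter_at_th (w := w) (v := v) (by omega : (1:ℕ) ≤ 2) hne
      rw [← h] at hv
      rw [hv] at hletter
      exact hz.ne (Option.some.inj hletter).symm
  have hcvle : cnt w v (ft w v z) + 1 ≤ 2 := lt_th hltth2
  have hgt : th w v 1 < ft w v z := by
    have h1 : cnt w z (th w v 1) = hd w v z := rfl
    by_contra h
    have := cnt_mono w z (le_of_not_gt h)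
    omega
  have hcvge : 1 ≤ cnt w v (ft w v z) := by
    have h1 := cnt_th (w := w) (v := v) (le_refl 1) (by omega)
    have := cnt_mono w v (le_of_lt hgt)
    omega
  exact ⟨heq, by omega, hletter, hpos, hmin⟩

/-- totality of the region-order for two letters (needs ≥ 2 occurrences of v) -/
lemma rb_total (hc2 : 2 ≤ cnt w v w.length) (hy : Lt w v y) (hz : Lt w v z)
    (hyz : y ≠ z) : RB w v y z ∨ RB w v z y := by
  obtain ⟨hy1, hy2, hy3, hy4, hy5⟩ := ft_spec hy hc2
  obtain ⟨hz1, hz2, hz3, hz4, hz5⟩ := ft_spec hz hc2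
  have hne : ft w v y ≠ ft w v z := by
    intro h
    rw [h, hz3] at hy3
    exact hyz (Option.some.inj hy3).symm
  rcases lt_or_gt_of_ne hne with h | h
  · -- y first
    left
    refine ⟨ft w v y, by omega, by omega, by omega, ?_⟩
    have h1 : cnt w z (ft w v y) ≤ hd w v z := hz5 _ h
    have h2 : cnt w v (ft w v y) + hd w v z ≤ cnt w z (ft w v y) + 1 :=
      hz.pin_lo (by omega)
    omega
  · right
    refine ⟨ft w v z, by omega, by omega, by omega, ?_⟩
    have h1 : cnt w y (ft w v z) ≤ hd w v y := hy5 _ h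
    have h2 : cnt w v (ft w v z) + hd w v y ≤ cnt w y (ft w v z) + 1 :=
      hy.pin_lo (by omega)
    omega

/-- the region-order is consistent: can't have both orders for alternating letters -/
lemma rb_not_both (hWyz : Win w y z) (hWzy : Win w z y)
    (h1 : RB w v y z) (h2 : RB w v z y) : False := by
  obtain ⟨s, hs1, hs2, hs3, hs4⟩ := h1
  obtain ⟨t, ht1, ht2, ht3, ht4⟩ := h2
  rcases le_total s t with h | h
  · have := hWzy s t h
    have hm := cnt_mono w v h
    omega
  · have := hWyz t s h
    have hm := cnt_mono w v h
    omega

/-- order consistency: if y is region-before z, then in EVERY interior region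
where z has occurred, y has occurred too. -/
lemma all_rb (hy : Lt w v y) (hz : Lt w v z) (hWyz : Win w y z) (hWzy : Win w z y)
    (hrb : RB w v y z) {t : ℕ} (h1 : 1 ≤ cnt w v t)
    (h2 : cnt w v t + 1 ≤ cnt w v w.length)
    (h3 : cnt w z t = cnt w v t + hd w v z) :
    cnt w y t = cnt w v t + hd w v y := by
  have hup := hy.pin_up h2
  have hlo := hy.pin_lo h1
  rcases Nat.lt_or_ge (cnt w y t) (cnt w v t + hd w v y) with hc | hc
  · exfalso
    exact rb_not_both hWzy hWyz ⟨t, h1, h2, h3, by omega⟩ hrb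
  · omega

/-- if y is region-before z then hd y ≤ hd z is impossible to violate -/
lemma hd_chain {y z : V} (hyz : y ≠ z) (hc2 : 2 ≤ cnt w v w.length)
    (hy : Lt w v y) (hz : Lt w v z)
    (hWyz : Win w y z) (hWzy : Win w z y) (hrb : RB w v y z) :
    hd w v y ≤ hd w v z := by
  by_contra hcon
  have hhy : hd w v y = 1 := by
    have := hy.hd_le (by omega); omega
  have hhz : hd w v z = 0 := by omega
  obtain ⟨hy1, hy2, hy3, hy4, hy5⟩ := ft_spec hy hc2
  set f := ft w v y with hf
  -- at time f - 1 : y not done in region 1, v count is 1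
  have hcvf1 : cnt w v (f - 1) = 1 := by
    have hgt : th w v 1 < f := by
      have h1 : cnt w z (th w v 1) = hd w v z := rfl
      by_contra h
      have h2 : cnt w y (th w v 1) = hd w v y := rfl
      have := cnt_mono w y (le_of_not_gt h)
      omega
    have hg2 : th w v 1 ≤ f - 1 := by omega
    have hmo := cnt_mono w v hg2
    have hmo2 : cnt w v (f-1) ≤ cnt w v f := cnt_mono w v (by omega)
    have h1 := cnt_th (w := w) (v := v) (le_refl 1) (by omega)
    omega
  have hcyf1 : cnt w y (f - 1) = 1 := by
    have := hy5 (f-1) (by omega)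
    have h2 := hy.pin_lo (t := f - 1) (by omega)
    omega
  -- z's status at time f - 1
  rcases Nat.lt_or_ge (cnt w z (f-1)) 1 with hzc | hzc
  · -- z hasn't occurred at all before f; then window [0, f] violates Win y z
    have hz0 : cnt w z (f-1) = 0 := by omega
    have hzf : cnt w z f = 0 := by
      have hs := cnt_step_ne w y z (f - 1) (fun he => hyz he.symm) hy3
      have he : f - 1 + 1 = f := by omega
      rw [he] at hs; omega
    have hyf : cnt w y f = 2 := by rw [hy1, hhy]
    have hwin := hWyz 0 f (Nat.zero_le _)
    rw [cnt_zero, cnt_zero, hyf, hzf] at hwin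
    omega
  · -- z done in region 1 before y : RB z y, contradiction
    have hzup := hz.pin_up (t := f-1) (by omega)
    exact rb_not_both hWzy hWyz ⟨f - 1, by omega, by omega, by omega, by omega⟩ hrb


/-- B3 : if a is region-before b, hd a = 1, and b occurred before the first v,
then a occurred before the first v even earlier. -/
lemma r0_order {a b : V} (hc2 : 2 ≤ cnt w v w.length)
    (ha : Lt w v a) (hb : Lt w v b) (hWab : Win w a b) (hWba : Win w b a)
    (hrb : RB w v a b) (hha : hd w v a = 1) {t : ℕ}
    (ht0 : cnt w v t = 0) (htb : cnt w b t = 1) : cnt w a t = 1 := by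
  have hup := ha.pin_up (t := t) (by omega)
  rcases Nat.lt_or_ge (cnt w a t) 1 with hlt | hge
  · exfalso
    obtain ⟨s, hs1, hs2, hs3, hs4⟩ := hrb
    have hts : t < s := by
      by_contra h
      have := cnt_mono w v (le_of_not_gt h)
      omega
    have hwin := hWab t s (by omega)
    have hbl := hb.hd_le (by omega)
    omega
  · omega

/-- B4 : if a is region-before b and b is entirely finished at time t,
then a is entirely finished at time t. -/
lemma tail_order {a b : V} (hc2 : 2 ≤ cnt w v w.length)
    (ha : Lt w v a) (hb : Lt w v b) (hWab : Win w a b) (hWba : Win w b a)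
    (hrb : RB w v a b) {t : ℕ}
    (htb : cnt w b t = cnt w v w.length + hd w v b) :
    cnt w a t = cnt w v w.length + hd w v a := by
  obtain ⟨s, hs1, hs2, hs3, hs4⟩ := hrb
  have hst : s ≤ t := by
    by_contra h
    have := cnt_mono w b (le_of_lt (lt_of_not_ge h))
    omega
  have hwin := hWba s t hst
  have hatot := ha.tot (hc := by omega) (t := t)
  omega

/-- KEY : y region-before x, x region-before u, all alternating appropriately;
then y and u alternate (window form) with y region-before u. -/
lemma key (hc2 : 2 ≤ cnt w v w.length)
    {x y u : V} (hx : Lt w v x) (hy : Lt w v y) (hu : Lt w v u)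
    (hyx : y ≠ x) (hxu : x ≠ u)
    (hWxy : Win w x y) (hWyx : Win w y x) (hWux : Win w u x) (hWxu : Win w x u)
    (hrb1 : RB w v y x) (hrb2 : RB w v x u) :
    Win w y u ∧ Win w u y ∧ RB w v y u := by
  set c := cnt w v w.length with hc
  have hch1 : hd w v y ≤ hd w v x := hd_chain hyx hc2 hy hx hWyx hWxy hrb1
  have hch2 : hd w v x ≤ hd w v u := hd_chain hxu hc2 hx hu hWxu hWux hrb2
  have hdyle := hy.hd_le (by omega)
  have hdxle := hx.hd_le (by omega)
  have hdule := hu.hd_le (by omega)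
  have claimA : ∀ t, cnt w u t + hd w v y ≤ cnt w y t + hd w v u := by
    intro t
    by_contra hviol
    push_neg at hviol
    have hjc : cnt w v t ≤ c := cnt_le_total w v t
    rcases Nat.eq_zero_or_pos (cnt w v t) with hj0 | hj1
    · -- before the first v
      have hyup := hy.pin_up (t := t) (by omega)
      have huup := hu.pin_up (t := t) (by omega)
      have hdy1 : hd w v y = 1 := by omega
      have hdx1 : hd w v x = 1 := by omega
      have hcu1 : cnt w u t = 1 := by omega
      have hcy0 : cnt w y t = 0 := by omega
      have hx1 : cnt w x t = 1 := r0_order hc2 hx hu hWxu hWux hrb2 hdx1 hj0 hcu1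
      have hy1 : cnt w y t = 1 := r0_order hc2 hy hx hWyx hWxy hrb1 hdy1 hj0 hx1
      omega
    · rcases Nat.lt_or_ge (cnt w v t + 1) (c + 1) with hjin | hjend
      · -- interior region
        have hyup := hy.pin_up (t := t) (by omega)
        have hylo := hy.pin_lo (t := t) (by omega)
        have huup := hu.pin_up (t := t) (by omega)
        have hulo := hu.pin_lo (t := t) (by omega)
        have hudone : cnt w u t = cnt w v t + hd w v u := by omega
        have hynot : cnt w y t + 1 = cnt w v t + hd w v y := by omega
        have hxup := hx.pin_up (t := t) (by omega)
        have hxlo := hx.pin_lo (t := t) (by omega)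
        rcases Nat.lt_or_ge (cnt w x t) (cnt w v t + hd w v x) with hxnot | hxdone
        · exact rb_not_both hWxu hWux hrb2 ⟨t, by omega, by omega, hudone, by omega⟩
        · have := all_rb hy hx hWyx hWxy hrb1 (t := t) (by omega) (by omega) (by omega)
          omega
      · -- after the last v
        have hj : cnt w v t = c := by omega
        have hylo := hy.pin_lo (t := t) (by omega)
        have hutot := hu.tot (hc := by omega) (t := t)
        have hudone : cnt w u t = c + hd w v u := by omega
        have hynot : cnt w y t + 1 = c + hd w v y := by omega
        have hx4 : cnt w x t = c + hd w v x :=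
          tail_order hc2 hx hu hWxu hWux hrb2 (by omega)
        have hy4 : cnt w y t = c + hd w v y :=
          tail_order hc2 hy hx hWyx hWxy hrb1 (by omega)
        omega
  have claimB : ∀ t, cnt w y t + hd w v u ≤ cnt w u t + hd w v y + 1 := by
    intro t
    have hjc : cnt w v t ≤ c := cnt_le_total w v t
    rcases Nat.eq_zero_or_pos (cnt w v t) with hj0 | hj1
    · have hyup := hy.pin_up (t := t) (by omega)
      omega
    · rcases Nat.lt_or_ge (cnt w v t + 1) (c + 1) with hjin | hjend
      · have hyup := hy.pin_up (t := t) (by omega)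
        have hulo := hu.pin_lo (t := t) (by omega)
        omega
      · have hytot := hy.tot (hc := by omega) (t := t)
        have hulo := hu.pin_lo (t := t) (by omega)
        omega
  refine ⟨fun s t hst => by have h1 := claimA s; have h2 := claimB t; omega,
          fun s t hst => by have h1 := claimA t; have h2 := claimB s; omega, ?_⟩
  obtain ⟨s, h1, h2, h3, h4⟩ := hrb2
  exact ⟨s, h1, h2, all_rb hy hx hWyx hWxy hrb1 h1 h2 h3, h4⟩

/-- DUAL KEY : u region-before x, x region-before y. -/
lemma key_dual (hc2 : 2 ≤ cnt w v w.length)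
    {x y u : V} (hx : Lt w v x) (hy : Lt w v y) (hu : Lt w v u)
    (hux : u ≠ x) (hxy : x ≠ y)
    (hWxy : Win w x y) (hWyx : Win w y x) (hWux : Win w u x) (hWxu : Win w x u)
    (hrb1 : RB w v u x) (hrb2 : RB w v x y) :
    Win w y u ∧ Win w u y ∧ RB w v u y := by
  set c := cnt w v w.length with hc
  have hch1 : hd w v u ≤ hd w v x := hd_chain hux hc2 hu hx hWux hWxu hrb1
  have hch2 : hd w v x ≤ hd w v y := hd_chain hxy hc2 hx hy hWxy hWyx hrb2
  have hdyle := hy.hd_le (by omega)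
  have hdxle := hx.hd_le (by omega)
  have hdule := hu.hd_le (by omega)
  have claimA : ∀ t, cnt w y t + hd w v u ≤ cnt w u t + hd w v y := by
    intro t
    by_contra hviol
    push_neg at hviol
    have hjc : cnt w v t ≤ c := cnt_le_total w v t
    rcases Nat.eq_zero_or_pos (cnt w v t) with hj0 | hj1
    · have hyup := hy.pin_up (t := t) (by omega)
      have huup := hu.pin_up (t := t) (by omega)
      have hdy1 : hd w v y = 1 := by omega
      have hcy1 : cnt w y t = 1 := by omega
      have hdu1 : hd w v u = 1 := by omega
      have hdx1 : hd w v x = 1 := by omega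
      have hcu0 : cnt w u t = 0 := by omega
      have hx1 : cnt w x t = 1 := r0_order hc2 hx hy hWxy hWyx hrb2 hdx1 hj0 hcy1
      have hu1 : cnt w u t = 1 := r0_order hc2 hu hx hWux hWxu hrb1 hdu1 hj0 hx1
      omega
    · rcases Nat.lt_or_ge (cnt w v t + 1) (c + 1) with hjin | hjend
      · have hyup := hy.pin_up (t := t) (by omega)
        have hylo := hy.pin_lo (t := t) (by omega)
        have huup := hu.pin_up (t := t) (by omega)
        have hulo := hu.pin_lo (t := t) (by omega)
        have hydone : cnt w y t = cnt w v t + hd w v y := by omega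
        have hunot : cnt w u t + 1 = cnt w v t + hd w v u := by omega
        have hxup := hx.pin_up (t := t) (by omega)
        have hxlo := hx.pin_lo (t := t) (by omega)
        rcases Nat.lt_or_ge (cnt w x t) (cnt w v t + hd w v x) with hxnot | hxdone
        · exact rb_not_both hWyx hWxy ⟨t, by omega, by omega, hydone, by omega⟩ hrb2
        · exact rb_not_both hWxu hWux ⟨t, by omega, by omega, by omega, hunot⟩ hrb1
      · have hj : cnt w v t = c := by omega
        have hulo := hu.pin_lo (t := t) (by omega)
        have hytot := hy.tot (hc := by omega) (t := t)
        have hydone : cnt w y t = c + hd w v y := by omega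
        have hx4 : cnt w x t = c + hd w v x :=
          tail_order hc2 hx hy hWxy hWyx hrb2 (by omega)
        have hu4 : cnt w u t = c + hd w v u :=
          tail_order hc2 hu hx hWux hWxu hrb1 (by omega)
        omega
  have claimB : ∀ t, cnt w u t + hd w v y ≤ cnt w y t + hd w v u + 1 := by
    intro t
    have hjc : cnt w v t ≤ c := cnt_le_total w v t
    rcases Nat.eq_zero_or_pos (cnt w v t) with hj0 | hj1
    · have huup := hu.pin_up (t := t) (by omega)
      omega
    · rcases Nat.lt_or_ge (cnt w v t + 1) (c + 1) with hjin | hjend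
      · have huup := hu.pin_up (t := t) (by omega)
        have hylo := hy.pin_lo (t := t) (by omega)
        omega
      · have hutot := hu.tot (hc := by omega) (t := t)
        have hylo := hy.pin_lo (t := t) (by omega)
        omega
  refine ⟨fun s t hst => by have h1 := claimA t; have h2 := claimB s; omega,
          fun s t hst => by have h1 := claimA s; have h2 := claimB t; omega, ?_⟩
  obtain ⟨s, h1, h2, h3, h4⟩ := hrb1
  have hyup := hy.pin_up (t := s) (by omega)
  have hylo := hy.pin_lo (t := s) (by omega)
  rcases Nat.lt_or_ge (cnt w y s) (cnt w v s + hd w v y) with hynot | hydone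
  · exact ⟨s, h1, h2, h3, by omega⟩
  · exact absurd (rb_not_both hWyx hWxy ⟨s, h1, h2, by omega, by omega⟩ hrb2) id

end RB

/-- initial permutation : list of distinct letters in order of first occurrence -/
def ip : List V → List V
  | [] => []
  | a :: t => a :: (ip t).filter (fun z => decide (z ≠ a))

lemma mem_ip : ∀ (w : List V) (z : V), z ∈ ip w ↔ z ∈ w
  | [], z => by simp [ip]
  | a :: t, z => by
      simp only [ip, List.mem_cons, List.mem_filter, decide_eq_true_eq]
      by_cases hz : z = a
      · simp [hz]
      · simp only [hz, false_or]
        rw [mem_ip t z]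
        simp [hz]

lemma nodup_ip : ∀ (w : List V), (ip w).Nodup
  | [] => List.nodup_nil
  | a :: t => by
      simp only [ip, List.nodup_cons]
      constructor
      · intro hmem
        have := List.of_mem_filter hmem
        simp at this
      · exact (nodup_ip t).filter _

lemma ip_filter_comm (p : V → Bool) : ∀ (w : List V), (ip w).filter p = ip (w.filter p)
  | [] => rfl
  | a :: t => by
      by_cases hpa : p a
      · rw [show (a :: t).filter p = a :: t.filter p from List.filter_cons_of_pos hpa]
        simp only [ip]
        rw [List.filter_cons_of_pos hpa]
        congr 1
        rw [List.filter_comm, ip_filter_comm p t]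
      · rw [show (a :: t).filter p = t.filter p from List.filter_cons_of_neg hpa]
        simp only [ip]
        rw [List.filter_cons_of_neg hpa]
        rw [List.filter_comm, ip_filter_comm p t]
        apply List.filter_eq_self.mpr
        intro z hz
        have hz2 : z ∈ t.filter p := (mem_ip _ _).mp hz
        have hpz : p z := List.of_mem_filter hz2
        simp only [decide_eq_true_eq]
        intro he
        rw [he] at hpz
        exact hpa hpz

private lemma eq_single {b : V} : ∀ (l : List V), l.Nodup → (∀ z ∈ l, z = b) → b ∈ l → l = [b]
  | [], _, _, hb => absurd hb List.not_mem_nil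
  | c :: t, hnd, hall, _ => by
      have hc : c = b := hall c List.mem_cons_self
      subst hc
      have ht : t = [] := by
        cases t with
        | nil => rfl
        | cons d t' =>
          exfalso
          have hd : d = c := hall d (by simp)
          have := (List.nodup_cons.mp hnd).1
          rw [hd] at this
          simp at this
      rw [ht]

lemma ip_pair {w : List V} {x y : V} (hxy : x ≠ y) (hx : x ∈ w) (hy : y ∈ w) :
    ∃ a b : V, ((a = x ∧ b = y) ∨ (a = y ∧ b = x)) ∧
      (ip w).filter (fun z => decide (z = x ∨ z = y)) = [a, b] ∧
      ∃ f', w.filter (fun z => decide (z = x ∨ z = y)) = a :: f' := by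
  set P : V → Bool := fun z => decide (z = x ∨ z = y) with hP
  have hxf : x ∈ w.filter P := List.mem_filter.mpr ⟨hx, by simp [hP]⟩
  have hyf : y ∈ w.filter P := List.mem_filter.mpr ⟨hy, by simp [hP]⟩
  cases hf : w.filter P with
  | nil => rw [hf] at hxf; simp at hxf
  | cons a f' =>
    have haP : P a = true := List.of_mem_filter (hf ▸ (List.mem_cons_self (a := a) (l := f')))
    have haxy : a = x ∨ a = y := by simpa [hP] using haP
    set b := if a = x then y else x with hb
    have hab : ((a = x ∧ b = y) ∨ (a = y ∧ b = x)) := by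
      rcases haxy with h | h
      · left; exact ⟨h, by rw [hb, if_pos h]⟩
      · right
        refine ⟨h, ?_⟩
        rw [hb, if_neg]
        rw [h]; exact fun hc => hxy hc.symm
    have hbne : b ≠ a := by
      rcases hab with ⟨h1, h2⟩ | ⟨h1, h2⟩
      · rw [h1, h2]; exact fun hc => hxy hc.symm
      · rw [h1, h2]; exact hxy
    have hbf : b ∈ w.filter P := by
      rcases hab with ⟨_, h2⟩ | ⟨_, h2⟩
      · rw [h2]; exact hyf
      · rw [h2]; exact hxf
    refine ⟨a, b, hab, ?_, f', rfl⟩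
    rw [ip_filter_comm, hf]
    show ip (a :: f') = [a, b]
    simp only [ip]
    congr 1
    apply eq_single
    · exact (nodup_ip f').filter _
    · intro z hz
      have hz1 : z ∈ ip f' := List.mem_of_mem_filter hz
      have hzne : z ≠ a := by
        have := List.of_mem_filter hz; simpa using this
      have hz2 : z ∈ f' := (mem_ip _ _).mp hz1
      have hz3 : z ∈ w.filter P := by rw [hf]; exact List.mem_cons_of_mem _ hz2
      have hzP : z = x ∨ z = y := by simpa [hP] using List.of_mem_filter hz3
      rcases hab with ⟨h1, h2⟩ | ⟨h1, h2⟩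
      · rcases hzP with hz4 | hz4
        · exact absurd (hz4.trans h1.symm) hzne
        · rw [hz4, h2]
      · rcases hzP with hz4 | hz4
        · rw [hz4, h2]
        · exact absurd (hz4.trans h1.symm) hzne
    · have hbf' : b ∈ f' := by
        rw [hf] at hbf
        rcases List.mem_cons.mp hbf with h | h
        · exact absurd h hbne
        · exact h
      exact List.mem_filter.mpr ⟨(mem_ip _ _).mpr hbf', by simpa using hbne⟩

theorem represents_prepend {G : SimpleGraph V} {w : List V} (hw : Represents G w) :
    Represents G (ip w ++ w) := by
  constructor
  · intro z; exact List.mem_append_right _ (hw.1 z)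
  · intro x y hxy
    rw [← hw.2 x y hxy]
    rw [alternate_def, alternate_def]
    obtain ⟨a, b, hab, hip, f', hf⟩ := ip_pair hxy (hw.1 x) (hw.1 y)
    rw [List.filter_append, hip, hf]
    have hane : a ≠ b := by
      rcases hab with ⟨h1, h2⟩ | ⟨h1, h2⟩
      · rw [h1, h2]; exact hxy
      · rw [h1, h2]; exact fun hc => hxy hc.symm
    show ([a, b] ++ a :: f').Chain' (· ≠ ·) ↔ (a :: f').Chain' (· ≠ ·)
    have : ([a, b] ++ a :: f') = a :: b :: a :: f' := rfl
    rw [this]; unfold List.Chain'; rw [List.isChain_cons_cons, List.isChain_cons_cons]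
    constructor
    · intro h; exact h.2.2
    · intro h; exact ⟨hane, fun hc => hane hc.symm, h⟩


end SplitWR

open SplitWR in
/-- Let `S` be a split graph whose vertex set is partitioned into a maximal clique `C` of
size `m` and an independent set `I`, where the neighbourhoods of the vertices of `I` are
pairwise distinct.  If some vertex `v ∈ C` is adjacent to at least `d + 1` vertices of
`I` each of degree exactly `d`, where `d ≤ m - 2`, then `S` is not word-representable. -/
theorem split_many_equal_degree_not_wordRepresentable {V : Type*} [Fintype V]
    (G : SimpleGraph V) (C I : Set V)
    (hUnion : C ∪ I = Set.univ) (hdisj : Disjoint C I)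
    (hClique : G.IsClique C)
    (hMax : ∀ C' : Set V, G.IsClique C' → C ⊆ C' → C' = C)
    (hIndep : ∀ u ∈ I, ∀ v ∈ I, ¬ G.Adj u v)
    (hdist : ∀ u ∈ I, ∀ u' ∈ I, G.neighborSet u = G.neighborSet u' → u = u')
    (v : V) (hv : v ∈ C) (d : ℕ) (hd : d ≤ C.ncard - 2)
    (D : Set V) (hDI : D ⊆ I) (hDcard : d + 1 ≤ D.ncard)
    (hDadj : ∀ u ∈ D, G.Adj v u)
    (hDdeg : ∀ u ∈ D, (G.neighborSet u).ncard = d) :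
    ¬ WordRepresentable G := by
  classical
  rintro ⟨w₀, hw₀⟩
  set w : List V := ip w₀ ++ w₀ with hwdef
  have hw : Represents G w := represents_prepend hw₀
  -- v occurs at least twice
  have hc2 : 2 ≤ cnt w v w.length := by
    have h1 : cnt w v w.length = w.countP (fun z => decide (z = v)) := by
      rw [cnt, List.take_length]
    rw [h1, hwdef, List.countP_append]
    have h2 : 0 < (ip w₀).countP (fun z => decide (z = v)) :=
      List.countP_pos_iff.mpr ⟨v, (mem_ip w₀ v).mpr (hw₀.1 v), by simp⟩
    have h3 : 0 < w₀.countP (fun z => decide (z = v)) :=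
      List.countP_pos_iff.mpr ⟨v, hw₀.1 v, by simp⟩
    omega
  -- basic facts about D
  have hDC : ∀ u ∈ D, u ∈ I ∧ u ≠ v := by
    intro u hu
    refine ⟨hDI hu, ?_⟩
    intro he
    exact Set.disjoint_left.mp hdisj hv (he ▸ hDI hu)
  have hLt_of_adj : ∀ z : V, z ≠ v → G.Adj z v → Lt w v z := by
    intro z hz hadj
    have := (hw.2 z v hz).mpr hadj
    obtain ⟨h1, h2⟩ := (alternate_iff hz).mp this
    exact ⟨hz, h1, h2⟩
  have hWpair : ∀ p q : V, p ≠ q → G.Adj p q → Win w p q ∧ Win w q p := by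
    intro p q hpq hadj
    exact (alternate_iff hpq).mp ((hw.2 p q hpq).mpr hadj)
  -- neighbors of vertices of D lie in C
  have hNC : ∀ u ∈ D, ∀ x : V, G.Adj u x → x ∈ C := by
    intro u hu x hadj
    by_contra hxC
    have hxI : x ∈ I := by
      have := hUnion ▸ Set.mem_univ x
      rcases (Set.mem_union x C I).mp (by rw [hUnion]; exact Set.mem_univ x) with h | h
      · exact absurd h hxC
      · exact h
    exact hIndep u (hDI hu) x hxI hadj
  have hLtu : ∀ u ∈ D, Lt w v u := by
    intro u hu
    exact hLt_of_adj u (hDC u hu).2 (hDadj u hu).symm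
  have hLtx : ∀ x ∈ C, x ≠ v → Lt w v x := by
    intro x hx hxv
    exact hLt_of_adj x hxv (hClique hx hv hxv)
  -- the B and A sets
  set Bs : V → Finset V := fun u => Finset.univ.filter (fun x => G.Adj u x ∧ x ≠ v ∧ RB w v x u)
    with hBs
  set As : V → Finset V := fun u => Finset.univ.filter (fun x => G.Adj u x ∧ x ≠ v ∧ RB w v u x)
    with hAs
  have hxmem : ∀ u ∈ D, ∀ x : V, G.Adj u x → x ≠ u ∧ (x ≠ v → x ∈ C ∧ Lt w v x) := by
    intro u hu x hadj
    refine ⟨fun he => G.irrefl (he ▸ hadj), fun hxv => ?_⟩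
    have hxC := hNC u hu x hadj
    exact ⟨hxC, hLtx x hxC hxv⟩
  -- partition of neighbors
  have hpart : ∀ u ∈ D, ∀ x : V, G.Adj u x → x ≠ v →
      (RB w v x u ∨ RB w v u x) ∧ ¬ (RB w v x u ∧ RB w v u x) := by
    intro u hu x hadj hxv
    obtain ⟨hxu, hxCL⟩ := hxmem u hu x hadj
    obtain ⟨hxC, hLx⟩ := hxCL hxv
    obtain ⟨hW1, hW2⟩ := hWpair u x (fun he => hxu he.symm) hadj
    refine ⟨rb_total hc2 hLx (hLtu u hu) hxu, fun ⟨h1, h2⟩ => rb_not_both hW2 hW1 h1 h2⟩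
  -- cardinality of neighbor partition
  have hdpos : 1 ≤ d := by
    obtain ⟨u, hu⟩ : D.Nonempty := by
      rcases Set.eq_empty_or_nonempty D with h | h
      · rw [h] at hDcard; simp [Set.ncard_empty] at hDcard
      · exact h
    have hvN : v ∈ G.neighborSet u := (hDadj u hu).symm
    have := hDdeg u hu
    rw [← this]
    rw [Set.ncard_eq_toFinset_card']
    exact Finset.card_pos.mpr ⟨v, Set.mem_toFinset.mpr hvN⟩
  have hcard : ∀ u ∈ D, (Bs u).card + (As u).card = d - 1 := by
    intro u hu
    have hdisjBA : Disjoint (Bs u) (As u) := by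
      rw [Finset.disjoint_left]
      intro x hxB hxA
      simp only [hBs, hAs, Finset.mem_filter] at hxB hxA
      exact (hpart u hu x hxB.2.1 hxB.2.2.1).2 ⟨hxB.2.2.2, hxA.2.2.2⟩
    have hunion : Bs u ∪ As u = ((G.neighborSet u).toFinset).erase v := by
      ext x
      simp only [hBs, hAs, Finset.mem_union, Finset.mem_filter, Finset.mem_univ, true_and,
        Finset.mem_erase, Set.mem_toFinset, SimpleGraph.mem_neighborSet]
      constructor
      · rintro (⟨h1, h2, h3⟩ | ⟨h1, h2, h3⟩) <;> exact ⟨h2, h1⟩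
      · rintro ⟨h2, h1⟩
        rcases (hpart u hu x h1 h2).1 with h | h
        · exact Or.inl ⟨h1, h2, h⟩
        · exact Or.inr ⟨h1, h2, h⟩
    have hNcard : (G.neighborSet u).toFinset.card = d := by
      rw [← Set.ncard_eq_toFinset_card']; exact hDdeg u hu
    have hvN : v ∈ (G.neighborSet u).toFinset :=
      Set.mem_toFinset.mpr ((hDadj u hu).symm)
    have := Finset.card_union_of_disjoint hdisjBA
    rw [hunion, Finset.card_erase_of_mem hvN, hNcard] at this
    omega
  -- chain property for the B sets
  have hchainB : ∀ u ∈ D, ∀ u' ∈ D, Bs u ⊆ Bs u' ∨ Bs u' ⊆ Bs u := by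
    intro u hu u' hu'
    by_contra hcon
    push_neg at hcon
    obtain ⟨x, hxB, hxB'⟩ := Finset.not_subset.mp hcon.1
    obtain ⟨y, hyB', hyB⟩ := Finset.not_subset.mp hcon.2
    simp only [hBs, Finset.mem_filter, Finset.mem_univ, true_and] at hxB hxB' hyB' hyB
    obtain ⟨hax, hxv, hrbx⟩ := hxB
    obtain ⟨hay, hyv, hrby⟩ := hyB'
    have hxy : x ≠ y := by
      intro he
      exact hyB (he ▸ ⟨hax, hxv, hrbx⟩)
    obtain ⟨hxu, hxCL⟩ := hxmem u hu x hax
    obtain ⟨hxC, hLx⟩ := hxCL hxv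
    obtain ⟨hyu', hyCL⟩ := hxmem u' hu' y hay
    obtain ⟨hyC, hLy⟩ := hyCL hyv
    have hadjxy : G.Adj x y := hClique hxC hyC hxy
    obtain ⟨hWxy, hWyx⟩ := hWpair x y hxy hadjxy
    rcases rb_total hc2 hLy hLx (fun he => hxy he.symm) with hr | hr
    · -- RB y x , RB x u  ⇒ y ∈ Bs u
      obtain ⟨hWux, hWxu⟩ := hWpair u x (fun he => hxu he.symm) hax
      obtain ⟨hW1, hW2, hrbyu⟩ := key hc2 hLx hLy (hLtu u hu)
        (fun he => hxy he.symm) hxu hWxy hWyx hWux hWxu hr hrbx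
      have hyune : y ≠ u := by
        intro he
        have : u ∈ C := he ▸ hyC
        exact Set.disjoint_left.mp hdisj this (hDI hu)
      have hadjuy : G.Adj u y :=
        (hw.2 u y (fun he => hyune he.symm)).mp
          ((alternate_iff (fun he => hyune he.symm)).mpr ⟨hW2, hW1⟩)
      exact hyB ⟨hadjuy, hyv, hrbyu⟩
    · -- RB x y , RB y u' ⇒ x ∈ Bs u'
      obtain ⟨hWu'y, hWyu'⟩ := hWpair u' y (fun he => hyu' he.symm) hay
      obtain ⟨hW1, hW2, hrbxu'⟩ := key hc2 hLy hLx (hLtu u' hu')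
        hxy hyu' hWyx hWxy hWu'y hWyu' hr hrby
      have hxu'ne : x ≠ u' := by
        intro he
        have : u' ∈ C := he ▸ hxC
        exact Set.disjoint_left.mp hdisj this (hDI hu')
      have hadjux : G.Adj u' x :=
        (hw.2 u' x (fun he => hxu'ne he.symm)).mp
          ((alternate_iff (fun he => hxu'ne he.symm)).mpr ⟨hW2, hW1⟩)
      exact hxB' ⟨hadjux, hxv, hrbxu'⟩
  -- chain property for the A sets
  have hchainA : ∀ u ∈ D, ∀ u' ∈ D, As u ⊆ As u' ∨ As u' ⊆ As u := by
    intro u hu u' hu'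
    by_contra hcon
    push_neg at hcon
    obtain ⟨x, hxA, hxA'⟩ := Finset.not_subset.mp hcon.1
    obtain ⟨y, hyA', hyA⟩ := Finset.not_subset.mp hcon.2
    simp only [hAs, Finset.mem_filter, Finset.mem_univ, true_and] at hxA hxA' hyA' hyA
    obtain ⟨hax, hxv, hrbx⟩ := hxA
    obtain ⟨hay, hyv, hrby⟩ := hyA'
    have hxy : x ≠ y := by
      intro he
      exact hyA (he ▸ ⟨hax, hxv, hrbx⟩)
    obtain ⟨hxu, hxCL⟩ := hxmem u hu x hax
    obtain ⟨hxC, hLx⟩ := hxCL hxv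
    obtain ⟨hyu', hyCL⟩ := hxmem u' hu' y hay
    obtain ⟨hyC, hLy⟩ := hyCL hyv
    have hadjxy : G.Adj x y := hClique hxC hyC hxy
    obtain ⟨hWxy, hWyx⟩ := hWpair x y hxy hadjxy
    rcases rb_total hc2 hLx hLy hxy with hr | hr
    · -- RB u x, RB x y ⇒ y ∈ As u
      obtain ⟨hWux, hWxu⟩ := hWpair u x (fun he => hxu he.symm) hax
      obtain ⟨hW1, hW2, hrbuy⟩ := key_dual hc2 hLx hLy (hLtu u hu)
        (fun he => hxu he.symm) hxy hWxy hWyx hWux hWxu hrbx hr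
      have hyune : y ≠ u := by
        intro he
        have : u ∈ C := he ▸ hyC
        exact Set.disjoint_left.mp hdisj this (hDI hu)
      have hadjuy : G.Adj u y :=
        (hw.2 u y (fun he => hyune he.symm)).mp
          ((alternate_iff (fun he => hyune he.symm)).mpr ⟨hW2, hW1⟩)
      exact hyA ⟨hadjuy, hyv, hrbuy⟩
    · -- RB u' y, RB y x ⇒ x ∈ As u'
      obtain ⟨hWu'y, hWyu'⟩ := hWpair u' y (fun he => hyu' he.symm) hay
      obtain ⟨hW1, hW2, hrbux⟩ := key_dual hc2 hLy hLx (hLtu u' hu')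
        (fun he => hyu' he.symm) (fun he => hxy he.symm) hWyx hWxy hWu'y hWyu' hrby hr
      have hxu'ne : x ≠ u' := by
        intro he
        have : u' ∈ C := he ▸ hxC
        exact Set.disjoint_left.mp hdisj this (hDI hu')
      have hadjux : G.Adj u' x :=
        (hw.2 u' x (fun he => hxu'ne he.symm)).mp
          ((alternate_iff (fun he => hxu'ne he.symm)).mpr ⟨hW2, hW1⟩)
      exact hxA' ⟨hadjux, hxv, hrbux⟩
  -- injectivity of u ↦ |Bs u| on D
  have hinj : ∀ u ∈ D, ∀ u' ∈ D, (Bs u).card = (Bs u').card → u = u' := by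
    intro u hu u' hu' hcardeq
    have hBeq : Bs u = Bs u' := by
      rcases hchainB u hu u' hu' with h | h
      · exact Finset.eq_of_subset_of_card_le h (le_of_eq hcardeq.symm)
      · exact (Finset.eq_of_subset_of_card_le h (le_of_eq hcardeq)).symm
    have hAcard : (As u).card = (As u').card := by
      have h1 := hcard u hu
      have h2 := hcard u' hu'
      omega
    have hAeq : As u = As u' := by
      rcases hchainA u hu u' hu' with h | h
      · exact Finset.eq_of_subset_of_card_le h (le_of_eq hAcard.symm)
      · exact (Finset.eq_of_subset_of_card_le h (le_of_eq hAcard)).symm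
    apply hdist u (hDI hu) u' (hDI hu')
    ext x
    simp only [SimpleGraph.mem_neighborSet]
    by_cases hxv : x = v
    · subst hxv
      constructor
      · intro _; exact (hDadj u' hu').symm
      · intro _; exact (hDadj u hu).symm
    · have hmem1 : G.Adj u x ↔ x ∈ Bs u ∪ As u := by
        simp only [hBs, hAs, Finset.mem_union, Finset.mem_filter, Finset.mem_univ, true_and]
        constructor
        · intro h
          rcases (hpart u hu x h hxv).1 with hr | hr
          · exact Or.inl ⟨h, hxv, hr⟩
          · exact Or.inr ⟨h, hxv, hr⟩
        · rintro (⟨h, _, _⟩ | ⟨h, _, _⟩) <;> exact h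
      have hmem2 : G.Adj u' x ↔ x ∈ Bs u' ∪ As u' := by
        simp only [hBs, hAs, Finset.mem_union, Finset.mem_filter, Finset.mem_univ, true_and]
        constructor
        · intro h
          rcases (hpart u' hu' x h hxv).1 with hr | hr
          · exact Or.inl ⟨h, hxv, hr⟩
          · exact Or.inr ⟨h, hxv, hr⟩
        · rintro (⟨h, _, _⟩ | ⟨h, _, _⟩) <;> exact h
      rw [hmem1, hmem2, hBeq, hAeq]
  -- pigeonhole
  have hbound : ∀ u ∈ D, (Bs u).card < d := by
    intro u hu
    have := hcard u hu
    omega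
  have hfin : D.toFinset.card ≤ d := by
    have := Finset.card_le_card_of_injOn (f := fun u => (Bs u).card)
      (s := D.toFinset) (t := Finset.range d)
      (fun u hu => Finset.mem_range.mpr (hbound u (Set.mem_toFinset.mp hu)))
      (fun u hu u' hu' he => hinj u (Set.mem_toFinset.mp hu) u' (Set.mem_toFinset.mp hu') he)
    simpa using this
  have hDcard' : D.ncard = D.toFinset.card := Set.ncard_eq_toFinset_card' D
  omega
end

section
/- For every m \u2265 4 and every natural number d with m+1 < 2d and d \u2264 m\u22121, there exists a word-representable split graph S whose vertex set is partitioned into a maximal clique C of size m and an independent set I such that I contains m\u2212d+1 vertices, each of degree exactly d in S, whose neighbourhoods are pairwise distinct. -/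
/-!  auxiliary -/
namespace SWAux

open List

/-- split a range at relative index `t` -/
lemma range'_split (a t n : ℕ) (h : t ≤ n) :
    List.range' a n = List.range' a t ++ List.range' (a + t) (n - t) := by
  have := List.range'_append (s := a) (m := t) (n := n - t) (step := 1)
  simp only [one_mul] at this
  conv_lhs => rw [show n = t + (n - t) by omega]
  rw [← this]

lemma range'_extract (a t n : ℕ) (h1 : a ≤ t) (h2 : t < a + n) :
    List.range' a n = List.range' a (t - a) ++ t :: List.range' (t + 1) (a + n - t - 1) := by
  rw [range'_split a (t - a) n (by omega)]
  congr 1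
  have : a + (t - a) = t := by omega
  rw [this, show n - (t - a) = (a + n - t - 1) + 1 by omega, List.range'_succ]

variable {α : Type*}

lemma flatten_map_range_nil (F : ℕ → List α) (a n : ℕ)
    (h : ∀ j, a ≤ j → j < a + n → F j = []) :
    ((List.range' a n).map F).flatten = [] := by
  induction n generalizing a with
  | zero => simp
  | succ n ih =>
    rw [List.range'_succ]
    simp only [List.map_cons, List.flatten_cons]
    rw [h a (le_refl a) (by omega), ih (a+1) (fun j hj1 hj2 => h j (by omega) (by omega))]
    simp

lemma flatten_map_range_one (F : ℕ → List α) (a n t : ℕ)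
    (h1 : a ≤ t) (h2 : t < a + n)
    (h : ∀ j, a ≤ j → j < a + n → j ≠ t → F j = []) :
    ((List.range' a n).map F).flatten = F t := by
  rw [range'_extract a t n h1 h2]
  simp only [List.map_append, List.map_cons, List.flatten_append, List.flatten_cons]
  rw [flatten_map_range_nil F a (t - a) (fun j hj1 hj2 => h j (by omega) (by omega) (by omega)),
    flatten_map_range_nil F (t+1) (a + n - t - 1) (fun j hj1 hj2 => h j (by omega) (by omega) (by omega))]
  simp

lemma flatten_map_range_two (F : ℕ → List α) (a n t1 t2 : ℕ)
    (h1 : a ≤ t1) (h12 : t1 < t2) (h2 : t2 < a + n)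
    (h : ∀ j, a ≤ j → j < a + n → j ≠ t1 → j ≠ t2 → F j = []) :
    ((List.range' a n).map F).flatten = F t1 ++ F t2 := by
  rw [range'_extract a t1 n h1 (by omega)]
  simp only [List.map_append, List.map_cons, List.flatten_append, List.flatten_cons]
  rw [flatten_map_range_nil F a (t1 - a) (fun j hj1 hj2 => h j (by omega) (by omega) (by omega) (by omega)),
    flatten_map_range_one F (t1+1) (a + n - t1 - 1) t2 (by omega) (by omega)
      (fun j hj1 hj2 hj3 => h j (by omega) (by omega) (by omega) hj3)]
  simp

lemma map_eq_flatten_map (f : ℕ → α) (l : List ℕ) :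
    l.map f = (l.map (fun j => [f j])).flatten := by
  induction l with
  | nil => simp
  | cons x t ih => simp [ih]

/-- filter of a map over a range: no hits -/
lemma MR_nil (p : α → Bool) (f : ℕ → α) (a n : ℕ)
    (h : ∀ j, a ≤ j → j < a + n → p (f j) = false) :
    ((List.range' a n).map f).filter p = [] := by
  rw [map_eq_flatten_map, List.filter_flatten, List.map_map]
  exact flatten_map_range_nil _ a n (fun j hj1 hj2 => by
    simp [List.filter, h j hj1 hj2])

lemma MR_one (p : α → Bool) (f : ℕ → α) (a n t : ℕ)
    (h1 : a ≤ t) (h2 : t < a + n) (hp : p (f t) = true)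
    (h : ∀ j, a ≤ j → j < a + n → j ≠ t → p (f j) = false) :
    ((List.range' a n).map f).filter p = [f t] := by
  rw [map_eq_flatten_map, List.filter_flatten, List.map_map]
  rw [flatten_map_range_one _ a n t h1 h2 (fun j hj1 hj2 hj3 => by
    simp [List.filter, h j hj1 hj2 hj3])]
  simp [List.filter, hp]

lemma MR_two (p : α → Bool) (f : ℕ → α) (a n t1 t2 : ℕ)
    (h1 : a ≤ t1) (h12 : t1 < t2) (h2 : t2 < a + n)
    (hp1 : p (f t1) = true) (hp2 : p (f t2) = true)
    (h : ∀ j, a ≤ j → j < a + n → j ≠ t1 → j ≠ t2 → p (f j) = false) :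
    ((List.range' a n).map f).filter p = [f t1, f t2] := by
  rw [map_eq_flatten_map, List.filter_flatten, List.map_map]
  rw [flatten_map_range_two _ a n t1 t2 h1 h12 h2 (fun j hj1 hj2 hj3 hj4 => by
    simp [List.filter, h j hj1 hj2 hj3 hj4])]
  simp [List.filter, hp1, hp2]

/-- filter of a flatten of pairs over a range -/
lemma JP_eq (p : α → Bool) (g h : ℕ → α) (a n : ℕ) :
    (((List.range' a n).map (fun j => [g j, h j])).flatten).filter p
      = ((List.range' a n).map (fun j => List.filter p [g j, h j])).flatten := by
  rw [List.filter_flatten, List.map_map]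
  rfl

lemma JP_nil (p : α → Bool) (g h : ℕ → α) (a n : ℕ)
    (hh : ∀ j, a ≤ j → j < a + n → p (g j) = false ∧ p (h j) = false) :
    (((List.range' a n).map (fun j => [g j, h j])).flatten).filter p = [] := by
  rw [JP_eq]
  exact flatten_map_range_nil _ a n (fun j hj1 hj2 => by
    simp [List.filter, (hh j hj1 hj2).1, (hh j hj1 hj2).2])

lemma JP_one (p : α → Bool) (g h : ℕ → α) (a n t : ℕ)
    (h1 : a ≤ t) (h2 : t < a + n)
    (hh : ∀ j, a ≤ j → j < a + n → j ≠ t → p (g j) = false ∧ p (h j) = false) :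
    (((List.range' a n).map (fun j => [g j, h j])).flatten).filter p
      = List.filter p [g t, h t] := by
  rw [JP_eq]
  exact flatten_map_range_one _ a n t h1 h2 (fun j hj1 hj2 hj3 => by
    simp [List.filter, (hh j hj1 hj2 hj3).1, (hh j hj1 hj2 hj3).2])

lemma JP_two (p : α → Bool) (g h : ℕ → α) (a n t1 t2 : ℕ)
    (h1 : a ≤ t1) (h12 : t1 < t2) (h2 : t2 < a + n)
    (hh : ∀ j, a ≤ j → j < a + n → j ≠ t1 → j ≠ t2 → p (g j) = false ∧ p (h j) = false) :
    (((List.range' a n).map (fun j => [g j, h j])).flatten).filter p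
      = List.filter p [g t1, h t1] ++ List.filter p [g t2, h t2] := by
  rw [JP_eq]
  exact flatten_map_range_two _ a n t1 t2 h1 h12 h2 (fun j hj1 hj2 hj3 hj4 => by
    simp [List.filter, (hh j hj1 hj2 hj3 hj4).1, (hh j hj1 hj2 hj3 hj4).2])

lemma chain6 {x y : α} (h : x ≠ y) : List.Chain' (· ≠ ·) [x, y, x, y, x, y] := by
  simp only [List.Chain', List.isChain_cons_cons, List.isChain_singleton, and_true]
  exact ⟨h, h.symm, h, h.symm, h⟩

lemma notchain {z w : α} {t : List α} : ¬ List.Chain' (· ≠ ·) (w :: z :: z :: t) := by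
  intro hc
  exact (List.isChain_cons_cons.mp (List.isChain_cons_cons.mp hc).2).1 rfl


/-! ### The construction -/

abbrev VV (m b : ℕ) : Type := Fin m ⊕ Fin (b + 1)

def cc (m b : ℕ) (hm : 0 < m) (j : ℕ) : VV m b := Sum.inl ⟨j % m, Nat.mod_lt _ hm⟩

def uu (m b : ℕ) (i : ℕ) : VV m b := Sum.inr ⟨i % (b + 1), Nat.mod_lt _ (Nat.succ_pos b)⟩

lemma cc_inj {m b : ℕ} (hm : 0 < m) {j j' : ℕ} (h1 : j < m) (h2 : j' < m) :
    cc m b hm j = cc m b hm j' ↔ j = j' := by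
  simp [cc, Fin.ext_iff, Nat.mod_eq_of_lt h1, Nat.mod_eq_of_lt h2]

lemma uu_inj {m b : ℕ} {i i' : ℕ} (h1 : i < b + 1) (h2 : i' < b + 1) :
    uu m b i = uu m b i' ↔ i = i' := by
  simp [uu, Fin.ext_iff, Nat.mod_eq_of_lt h1, Nat.mod_eq_of_lt h2]

lemma cc_ne_uu {m b : ℕ} (hm : 0 < m) (j i : ℕ) : cc m b hm j ≠ uu m b i := by
  simp [cc, uu]

lemma uu_ne_cc {m b : ℕ} (hm : 0 < m) (i j : ℕ) : uu m b i ≠ cc m b hm j := by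
  simp [cc, uu]

def GG (m b : ℕ) : SimpleGraph (VV m b) where
  Adj x y := match x, y with
    | .inl a, .inl a' => a ≠ a'
    | .inl l, .inr i => (l : ℕ) < i ∨ (i : ℕ) + b ≤ l
    | .inr i, .inl l => (l : ℕ) < i ∨ (i : ℕ) + b ≤ l
    | .inr _, .inr _ => False
  symm := ⟨by rintro (a | i) (a' | j) h <;> simp_all <;> omega⟩
  loopless := ⟨by rintro (a | i) h <;> simp_all⟩

lemma GG_adj_ll {m b : ℕ} (a a' : Fin m) : (GG m b).Adj (.inl a) (.inl a') ↔ a ≠ a' := Iff.rfl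
lemma GG_adj_lr {m b : ℕ} (l : Fin m) (i : Fin (b+1)) :
    (GG m b).Adj (.inl l) (.inr i) ↔ ((l : ℕ) < i ∨ (i : ℕ) + b ≤ l) := Iff.rfl
lemma GG_adj_rl {m b : ℕ} (l : Fin m) (i : Fin (b+1)) :
    (GG m b).Adj (.inr i) (.inl l) ↔ ((l : ℕ) < i ∨ (i : ℕ) + b ≤ l) := Iff.rfl
lemma GG_adj_rr {m b : ℕ} (i j : Fin (b+1)) : ¬ (GG m b).Adj (.inr i) (.inr j) := fun h => h

def Cs (m b : ℕ) (hm : 0 < m) (a n : ℕ) : List (VV m b) :=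
  (List.range' a n).map (cc m b hm)

def L1 (m b : ℕ) (hm : 0 < m) : List (VV m b) :=
  ((List.range' 0 (b+1)).map (fun j => [uu m b j, cc m b hm j])).flatten
    ++ Cs m b hm (b+1) (m - (b+1))

def L2 (m b : ℕ) (hm : 0 < m) : List (VV m b) :=
  Cs m b hm 0 b
    ++ ((List.range' 0 (b+1)).map (fun j => [uu m b j, cc m b hm (b + j)])).flatten
    ++ Cs m b hm (2*b+1) (m - (2*b+1))

def L3 (m b : ℕ) (hm : 0 < m) : List (VV m b) :=
  Cs m b hm 0 b ++ ((List.range' 0 (b+1)).reverse).map (uu m b) ++ Cs m b hm b (m - b)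

def W (m b : ℕ) (hm : 0 < m) : List (VV m b) := L1 m b hm ++ L2 m b hm ++ L3 m b hm


/-! ### Filter computations -/

section Filters

variable {m b : ℕ} (p : VV m b → Bool)

lemma pf {x y : VV m b} (hp : ∀ v, p v = true ↔ (v = x ∨ v = y)) :
    ∀ v, v ≠ x → v ≠ y → p v = false := by
  intro v h1 h2
  cases hv : p v with
  | false => rfl
  | true =>
    rcases (hp v).mp hv with rfl | rfl
    · exact absurd rfl h1
    · exact absurd rfl h2

variable (hm : 0 < m) (hb : 1 ≤ b) (h2 : 2*b+2 ≤ m)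

section CC

variable (a l : ℕ) (hal : a < l) (hl : l < m)
  (hp : ∀ v, p v = true ↔ (v = cc m b hm a ∨ v = cc m b hm l))

include hal hl hp hb h2

lemma L1_cc : (L1 m b hm).filter p = [cc m b hm a, cc m b hm l] := by
  have ha : a < m := lt_trans hal hl
  have hpf := pf p hp
  have hpa : p (cc m b hm a) = true := (hp _).mpr (Or.inl rfl)
  have hpl : p (cc m b hm l) = true := (hp _).mpr (Or.inr rfl)
  have hcne : ∀ j, j < m → j ≠ a → j ≠ l → p (cc m b hm j) = false := fun j hj h1 h2 =>
    hpf _ (by rw [Ne, cc_inj hm hj ha]; exact h1) (by rw [Ne, cc_inj hm hj hl]; exact h2)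
  have hune : ∀ i, p (uu m b i) = false := fun i =>
    hpf _ (uu_ne_cc hm _ _) (uu_ne_cc hm _ _)
  unfold L1 Cs
  rw [List.filter_append]
  by_cases hlb : l ≤ b
  · rw [JP_two p (uu m b) (cc m b hm) 0 (b+1) a l (Nat.zero_le _) hal (by omega)
        (fun j hj1 hj2 hj3 hj4 => ⟨hune j, hcne j (by omega) hj3 hj4⟩),
      MR_nil p (cc m b hm) (b+1) (m - (b+1))
        (fun j hj1 hj2 => hcne j (by omega) (by omega) (by omega))]
    simp [List.filter_cons, hpa, hpl, hune a, hune l]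
  · by_cases hab : a ≤ b
    · rw [JP_one p (uu m b) (cc m b hm) 0 (b+1) a (Nat.zero_le _) (by omega)
          (fun j hj1 hj2 hj3 => ⟨hune j, hcne j (by omega) hj3 (by omega)⟩),
        MR_one p (cc m b hm) (b+1) (m - (b+1)) l (by omega) (by omega) hpl
          (fun j hj1 hj2 hj3 => hcne j (by omega) (by omega) hj3)]
      simp [List.filter_cons, hpa, hune a]
    · rw [JP_nil p (uu m b) (cc m b hm) 0 (b+1)
          (fun j hj1 hj2 => ⟨hune j, hcne j (by omega) (by omega) (by omega)⟩),
        MR_two p (cc m b hm) (b+1) (m - (b+1)) a l (by omega) hal (by omega) hpa hpl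
          (fun j hj1 hj2 hj3 hj4 => hcne j (by omega) hj3 hj4)]
      simp

lemma L2_cc : (L2 m b hm).filter p = [cc m b hm a, cc m b hm l] := by
  have ha : a < m := lt_trans hal hl
  have hpf := pf p hp
  have hpa : p (cc m b hm a) = true := (hp _).mpr (Or.inl rfl)
  have hpl : p (cc m b hm l) = true := (hp _).mpr (Or.inr rfl)
  have hcne : ∀ j, j < m → j ≠ a → j ≠ l → p (cc m b hm j) = false := fun j hj h1 h2 =>
    hpf _ (by rw [Ne, cc_inj hm hj ha]; exact h1) (by rw [Ne, cc_inj hm hj hl]; exact h2)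
  have hune : ∀ i, p (uu m b i) = false := fun i =>
    hpf _ (uu_ne_cc hm _ _) (uu_ne_cc hm _ _)
  unfold L2 Cs
  rw [List.filter_append, List.filter_append]
  by_cases hlH : l < b
  · -- both in head
    rw [MR_two p (cc m b hm) 0 b a l (Nat.zero_le _) hal (by omega) hpa hpl
        (fun j hj1 hj2 hj3 hj4 => hcne j (by omega) hj3 hj4),
      JP_nil p (uu m b) (fun j => cc m b hm (b + j)) 0 (b+1)
        (fun j hj1 hj2 => ⟨hune j, hcne (b+j) (by omega) (by omega) (by omega)⟩),
      MR_nil p (cc m b hm) (2*b+1) (m - (2*b+1))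
        (fun j hj1 hj2 => hcne j (by omega) (by omega) (by omega))]
    simp
  · by_cases hlJ : l ≤ 2*b
    · by_cases haH : a < b
      · -- a head, l in J
        rw [MR_one p (cc m b hm) 0 b a (Nat.zero_le _) (by omega) hpa
            (fun j hj1 hj2 hj3 => hcne j (by omega) hj3 (by omega)),
          JP_one p (uu m b) (fun j => cc m b hm (b + j)) 0 (b+1) (l - b)
            (Nat.zero_le _) (by omega)
            (fun j hj1 hj2 hj3 => ⟨hune j, hcne (b+j) (by omega) (by omega) (by omega)⟩),
          MR_nil p (cc m b hm) (2*b+1) (m - (2*b+1))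
            (fun j hj1 hj2 => hcne j (by omega) (by omega) (by omega))]
        rw [show b + (l - b) = l by omega]
        simp [List.filter_cons, hpl, hune (l - b)]
      · -- both in J
        rw [MR_nil p (cc m b hm) 0 b
            (fun j hj1 hj2 => hcne j (by omega) (by omega) (by omega)),
          JP_two p (uu m b) (fun j => cc m b hm (b + j)) 0 (b+1) (a - b) (l - b)
            (Nat.zero_le _) (by omega) (by omega)
            (fun j hj1 hj2 hj3 hj4 => ⟨hune j, hcne (b+j) (by omega) (by omega) (by omega)⟩),
          MR_nil p (cc m b hm) (2*b+1) (m - (2*b+1))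
            (fun j hj1 hj2 => hcne j (by omega) (by omega) (by omega))]
        rw [show b + (a - b) = a by omega, show b + (l - b) = l by omega]
        simp [List.filter_cons, hpa, hpl, hune (a - b), hune (l - b)]
    · by_cases haH : a < b
      · -- a head, l tail
        rw [MR_one p (cc m b hm) 0 b a (Nat.zero_le _) (by omega) hpa
            (fun j hj1 hj2 hj3 => hcne j (by omega) hj3 (by omega)),
          JP_nil p (uu m b) (fun j => cc m b hm (b + j)) 0 (b+1)
            (fun j hj1 hj2 => ⟨hune j, hcne (b+j) (by omega) (by omega) (by omega)⟩),
          MR_one p (cc m b hm) (2*b+1) (m - (2*b+1)) l (by omega) (by omega) hpl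
            (fun j hj1 hj2 hj3 => hcne j (by omega) (by omega) hj3)]
        simp
      · by_cases haJ : a ≤ 2*b
        · -- a in J, l tail
          rw [MR_nil p (cc m b hm) 0 b
              (fun j hj1 hj2 => hcne j (by omega) (by omega) (by omega)),
            JP_one p (uu m b) (fun j => cc m b hm (b + j)) 0 (b+1) (a - b)
              (Nat.zero_le _) (by omega)
              (fun j hj1 hj2 hj3 => ⟨hune j, hcne (b+j) (by omega) (by omega) (by omega)⟩),
            MR_one p (cc m b hm) (2*b+1) (m - (2*b+1)) l (by omega) (by omega) hpl
              (fun j hj1 hj2 hj3 => hcne j (by omega) (by omega) hj3)]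
          rw [show b + (a - b) = a by omega]
          simp [List.filter_cons, hpa, hune (a - b)]
        · -- both tail
          rw [MR_nil p (cc m b hm) 0 b
              (fun j hj1 hj2 => hcne j (by omega) (by omega) (by omega)),
            JP_nil p (uu m b) (fun j => cc m b hm (b + j)) 0 (b+1)
              (fun j hj1 hj2 => ⟨hune j, hcne (b+j) (by omega) (by omega) (by omega)⟩),
            MR_two p (cc m b hm) (2*b+1) (m - (2*b+1)) a l (by omega) hal (by omega) hpa hpl
              (fun j hj1 hj2 hj3 hj4 => hcne j (by omega) hj3 hj4)]
          simp

lemma L3_cc : (L3 m b hm).filter p = [cc m b hm a, cc m b hm l] := by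
  have ha : a < m := lt_trans hal hl
  have hpf := pf p hp
  have hpa : p (cc m b hm a) = true := (hp _).mpr (Or.inl rfl)
  have hpl : p (cc m b hm l) = true := (hp _).mpr (Or.inr rfl)
  have hcne : ∀ j, j < m → j ≠ a → j ≠ l → p (cc m b hm j) = false := fun j hj h1 h2 =>
    hpf _ (by rw [Ne, cc_inj hm hj ha]; exact h1) (by rw [Ne, cc_inj hm hj hl]; exact h2)
  have hune : ∀ i, p (uu m b i) = false := fun i =>
    hpf _ (uu_ne_cc hm _ _) (uu_ne_cc hm _ _)
  unfold L3 Cs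
  rw [List.filter_append, List.filter_append, List.map_reverse, List.filter_reverse,
    MR_nil p (uu m b) 0 (b+1) (fun j hj1 hj2 => hune j)]
  by_cases hlH : l < b
  · rw [MR_two p (cc m b hm) 0 b a l (Nat.zero_le _) hal (by omega) hpa hpl
        (fun j hj1 hj2 hj3 hj4 => hcne j (by omega) hj3 hj4),
      MR_nil p (cc m b hm) b (m - b)
        (fun j hj1 hj2 => hcne j (by omega) (by omega) (by omega))]
    simp
  · by_cases haH : a < b
    · rw [MR_one p (cc m b hm) 0 b a (Nat.zero_le _) (by omega) hpa
          (fun j hj1 hj2 hj3 => hcne j (by omega) hj3 (by omega)),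
        MR_one p (cc m b hm) b (m - b) l (by omega) (by omega) hpl
          (fun j hj1 hj2 hj3 => hcne j (by omega) (by omega) hj3)]
      simp
    · rw [MR_nil p (cc m b hm) 0 b
          (fun j hj1 hj2 => hcne j (by omega) (by omega) (by omega)),
        MR_two p (cc m b hm) b (m - b) a l (by omega) hal (by omega) hpa hpl
          (fun j hj1 hj2 hj3 hj4 => hcne j (by omega) hj3 hj4)]
      simp

end CC

section UU

variable (i j : ℕ) (hij : i < j) (hj : j < b + 1)
  (hp : ∀ v, p v = true ↔ (v = uu m b i ∨ v = uu m b j))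

include hij hj hp hb h2

lemma L1_uu : (L1 m b hm).filter p = [uu m b i, uu m b j] := by
  have hi : i < b + 1 := lt_trans hij hj
  have hpf := pf p hp
  have hpi : p (uu m b i) = true := (hp _).mpr (Or.inl rfl)
  have hpj : p (uu m b j) = true := (hp _).mpr (Or.inr rfl)
  have hune : ∀ t, t < b+1 → t ≠ i → t ≠ j → p (uu m b t) = false := fun t ht h1 h2 =>
    hpf _ (by rw [Ne, uu_inj ht hi]; exact h1) (by rw [Ne, uu_inj ht hj]; exact h2)
  have hcne : ∀ t, p (cc m b hm t) = false := fun t =>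
    hpf _ (cc_ne_uu hm _ _) (cc_ne_uu hm _ _)
  unfold L1 Cs
  rw [List.filter_append,
    JP_two p (uu m b) (cc m b hm) 0 (b+1) i j (Nat.zero_le _) hij (by omega)
      (fun t ht1 ht2 ht3 ht4 => ⟨hune t (by omega) ht3 ht4, hcne t⟩),
    MR_nil p (cc m b hm) (b+1) (m - (b+1)) (fun t ht1 ht2 => hcne t)]
  simp [List.filter_cons, hpi, hpj, hcne i, hcne j]

lemma L2_uu : (L2 m b hm).filter p = [uu m b i, uu m b j] := by
  have hi : i < b + 1 := lt_trans hij hj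
  have hpf := pf p hp
  have hpi : p (uu m b i) = true := (hp _).mpr (Or.inl rfl)
  have hpj : p (uu m b j) = true := (hp _).mpr (Or.inr rfl)
  have hune : ∀ t, t < b+1 → t ≠ i → t ≠ j → p (uu m b t) = false := fun t ht h1 h2 =>
    hpf _ (by rw [Ne, uu_inj ht hi]; exact h1) (by rw [Ne, uu_inj ht hj]; exact h2)
  have hcne : ∀ t, p (cc m b hm t) = false := fun t =>
    hpf _ (cc_ne_uu hm _ _) (cc_ne_uu hm _ _)
  unfold L2 Cs
  rw [List.filter_append, List.filter_append,
    MR_nil p (cc m b hm) 0 b (fun t ht1 ht2 => hcne t),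
    JP_two p (uu m b) (fun t => cc m b hm (b + t)) 0 (b+1) i j (Nat.zero_le _) hij (by omega)
      (fun t ht1 ht2 ht3 ht4 => ⟨hune t (by omega) ht3 ht4, hcne (b+t)⟩),
    MR_nil p (cc m b hm) (2*b+1) (m - (2*b+1)) (fun t ht1 ht2 => hcne t)]
  simp [List.filter_cons, hpi, hpj, hcne (b+i), hcne (b+j)]

lemma L3_uu : (L3 m b hm).filter p = [uu m b j, uu m b i] := by
  have hi : i < b + 1 := lt_trans hij hj
  have hpf := pf p hp
  have hpi : p (uu m b i) = true := (hp _).mpr (Or.inl rfl)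
  have hpj : p (uu m b j) = true := (hp _).mpr (Or.inr rfl)
  have hune : ∀ t, t < b+1 → t ≠ i → t ≠ j → p (uu m b t) = false := fun t ht h1 h2 =>
    hpf _ (by rw [Ne, uu_inj ht hi]; exact h1) (by rw [Ne, uu_inj ht hj]; exact h2)
  have hcne : ∀ t, p (cc m b hm t) = false := fun t =>
    hpf _ (cc_ne_uu hm _ _) (cc_ne_uu hm _ _)
  unfold L3 Cs
  rw [List.filter_append, List.filter_append, List.map_reverse, List.filter_reverse,
    MR_nil p (cc m b hm) 0 b (fun t ht1 ht2 => hcne t),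
    MR_two p (uu m b) 0 (b+1) i j (Nat.zero_le _) hij (by omega) hpi hpj
      (fun t ht1 ht2 ht3 ht4 => hune t (by omega) ht3 ht4),
    MR_nil p (cc m b hm) b (m - b) (fun t ht1 ht2 => hcne t)]
  simp

end UU

section UC

variable (i l : ℕ) (hi : i < b + 1) (hl : l < m)
  (hp : ∀ v, p v = true ↔ (v = uu m b i ∨ v = cc m b hm l))

include hi hl hp hb h2

lemma L1_uc_lt (hli : l < i) : (L1 m b hm).filter p = [cc m b hm l, uu m b i] := by
  have hpf := pf p hp
  have hpu : p (uu m b i) = true := (hp _).mpr (Or.inl rfl)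
  have hpc : p (cc m b hm l) = true := (hp _).mpr (Or.inr rfl)
  have hcne : ∀ t, t < m → t ≠ l → p (cc m b hm t) = false := fun t ht h1 =>
    hpf _ (cc_ne_uu hm _ _) (by rw [Ne, cc_inj hm ht hl]; exact h1)
  have hune : ∀ t, t < b+1 → t ≠ i → p (uu m b t) = false := fun t ht h1 =>
    hpf _ (by rw [Ne, uu_inj ht hi]; exact h1) (uu_ne_cc hm _ _)
  unfold L1 Cs
  rw [List.filter_append,
    JP_two p (uu m b) (cc m b hm) 0 (b+1) l i (Nat.zero_le _) hli (by omega)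
      (fun t ht1 ht2 ht3 ht4 => ⟨hune t (by omega) ht4, hcne t (by omega) ht3⟩),
    MR_nil p (cc m b hm) (b+1) (m - (b+1))
      (fun t ht1 ht2 => hcne t (by omega) (by omega))]
  simp [List.filter_cons, hpu, hpc, hune l (by omega) (by omega), hcne i (by omega) (by omega)]

lemma L1_uc_ge (hli : i ≤ l) : (L1 m b hm).filter p = [uu m b i, cc m b hm l] := by
  have hpf := pf p hp
  have hpu : p (uu m b i) = true := (hp _).mpr (Or.inl rfl)
  have hpc : p (cc m b hm l) = true := (hp _).mpr (Or.inr rfl)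
  have hcne : ∀ t, t < m → t ≠ l → p (cc m b hm t) = false := fun t ht h1 =>
    hpf _ (cc_ne_uu hm _ _) (by rw [Ne, cc_inj hm ht hl]; exact h1)
  have hune : ∀ t, t < b+1 → t ≠ i → p (uu m b t) = false := fun t ht h1 =>
    hpf _ (by rw [Ne, uu_inj ht hi]; exact h1) (uu_ne_cc hm _ _)
  unfold L1 Cs
  rw [List.filter_append]
  by_cases hlb : l ≤ b
  · rcases eq_or_lt_of_le hli with rfl | hlt
    · rw [JP_one p (uu m b) (cc m b hm) 0 (b+1) i (Nat.zero_le _) (by omega)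
          (fun t ht1 ht2 ht3 => ⟨hune t (by omega) ht3, hcne t (by omega) ht3⟩),
        MR_nil p (cc m b hm) (b+1) (m - (b+1))
          (fun t ht1 ht2 => hcne t (by omega) (by omega))]
      simp [List.filter_cons, hpu, hpc]
    · rw [JP_two p (uu m b) (cc m b hm) 0 (b+1) i l (Nat.zero_le _) hlt (by omega)
          (fun t ht1 ht2 ht3 ht4 => ⟨hune t (by omega) ht3, hcne t (by omega) ht4⟩),
        MR_nil p (cc m b hm) (b+1) (m - (b+1))
          (fun t ht1 ht2 => hcne t (by omega) (by omega))]
      simp [List.filter_cons, hpu, hpc, hune l (by omega) (by omega),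
        hcne i (by omega) (by omega)]
  · rw [JP_one p (uu m b) (cc m b hm) 0 (b+1) i (Nat.zero_le _) (by omega)
        (fun t ht1 ht2 ht3 => ⟨hune t (by omega) ht3, hcne t (by omega) (by omega)⟩),
      MR_one p (cc m b hm) (b+1) (m - (b+1)) l (by omega) (by omega) hpc
        (fun t ht1 ht2 ht3 => hcne t (by omega) ht3)]
    simp [List.filter_cons, hpu, hcne i (by omega) (by omega)]

lemma L2_uc_lt (hli : l < i + b) : (L2 m b hm).filter p = [cc m b hm l, uu m b i] := by
  have hpf := pf p hp
  have hpu : p (uu m b i) = true := (hp _).mpr (Or.inl rfl)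
  have hpc : p (cc m b hm l) = true := (hp _).mpr (Or.inr rfl)
  have hcne : ∀ t, t < m → t ≠ l → p (cc m b hm t) = false := fun t ht h1 =>
    hpf _ (cc_ne_uu hm _ _) (by rw [Ne, cc_inj hm ht hl]; exact h1)
  have hune : ∀ t, t < b+1 → t ≠ i → p (uu m b t) = false := fun t ht h1 =>
    hpf _ (by rw [Ne, uu_inj ht hi]; exact h1) (uu_ne_cc hm _ _)
  unfold L2 Cs
  rw [List.filter_append, List.filter_append]
  by_cases hlH : l < b
  · rw [MR_one p (cc m b hm) 0 b l (Nat.zero_le _) (by omega) hpc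
        (fun t ht1 ht2 ht3 => hcne t (by omega) ht3),
      JP_one p (uu m b) (fun t => cc m b hm (b + t)) 0 (b+1) i (Nat.zero_le _) (by omega)
        (fun t ht1 ht2 ht3 => ⟨hune t (by omega) ht3, hcne (b+t) (by omega) (by omega)⟩),
      MR_nil p (cc m b hm) (2*b+1) (m - (2*b+1))
        (fun t ht1 ht2 => hcne t (by omega) (by omega))]
    simp [List.filter_cons, hpu, hpc, hcne (b+i) (by omega) (by omega)]
  · rw [MR_nil p (cc m b hm) 0 b (fun t ht1 ht2 => hcne t (by omega) (by omega)),
      JP_two p (uu m b) (fun t => cc m b hm (b + t)) 0 (b+1) (l - b) i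
        (Nat.zero_le _) (by omega) (by omega)
        (fun t ht1 ht2 ht3 ht4 => ⟨hune t (by omega) ht4, hcne (b+t) (by omega) (by omega)⟩),
      MR_nil p (cc m b hm) (2*b+1) (m - (2*b+1))
        (fun t ht1 ht2 => hcne t (by omega) (by omega))]
    rw [show b + (l - b) = l by omega]
    simp [List.filter_cons, hpu, hpc, hune (l - b) (by omega) (by omega),
      hcne (b+i) (by omega) (by omega)]

lemma L2_uc_ge (hli : i + b ≤ l) : (L2 m b hm).filter p = [uu m b i, cc m b hm l] := by
  have hpf := pf p hp
  have hpu : p (uu m b i) = true := (hp _).mpr (Or.inl rfl)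
  have hpc : p (cc m b hm l) = true := (hp _).mpr (Or.inr rfl)
  have hcne : ∀ t, t < m → t ≠ l → p (cc m b hm t) = false := fun t ht h1 =>
    hpf _ (cc_ne_uu hm _ _) (by rw [Ne, cc_inj hm ht hl]; exact h1)
  have hune : ∀ t, t < b+1 → t ≠ i → p (uu m b t) = false := fun t ht h1 =>
    hpf _ (by rw [Ne, uu_inj ht hi]; exact h1) (uu_ne_cc hm _ _)
  unfold L2 Cs
  rw [List.filter_append, List.filter_append,
    MR_nil p (cc m b hm) 0 b (fun t ht1 ht2 => hcne t (by omega) (by omega))]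
  by_cases hlJ : l ≤ 2*b
  · rcases eq_or_lt_of_le hli with heq | hlt
    · rw [JP_one p (uu m b) (fun t => cc m b hm (b + t)) 0 (b+1) i (Nat.zero_le _) (by omega)
          (fun t ht1 ht2 ht3 => ⟨hune t (by omega) ht3, hcne (b+t) (by omega) (by omega)⟩),
        MR_nil p (cc m b hm) (2*b+1) (m - (2*b+1))
          (fun t ht1 ht2 => hcne t (by omega) (by omega))]
      rw [show b + i = l by omega]
      simp [List.filter_cons, hpu, hpc]
    · rw [JP_two p (uu m b) (fun t => cc m b hm (b + t)) 0 (b+1) i (l - b)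
          (Nat.zero_le _) (by omega) (by omega)
          (fun t ht1 ht2 ht3 ht4 => ⟨hune t (by omega) ht3, hcne (b+t) (by omega) (by omega)⟩),
        MR_nil p (cc m b hm) (2*b+1) (m - (2*b+1))
          (fun t ht1 ht2 => hcne t (by omega) (by omega))]
      rw [show b + (l - b) = l by omega]
      simp [List.filter_cons, hpu, hpc, hune (l - b) (by omega) (by omega),
        hcne (b+i) (by omega) (by omega)]
  · rw [JP_one p (uu m b) (fun t => cc m b hm (b + t)) 0 (b+1) i (Nat.zero_le _) (by omega)
        (fun t ht1 ht2 ht3 => ⟨hune t (by omega) ht3, hcne (b+t) (by omega) (by omega)⟩),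
      MR_one p (cc m b hm) (2*b+1) (m - (2*b+1)) l (by omega) (by omega) hpc
        (fun t ht1 ht2 ht3 => hcne t (by omega) ht3)]
    simp [List.filter_cons, hpu, hcne (b+i) (by omega) (by omega)]

lemma L3_uc_lt (hlb : l < b) : (L3 m b hm).filter p = [cc m b hm l, uu m b i] := by
  have hpf := pf p hp
  have hpu : p (uu m b i) = true := (hp _).mpr (Or.inl rfl)
  have hpc : p (cc m b hm l) = true := (hp _).mpr (Or.inr rfl)
  have hcne : ∀ t, t < m → t ≠ l → p (cc m b hm t) = false := fun t ht h1 =>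
    hpf _ (cc_ne_uu hm _ _) (by rw [Ne, cc_inj hm ht hl]; exact h1)
  have hune : ∀ t, t < b+1 → t ≠ i → p (uu m b t) = false := fun t ht h1 =>
    hpf _ (by rw [Ne, uu_inj ht hi]; exact h1) (uu_ne_cc hm _ _)
  unfold L3 Cs
  rw [List.filter_append, List.filter_append, List.map_reverse, List.filter_reverse,
    MR_one p (cc m b hm) 0 b l (Nat.zero_le _) (by omega) hpc
      (fun t ht1 ht2 ht3 => hcne t (by omega) ht3),
    MR_one p (uu m b) 0 (b+1) i (Nat.zero_le _) (by omega) hpu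
      (fun t ht1 ht2 ht3 => hune t (by omega) ht3),
    MR_nil p (cc m b hm) b (m - b) (fun t ht1 ht2 => hcne t (by omega) (by omega))]
  simp

lemma L3_uc_ge (hlb : b ≤ l) : (L3 m b hm).filter p = [uu m b i, cc m b hm l] := by
  have hpf := pf p hp
  have hpu : p (uu m b i) = true := (hp _).mpr (Or.inl rfl)
  have hpc : p (cc m b hm l) = true := (hp _).mpr (Or.inr rfl)
  have hcne : ∀ t, t < m → t ≠ l → p (cc m b hm t) = false := fun t ht h1 =>
    hpf _ (cc_ne_uu hm _ _) (by rw [Ne, cc_inj hm ht hl]; exact h1)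
  have hune : ∀ t, t < b+1 → t ≠ i → p (uu m b t) = false := fun t ht h1 =>
    hpf _ (by rw [Ne, uu_inj ht hi]; exact h1) (uu_ne_cc hm _ _)
  unfold L3 Cs
  rw [List.filter_append, List.filter_append, List.map_reverse, List.filter_reverse,
    MR_nil p (cc m b hm) 0 b (fun t ht1 ht2 => hcne t (by omega) (by omega)),
    MR_one p (uu m b) 0 (b+1) i (Nat.zero_le _) (by omega) hpu
      (fun t ht1 ht2 ht3 => hune t (by omega) ht3),
    MR_one p (cc m b hm) b (m - b) l (by omega) (by omega) hpc
      (fun t ht1 ht2 ht3 => hcne t (by omega) ht3)]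
  simp

end UC

end Filters


/-! ### The word represents the graph -/

lemma cc_val {m b : ℕ} (hm : 0 < m) (a : Fin m) : cc m b hm a.val = Sum.inl a := by
  simp [cc, Fin.ext_iff, Nat.mod_eq_of_lt a.isLt]

lemma uu_val {m b : ℕ} (i : Fin (b+1)) : uu m b i.val = Sum.inr i := by
  simp [uu, Fin.ext_iff, Nat.mod_eq_of_lt i.isLt]

open Classical in
lemma alt_symm {V : Type*} (w : List V) (x y : V) : Alternate w x y ↔ Alternate w y x := by
  unfold Alternate
  rw [show (fun v => @decide (v = x ∨ v = y)
        (@instDecidableOr _ _ (Classical.propDecidable _) (Classical.propDecidable _)))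
      = (fun v => @decide (v = y ∨ v = x)
        (@instDecidableOr _ _ (Classical.propDecidable _) (Classical.propDecidable _))) from
    funext fun v => decide_eq_decide.mpr or_comm]

open Classical in
theorem W_represents (m b : ℕ) (hm : 0 < m) (hb : 1 ≤ b) (h2 : 2*b+2 ≤ m) :
    Represents (GG m b) (W m b hm) := by
  constructor
  · rintro (a | i)
    · rw [← cc_val hm a]
      have h3 : cc m b hm a.val ∈ L3 m b hm := by
        have hmem : ∀ (s n : ℕ), s ≤ a.val → a.val < s + n → cc m b hm a.val ∈ Cs m b hm s n :=
          fun s n h1 h2 => List.mem_map.mpr ⟨a.val, List.mem_range'_1.mpr ⟨h1, h2⟩, rfl⟩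
        unfold L3
        simp only [List.mem_append]
        rcases Nat.lt_or_ge a.val b with h | h
        · have := hmem 0 b (Nat.zero_le _) (by omega); tauto
        · have := hmem b (m - b) h (by omega); tauto
      unfold W; simp only [List.mem_append]; tauto
    · rw [← uu_val i]
      have h3 : uu m b i.val ∈ L3 m b hm := by
        unfold L3
        simp only [List.mem_append]
        have : uu m b i.val ∈ (List.range' 0 (b+1)).reverse.map (uu m b) :=
          List.mem_map.mpr ⟨i.val,
            List.mem_reverse.mpr (List.mem_range'_1.mpr ⟨Nat.zero_le _, by omega⟩), rfl⟩
        tauto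
      unfold W; simp only [List.mem_append]; tauto
  · have key_ll : ∀ a a' : Fin m, a.val < a'.val →
        Alternate (W m b hm) (Sum.inl a) (Sum.inl a') := by
      intro a a' hlt
      unfold Alternate W
      set p : VV m b → Bool :=
        fun v => @decide (v = Sum.inl a ∨ v = Sum.inl a') (@instDecidableOr _ _ (Classical.propDecidable _) (Classical.propDecidable _)) with hpdef
      have hp : ∀ v, p v = true ↔ (v = cc m b hm a.val ∨ v = cc m b hm a'.val) := by
        intro v; rw [cc_val, cc_val, hpdef]; simp
      rw [List.filter_append, List.filter_append,
        L1_cc p hm hb h2 a.val a'.val hlt a'.isLt hp,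
        L2_cc p hm hb h2 a.val a'.val hlt a'.isLt hp,
        L3_cc p hm hb h2 a.val a'.val hlt a'.isLt hp]
      simp only [List.cons_append, List.nil_append]
      exact chain6 (by rw [Ne, cc_inj hm (by omega) a'.isLt]; omega)
    have key_rr : ∀ i j : Fin (b+1), i.val < j.val →
        ¬ Alternate (W m b hm) (Sum.inr i) (Sum.inr j) := by
      intro i j hlt
      unfold Alternate W
      set p : VV m b → Bool :=
        fun v => @decide (v = Sum.inr i ∨ v = Sum.inr j) (@instDecidableOr _ _ (Classical.propDecidable _) (Classical.propDecidable _)) with hpdef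
      have hp : ∀ v, p v = true ↔ (v = uu m b i.val ∨ v = uu m b j.val) := by
        intro v; rw [uu_val, uu_val, hpdef]; simp
      rw [List.filter_append, List.filter_append,
        L1_uu p hm hb h2 i.val j.val hlt j.isLt hp,
        L2_uu p hm hb h2 i.val j.val hlt j.isLt hp,
        L3_uu p hm hb h2 i.val j.val hlt j.isLt hp]
      simp only [List.cons_append, List.nil_append]
      intro h
      exact (List.isChain_cons_cons.mp h.tail.tail.tail).1 rfl
    have key_rl : ∀ (i : Fin (b+1)) (l : Fin m),
        Alternate (W m b hm) (Sum.inr i) (Sum.inl l) ↔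
          ((l : ℕ) < i ∨ (i : ℕ) + b ≤ l) := by
      intro i l
      unfold Alternate W
      set p : VV m b → Bool :=
        fun v => @decide (v = Sum.inr i ∨ v = Sum.inl l) (@instDecidableOr _ _ (Classical.propDecidable _) (Classical.propDecidable _)) with hpdef
      have hp : ∀ v, p v = true ↔ (v = uu m b i.val ∨ v = cc m b hm l.val) := by
        intro v; rw [uu_val, cc_val, hpdef]; simp
      have hi : i.val < b + 1 := i.isLt
      have hl : l.val < m := l.isLt
      by_cases hc1 : l.val < i.val
      · rw [List.filter_append, List.filter_append,
          L1_uc_lt p hm hb h2 i.val l.val hi hl hp hc1,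
          L2_uc_lt p hm hb h2 i.val l.val hi hl hp (by omega),
          L3_uc_lt p hm hb h2 i.val l.val hi hl hp (by omega)]
        simp only [List.cons_append, List.nil_append]
        exact iff_of_true (chain6 (cc_ne_uu hm _ _)) (Or.inl hc1)
      · by_cases hc2 : i.val + b ≤ l.val
        · rw [List.filter_append, List.filter_append,
            L1_uc_ge p hm hb h2 i.val l.val hi hl hp (by omega),
            L2_uc_ge p hm hb h2 i.val l.val hi hl hp hc2,
            L3_uc_ge p hm hb h2 i.val l.val hi hl hp (by omega)]
          simp only [List.cons_append, List.nil_append]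
          exact iff_of_true (chain6 (uu_ne_cc hm _ _)) (Or.inr hc2)
        · rw [List.filter_append, List.filter_append,
            L1_uc_ge p hm hb h2 i.val l.val hi hl hp (by omega),
            L2_uc_lt p hm hb h2 i.val l.val hi hl hp (by omega)]
          simp only [List.cons_append, List.nil_append]
          refine iff_of_false ?_ (by omega)
          intro h
          exact (List.isChain_cons_cons.mp h.tail).1 rfl
    rintro (a | i) (a' | j) hne
    · have hav : a.val ≠ a'.val := fun h => hne (congrArg Sum.inl (Fin.ext h))
      have hadj : (GG m b).Adj (Sum.inl a) (Sum.inl a') := by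
        rw [GG_adj_ll]; exact fun h => hne (congrArg _ h)
      rcases Nat.lt_or_ge a.val a'.val with h | h
      · exact iff_of_true (key_ll a a' h) hadj
      · exact iff_of_true ((alt_symm _ _ _).mpr (key_ll a' a (by omega))) hadj
    · exact ((alt_symm _ _ _).trans (key_rl j a)).trans (GG_adj_lr a j).symm
    · exact key_rl i a'
    · have hij : i.val ≠ j.val := fun h => hne (congrArg Sum.inr (Fin.ext h))
      refine iff_of_false ?_ (GG_adj_rr i j)
      rcases Nat.lt_or_ge i.val j.val with h | h
      · exact key_rr i j h
      · exact fun hA => key_rr j i (by omega) ((alt_symm _ _ _).mp hA)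
    
end SWAux

/-- For every `m ≥ 4` and `d` with `m + 1 < 2d` and `d ≤ m - 1`, there exists a
word-representable split graph with maximal clique `C` of size `m` and independent set
`I` such that `I` contains `m - d + 1` vertices of degree exactly `d` with pairwise
distinct neighbourhoods. -/
theorem split_degree_bound_large_d_achievable (m d : ℕ)
    (hm : 4 ≤ m) (hd1 : m + 1 < 2 * d) (hd2 : d ≤ m - 1) :
    ∃ (V : Type) (_ : Fintype V) (G : SimpleGraph V) (C I D : Set V),
      C ∪ I = Set.univ ∧ Disjoint C I ∧
      G.IsClique C ∧ (∀ C' : Set V, G.IsClique C' → C ⊆ C' → C' = C) ∧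
      (∀ u ∈ I, ∀ v ∈ I, ¬ G.Adj u v) ∧
      C.ncard = m ∧
      WordRepresentable G ∧
      D ⊆ I ∧ D.ncard = m - d + 1 ∧
      (∀ u ∈ D, (G.neighborSet u).ncard = d) ∧
      (∀ u ∈ D, ∀ u' ∈ D, G.neighborSet u = G.neighborSet u' → u = u') := by
  obtain ⟨b, hb_eq⟩ : ∃ b, m - d = b := ⟨m - d, rfl⟩
  have hd : d ≤ m := by omega
  have hb1 : 1 ≤ b := by omega
  have h2 : 2 * b + 2 ≤ m := by omega
  have hm0 : 0 < m := by omega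
  refine ⟨SWAux.VV m b, inferInstance, SWAux.GG m b,
    Set.range Sum.inl, Set.range Sum.inr, Set.range Sum.inr,
    ?_, ?_, ?_, ?_, ?_, ?_, ?_, ?_, ?_, ?_, ?_⟩
  · ext (a | i) <;> simp
  · rw [Set.disjoint_left]
    rintro _ ⟨a, rfl⟩ ⟨i, h⟩
    cases h
  · rintro _ ⟨a, rfl⟩ _ ⟨a', rfl⟩ hne
    exact fun h => hne (congrArg _ h)
  · intro C' hC' hsub
    refine Set.Subset.antisymm ?_ hsub
    rintro (a | i) hv
    · exact ⟨a, rfl⟩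
    · exfalso
      have him : i.val < m := by have := i.isLt; omega
      have hadj := hC' (hsub ⟨⟨i.val, him⟩, rfl⟩) hv (by simp)
      rw [SWAux.GG_adj_lr] at hadj
      have := i.isLt
      simp at hadj
      omega
  · rintro _ ⟨i, rfl⟩ _ ⟨j, rfl⟩
    exact SWAux.GG_adj_rr i j
  · rw [← Set.image_univ, Set.ncard_image_of_injective _ Sum.inl_injective, Set.ncard_univ,
      Nat.card_eq_fintype_card, Fintype.card_fin]
  · exact ⟨SWAux.W m b hm0, SWAux.W_represents m b hm0 hb1 h2⟩
  · exact Set.Subset.refl _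
  · rw [← Set.image_univ, Set.ncard_image_of_injective _ Sum.inr_injective, Set.ncard_univ,
      Nat.card_eq_fintype_card, Fintype.card_fin]
    omega
  · rintro _ ⟨i, rfl⟩
    have him : i.val < m := by have := i.isLt; omega
    have hibm : i.val + b < m := by have := i.isLt; omega
    have hset : (SWAux.GG m b).neighborSet (Sum.inr i) =
        ↑((Finset.Iio (⟨i.val, him⟩ : Fin m) ∪ Finset.Ici (⟨i.val + b, hibm⟩ : Fin m)).image
          (Sum.inl : Fin m → SWAux.VV m b)) := by
      ext (a | j)
      · simp only [SimpleGraph.mem_neighborSet, SWAux.GG_adj_rl, Finset.coe_image,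
          Set.mem_image, Finset.mem_coe, Finset.mem_union, Finset.mem_Iio, Finset.mem_Ici]
        constructor
        · intro h
          exact ⟨a, by simpa [Fin.lt_def, Fin.le_def] using h, rfl⟩
        · rintro ⟨x, hx, hxa⟩
          obtain rfl : x = a := Sum.inl_injective hxa
          simpa [Fin.lt_def, Fin.le_def] using hx
      · simp [SimpleGraph.mem_neighborSet, SWAux.GG_adj_rr]
    rw [hset, Set.ncard_coe_finset, Finset.card_image_of_injective _ Sum.inl_injective,
      Finset.card_union_of_disjoint, Fin.card_Iio, Fin.card_Ici]
    · have := i.isLt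
      simp only [Fin.val_mk]
      omega
    · rw [Finset.disjoint_left]
      intro x hx1 hx2
      rw [Finset.mem_Iio, Fin.lt_def] at hx1
      rw [Finset.mem_Ici, Fin.le_def] at hx2
      simp at hx1 hx2
      omega
  · have key : ∀ (i j : Fin (b+1)), i.val < j.val →
        (SWAux.GG m b).neighborSet (Sum.inr i) ≠ (SWAux.GG m b).neighborSet (Sum.inr j) := by
      intro i j hlt heq
      have him : i.val < m := by have := i.isLt; omega
      have h1 : (Sum.inl (⟨i.val, him⟩ : Fin m)) ∈ (SWAux.GG m b).neighborSet (Sum.inr j) := by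
        rw [SimpleGraph.mem_neighborSet, SWAux.GG_adj_rl]
        exact Or.inl hlt
      rw [← heq, SimpleGraph.mem_neighborSet, SWAux.GG_adj_rl] at h1
      simp at h1
      omega
    rintro _ ⟨i, rfl⟩ _ ⟨j, rfl⟩ hN
    rcases Nat.lt_trichotomy i.val j.val with h | h | h
    · exact absurd hN (key i j h)
    · rw [Fin.ext h]
    · exact absurd hN.symm (key j i h)
end

section
/- For every n \u2265 4, the graph M_n, with vertex set {1, \u2026, n} \u222a {y, z}, in which {1, \u2026, n} induces a complete graph, y is adjacent exactly to 1, 4 and z, and z is adjacent exactly to 2, 4 and y, is word-representable; indeed, it is represented by the word y 1 z 4 y 2 z 3 5 6 7 \u22ef n. -/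
/-- The graph `M_n`: the complete graph on `Fin n` (vertices `1, …, n` renamed
`0, …, n-1`) together with two extra vertices `y = Sum.inr false` and
`z = Sum.inr true`, where `y` is adjacent exactly to `1, 4, z` (i.e. `0, 3, z`)
and `z` is adjacent exactly to `2, 4, y` (i.e. `1, 3, y`). -/
def Mgraph (n : ℕ) : SimpleGraph (Fin n ⊕ Bool) :=
  SimpleGraph.fromRel (fun u v =>
    match u, v with
    | Sum.inl _, Sum.inl _ => True
    | Sum.inr false, Sum.inl a => a.val = 0 ∨ a.val = 3
    | Sum.inr true, Sum.inl a => a.val = 1 ∨ a.val = 3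
    | Sum.inl a, Sum.inr false => a.val = 0 ∨ a.val = 3
    | Sum.inl a, Sum.inr true => a.val = 1 ∨ a.val = 3
    | Sum.inr _, Sum.inr _ => True)

section helpers

lemma Mg.mem_drop4 {n : ℕ} (a : Fin n) : a ∈ (List.finRange n).drop 4 ↔ 4 ≤ a.val := by
  rw [List.mem_iff_getElem]
  constructor
  · rintro ⟨i, hi, rfl⟩
    simp [List.getElem_drop]
  · intro h
    refine ⟨a.val - 4, ?_, ?_⟩
    · simpa using by omega
    · simp [List.getElem_drop]; ext; simp; omega

lemma Mg.nodup_drop4 (n : ℕ) : ((List.finRange n).drop 4).Nodup :=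
  (List.nodup_finRange n).sublist (List.drop_sublist _ _)

-- the tail of the word
abbrev Mg.Tl (n : ℕ) : List (Fin n ⊕ Bool) := ((List.finRange n).drop 4).map Sum.inl

lemma Mg.mem_Tl {n : ℕ} (a : Fin n) : Sum.inl a ∈ Mg.Tl n ↔ 4 ≤ a.val := by
  rw [Mg.Tl, List.mem_map]
  constructor
  · rintro ⟨b, hb, he⟩; cases Sum.inl.inj he; exact (Mg.mem_drop4 _).1 hb
  · intro h; exact ⟨a, (Mg.mem_drop4 _).2 h, rfl⟩

lemma Mg.not_mem_Tl {n : ℕ} (b : Bool) : Sum.inr b ∉ Mg.Tl n := by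
  rw [Mg.Tl, List.mem_map]
  rintro ⟨c, -, ⟨⟩⟩

lemma Mg.nodup_Tl (n : ℕ) : (Mg.Tl n).Nodup :=
  (Mg.nodup_drop4 n).map (fun _ _ => Sum.inl.inj)

open Classical in
lemma Mg.filter_decide_congr {α : Type*} {p q : α → Prop} [∀ a, Decidable (p a)]
    [∀ a, Decidable (q a)] {l : List α} (h : ∀ v ∈ l, p v ↔ q v) :
    (l.filter fun v => decide (p v)) = l.filter fun v => decide (q v) :=
  List.filter_congr fun v hv => decide_eq_decide.mpr (h v hv)

open Classical in
/-- filter of the tail for a mixed pair -/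
lemma Mg.Tl_filter_mixed {n : ℕ} (b : Bool) (c : Fin n) :
    ((Mg.Tl n).filter fun v => decide (v = Sum.inr b ∨ v = Sum.inl c))
      = if 4 ≤ c.val then [Sum.inl c] else [] := by
  have h1 : ((Mg.Tl n).filter fun v => decide (v = Sum.inr b ∨ v = Sum.inl c))
      = (Mg.Tl n).filter fun v => decide (v = Sum.inl c) := by
    refine Mg.filter_decide_congr fun v hv => ?_
    constructor
    · rintro (rfl | rfl)
      · exact absurd hv (Mg.not_mem_Tl b)
      · rfl
    · rintro rfl; exact Or.inr rfl
  rw [h1]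
  split
  · rename_i h
    have : ((Mg.Tl n).filter fun v => decide (v = Sum.inl c))
        = (Mg.Tl n).filter (· = Sum.inl c) := by
      refine Mg.filter_decide_congr fun v hv => Iff.rfl
    letI _inst : BEq (Fin n ⊕ Bool) := instBEqOfDecidableEq
    rw [this, List.filter_eq, List.count_eq_one_of_mem (Mg.nodup_Tl n) ((Mg.mem_Tl c).2 h)]
    rfl
  · rename_i h
    refine List.filter_eq_nil_iff.2 fun v hv => ?_
    simp only [decide_eq_true_eq]
    rintro rfl
    exact h ((Mg.mem_Tl c).1 hv)

open Classical in
/-- filter of the tail for a pair of inr's -/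
lemma Mg.Tl_filter_inr {n : ℕ} (b d : Bool) :
    ((Mg.Tl n).filter fun v => decide (v = Sum.inr b ∨ v = Sum.inr d)) = [] := by
  refine List.filter_eq_nil_iff.2 fun v hv => ?_
  simp only [decide_eq_true_eq]
  rintro (rfl | rfl)
  · exact Mg.not_mem_Tl b hv
  · exact Mg.not_mem_Tl d hv

lemma Mg.decide_irrel {p : Prop} {i1 i2 : Decidable p} : @decide p i1 = @decide p i2 := by
  cases Subsingleton.elim i1 i2; rfl

lemma Mg.alternate_iff {V : Type*} [DecidableEq V] (w : List V) (x y : V) :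
    Alternate w x y ↔ (w.filter fun v => decide (v = x ∨ v = y)).Chain' (· ≠ ·) := by
  unfold Alternate
  exact Iff.of_eq (congrArg _ (List.filter_congr fun v _ => Mg.decide_irrel))

open Classical in
lemma Mg.alternate_comm {V : Type*} (w : List V) (x y : V) :
    Alternate w x y ↔ Alternate w y x := by
  unfold Alternate
  rw [Mg.filter_decide_congr (q := fun v => v = y ∨ v = x) (fun v _ => or_comm)]

end helpers

/-- For every `n ≥ 4`, the graph `M_n` is word-representable; indeed it is represented
by the word `y 1 z 4 y 2 z 3 5 6 7 ⋯ n`. -/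
theorem Mgraph_wordRepresentable (n : ℕ) (hn : 4 ≤ n) :
    Represents (Mgraph n)
      (Sum.inr false :: Sum.inl ⟨0, by omega⟩ :: Sum.inr true :: Sum.inl ⟨3, by omega⟩ ::
       Sum.inr false :: Sum.inl ⟨1, by omega⟩ :: Sum.inr true :: Sum.inl ⟨2, by omega⟩ ::
        ((List.finRange n).drop 4).map Sum.inl) ∧
    WordRepresentable (Mgraph n) := by
  have h0 : (0:ℕ) < n := by omega
  have h1 : (1:ℕ) < n := by omega
  have h2 : (2:ℕ) < n := by omega
  have h3 : (3:ℕ) < n := by omega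
  set w : List (Fin n ⊕ Bool) :=
      (Sum.inr false :: Sum.inl ⟨0, by omega⟩ :: Sum.inr true :: Sum.inl ⟨3, by omega⟩ ::
       Sum.inr false :: Sum.inl ⟨1, by omega⟩ :: Sum.inr true :: Sum.inl ⟨2, by omega⟩ ::
        Mg.Tl n) with hw
  suffices h : Represents (Mgraph n) w from ⟨h, w, h⟩
  constructor
  · -- membership
    intro v
    rcases v with a | b
    · rcases Nat.lt_or_ge a.val 4 with h | h
      · rw [hw]
        have : a.val = 0 ∨ a.val = 1 ∨ a.val = 2 ∨ a.val = 3 := by omega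
        simp only [List.mem_cons, Sum.inl.injEq, Fin.ext_iff]
        omega
      · rw [hw]
        simp only [List.mem_cons]
        exact Or.inr <| Or.inr <| Or.inr <| Or.inr <| Or.inr <| Or.inr <| Or.inr <| Or.inr
          ((Mg.mem_Tl a).2 h)
    · rcases b with _ | _ <;> simp [hw]
  · -- alternation iff adjacency
    intro x y hxy
    have key : ∀ (b : Bool) (c : Fin n),
        Alternate w (Sum.inr b) (Sum.inl c) ↔ (Mgraph n).Adj (Sum.inr b) (Sum.inl c) := by
      intro b c
      have hsplit : w = [Sum.inr false, Sum.inl ⟨0,h0⟩, Sum.inr true, Sum.inl ⟨3,h3⟩,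
          Sum.inr false, Sum.inl ⟨1,h1⟩, Sum.inr true, Sum.inl ⟨2,h2⟩] ++ Mg.Tl n := by
        rw [hw]; rfl
      have ht := Mg.Tl_filter_mixed b c
      rcases Nat.lt_or_ge c.val 4 with hc4 | hc4
      · rw [if_neg (by omega)] at ht
        have hc : c.val = 0 ∨ c.val = 1 ∨ c.val = 2 ∨ c.val = 3 := by omega
        rcases b <;> rcases hc with hc | hc | hc | hc <;>
          rw [Mg.alternate_iff, hsplit, List.filter_append, ht] <;>
          simp [Mgraph, SimpleGraph.fromRel_adj, Fin.ext_iff, hc, List.Chain', List.isChain_cons_cons]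
      · rw [if_pos hc4] at ht
        have ne0 : (⟨0,h0⟩ : Fin n) ≠ c := fun h => by rw [Fin.ext_iff] at h; simp at h; omega
        have ne1 : (⟨1,h1⟩ : Fin n) ≠ c := fun h => by rw [Fin.ext_iff] at h; simp at h; omega
        have ne2 : (⟨2,h2⟩ : Fin n) ≠ c := fun h => by rw [Fin.ext_iff] at h; simp at h; omega
        have ne3 : (⟨3,h3⟩ : Fin n) ≠ c := fun h => by rw [Fin.ext_iff] at h; simp at h; omega
        rcases b <;>
          rw [Mg.alternate_iff, hsplit, List.filter_append, ht] <;>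
          simp [Mgraph, SimpleGraph.fromRel_adj, ne0, ne1, ne2, ne3, List.Chain', List.isChain_cons_cons] <;>
          omega
    rcases x with a | b <;> rcases y with c | d
    · -- inl, inl : both sides true
      refine iff_of_true ?_ ?_
      · -- Alternate holds since each inl letter occurs exactly once
        rw [Mg.alternate_iff]
        set P : Fin n ⊕ Bool → Bool := fun v => decide (v = Sum.inl a ∨ v = Sum.inl c) with hP
        have hPL : ∀ v : Fin n ⊕ Bool, P v = true → v.isLeft = true := by
          intro v hv
          rcases of_decide_eq_true hv with rfl | rfl <;> rfl
        have f1 : w.filter P = (w.filter Sum.isLeft).filter P := by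
          rw [List.filter_filter]
          refine (List.filter_congr fun v _ => ?_).symm
          by_cases h : P v = true
          · rw [h, hPL v h]; rfl
          · rw [Bool.not_eq_true] at h; rw [h]; rfl
        have f2 : w.filter Sum.isLeft =
            [Sum.inl ⟨0,h0⟩, Sum.inl ⟨3,h3⟩, Sum.inl ⟨1,h1⟩, Sum.inl ⟨2,h2⟩] ++ Mg.Tl n := by
          rw [hw]
          simp [List.filter_cons]
          constructor <;> · intro hmem; have := List.mem_of_mem_drop hmem; simp at this
        have f3 : (([Sum.inl ⟨0,h0⟩, Sum.inl ⟨3,h3⟩, Sum.inl ⟨1,h1⟩, Sum.inl ⟨2,h2⟩] :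
            List (Fin n ⊕ Bool)) ++ Mg.Tl n).Nodup := by
          rw [List.nodup_append]
          refine ⟨?_, Mg.nodup_Tl n, ?_⟩
          · simp [Fin.ext_iff]
          · intro v hv
            have : ∀ (k : ℕ) (hk : k < n), k < 4 → v = Sum.inl ⟨k, hk⟩ → v ∉ Mg.Tl n := by
              rintro k hk hk4 rfl hmem
              have := (Mg.mem_Tl _).1 hmem
              simp at this; omega
            simp only [List.mem_cons, List.not_mem_nil, or_false] at hv
            rcases hv with rfl | rfl | rfl | rfl
            · exact fun b hb h => by subst h; exact this 0 h0 (by omega) rfl hb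
            · exact fun b hb h => by subst h; exact this 3 h3 (by omega) rfl hb
            · exact fun b hb h => by subst h; exact this 1 h1 (by omega) rfl hb
            · exact fun b hb h => by subst h; exact this 2 h2 (by omega) rfl hb
        rw [f1, f2]
        exact List.Pairwise.isChain (List.Nodup.filter P f3)
      · refine SimpleGraph.fromRel_adj .. |>.2 ⟨hxy, Or.inl trivial⟩
    · -- inl, inr : use symmetry
      rw [Mg.alternate_comm, SimpleGraph.adj_comm]
      exact key d a
    · exact key b c
    · -- inr b, inr d
      have hbd : b ≠ d := fun h => hxy (by rw [h])
      have hadj : (Mgraph n).Adj (Sum.inr b) (Sum.inr d) :=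
        SimpleGraph.fromRel_adj .. |>.2 ⟨hxy, by rcases b <;> rcases d <;> simp_all⟩
      refine iff_of_true ?_ hadj
      rw [Mg.alternate_iff]
      have ht := Mg.Tl_filter_inr (n := n) b d
      rw [hw]
      rcases b <;> rcases d <;> try exact absurd rfl hbd
      all_goals
        simp only [List.filter_cons, decide_eq_true_eq, Sum.inr.injEq, Sum.inl.injEq,
          reduceCtorEq, or_self, or_false, false_or, or_true, true_or, if_true, if_false,
          Bool.false_eq_true, Bool.true_eq_false, ite_true, ite_false, ht]
      all_goals simp [List.Chain', List.isChain_cons_cons]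
end

section
/- For every \u2113 \u2265 4 and every i with 2 < i < \u2113, the graph obtained from K^\u25b3_\u2113 by adding a new vertex x adjacent exactly to the vertices 1 and i is not word-representable. -/
/-- The graph `K^△_ℓ`: the complete graph on `Fin l` (the paper's vertices `1, …, ℓ`
renamed `0, …, ℓ-1`) together with, for each `i : Fin l`, a new vertex `i' = Sum.inr i`
of degree 2 adjacent exactly to `i` and `i + 1 (mod ℓ)`. -/
def KTri (l : ℕ) : SimpleGraph (Fin l ⊕ Fin l) :=
  SimpleGraph.fromRel (fun u v =>
    match u, v with
    | Sum.inl _, Sum.inl _ => True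
    | Sum.inr i, Sum.inl a => a.val = i.val ∨ a.val = (i.val + 1) % l
    | Sum.inl a, Sum.inr i => a.val = i.val ∨ a.val = (i.val + 1) % l
    | Sum.inr _, Sum.inr _ => False)

/-- The graph obtained from `K^△_ℓ` by adding a new vertex `x = none` adjacent exactly
to the clique vertices with (0-based) labels `p` and `q`. -/
def KTriPlus (l p q : ℕ) : SimpleGraph (Option (Fin l ⊕ Fin l)) :=
  SimpleGraph.fromRel (fun u v =>
    match u, v with
    | some a, some b => (KTri l).Adj a b
    | none, some (Sum.inl a) => a.val = p ∨ a.val = q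
    | some (Sum.inl a), none => a.val = p ∨ a.val = q
    | _, _ => False)

namespace KTP
variable {V : Type*} [DecidableEq V]

/-- count of `v` among the first `n` letters of `w` -/
def cnt (w : List V) (v : V) (n : ℕ) : ℕ := ((w.take n).count v)

/-- `x` dominates `y` pointwise (pattern `x y x y …`) -/
def Dom (w : List V) (x y : V) : Prop :=
  ∀ n, cnt w y n ≤ cnt w x n ∧ cnt w x n ≤ cnt w y n + 1

def FL (w : List V) (x y : V) : List V := w.filter fun v => decide (v = x ∨ v = y)

theorem cnt_zero (w : List V) (v : V) : cnt w v 0 = 0 := by simp [cnt]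

theorem cnt_nil (v : V) (n : ℕ) : cnt ([] : List V) v n = 0 := by simp [cnt]

theorem cnt_cons_succ (a : V) (w : List V) (v : V) (n : ℕ) :
    cnt (a :: w) v (n + 1) = cnt w v n + if a = v then 1 else 0 := by
  simp [cnt, List.take_succ_cons, List.count_cons]

theorem alternate_iff_chain (w : List V) (x y : V) :
    Alternate w x y ↔ (FL w x y).Chain' (· ≠ ·) := by
  unfold Alternate FL
  exact Iff.of_eq (congrArg (List.Chain' (· ≠ ·)) (List.filter_congr (fun a _ => by
    by_cases h : a = x ∨ a = y <;> simp [h])))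

theorem FL_comm (w : List V) (x y : V) : FL w x y = FL w y x :=
  List.filter_congr (fun a _ => by by_cases h : a = x ∨ a = y <;> simp [h, Or.symm, or_comm])

theorem FL_cons (a : V) (w : List V) (x y : V) :
    FL (a :: w) x y = if a = x ∨ a = y then a :: FL w x y else FL w x y := by
  rw [FL, List.filter_cons]
  by_cases h : a = x ∨ a = y <;> simp [h, FL]

theorem dom_nil (x y : V) : Dom ([] : List V) x y := by
  intro n; simp [cnt_nil]

theorem dom_cons_ne {a x y : V} {w : List V} (hax : a ≠ x) (hay : a ≠ y) :
    Dom (a :: w) x y ↔ Dom w x y := by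
  constructor
  · intro h n
    have := h (n + 1)
    simpa [cnt_cons_succ, hax, hay] using this
  · intro h n
    cases n with
    | zero => simp [cnt_zero]
    | succ m => simpa [cnt_cons_succ, hax, hay] using h m

theorem dom_cons_self {x y : V} {w : List V} (hxy : x ≠ y) :
    Dom (x :: w) x y ↔ Dom w y x := by
  constructor
  · intro h n
    have := h (n + 1)
    simp [cnt_cons_succ, hxy] at this
    omega
  · intro h n
    cases n with
    | zero => simp [cnt_zero]
    | succ m =>
      have := h m
      simp [cnt_cons_succ, hxy]
      omega

theorem not_dom_cons_other {x y : V} {w : List V} (hxy : x ≠ y) :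
    ¬ Dom (y :: w) x y := by
  intro h
  have := (h 1).1
  simp [cnt_cons_succ, cnt_zero, hxy, Ne.symm hxy] at this

theorem first_occ {x y : V} (hxy : x ≠ y) :
    ∀ w : List V, ((FL w x y).head? = some y) →
      ∃ n, cnt w y n = 1 ∧ cnt w x n = 0 := by
  intro w
  induction w with
  | nil => simp [FL]
  | cons a w ih =>
    intro h
    by_cases hx : a = x
    · rw [FL_cons, if_pos (Or.inl hx)] at h
      simp only [List.head?_cons, Option.some.injEq] at h
      exact absurd (hx.symm.trans h) hxy
    · by_cases hy : a = y
      · refine ⟨1, ?_, ?_⟩ <;> simp [cnt_cons_succ, cnt_zero, hx, hy, Ne.symm hxy]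
      · rw [FL_cons, if_neg (by simp [hx, hy])] at h
        obtain ⟨n, h1, h2⟩ := ih h
        exact ⟨n + 1, by simp [cnt_cons_succ, hx, hy, h1, h2]⟩

theorem filter_nil_cnt {x y : V} {w : List V}
    (h : FL w x y = []) (n : ℕ) : cnt w x n = 0 ∧ cnt w y n = 0 := by
  rw [FL, List.filter_eq_nil_iff] at h
  constructor <;> {
    apply List.count_eq_zero_of_not_mem
    intro hm
    have := h _ (List.mem_of_mem_take hm)
    simp at this }

theorem chain_of_dom :
    ∀ (w : List V) (x y : V), x ≠ y → Dom w x y → (FL w x y).Chain' (· ≠ ·) := by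
  intro w
  induction w with
  | nil => intro x y _ _; simp [FL]; exact List.isChain_nil
  | cons a w ih =>
    intro x y hxy hd
    by_cases hx : a = x
    · subst hx
      have hd' : Dom w y a := (dom_cons_self hxy).mp hd
      rw [FL_cons, if_pos (Or.inl rfl)]
      rw [List.Chain', List.isChain_cons]
      constructor
      · intro b hb hab
        subst hab
        obtain ⟨n, h1, h2⟩ := first_occ hxy.symm w (by rw [← FL_comm]; exact hb)
        have := (hd' n).1
        omega
      · have := ih y a hxy.symm hd'
        rwa [FL_comm] at this
    · by_cases hy : a = y
      · subst hy; exact absurd hd (not_dom_cons_other hxy)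
      · rw [FL_cons, if_neg (by simp [hx, hy])]
        exact ih x y hxy ((dom_cons_ne hx hy).mp hd)

theorem dom_of_chain :
    ∀ (w : List V) (x y : V), x ≠ y → (FL w x y).Chain' (· ≠ ·) →
      Dom w x y ∨ Dom w y x := by
  intro w
  induction w with
  | nil => intro x y _ _; exact Or.inl (dom_nil x y)
  | cons a w ih =>
    intro x y hxy h
    by_cases hx : a = x
    · subst hx
      rw [FL_cons, if_pos (Or.inl rfl), List.Chain', List.isChain_cons] at h
      have hd' : Dom w y a := by
        cases hfw : (FL w a y).head? with
        | none =>
          rw [List.head?_eq_none_iff] at hfw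
          intro n
          have := filter_nil_cnt hfw n
          omega
        | some b =>
          have hb : b = a ∨ b = y := by
            have hmem : b ∈ FL w a y := List.mem_of_mem_head? (by rw [hfw]; rfl)
            rw [FL, List.mem_filter] at hmem
            simpa using hmem.2
          have hby : b = y := by
            rcases hb with hb | hb
            · exact absurd hb.symm (h.1 b hfw)
            · exact hb
          rw [hby] at hfw
          obtain ⟨n, h1, h2⟩ := first_occ hxy w hfw
          rcases ih a y hxy h.2 with hd | hd
          · have := (hd n).1; omega
          · exact hd
      exact Or.inl ((dom_cons_self hxy).mpr hd')
    · by_cases hy : a = y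
      · subst hy
        rw [FL_comm, FL_cons, if_pos (Or.inl rfl), List.Chain', List.isChain_cons] at h
        have hd' : Dom w x a := by
          cases hfw : (FL w a x).head? with
          | none =>
            rw [List.head?_eq_none_iff] at hfw
            intro n
            have := filter_nil_cnt hfw n
            omega
          | some b =>
            have hb : b = a ∨ b = x := by
              have hmem : b ∈ FL w a x := List.mem_of_mem_head? (by rw [hfw]; rfl)
              rw [FL, List.mem_filter] at hmem
              simpa using hmem.2
            have hbx : b = x := by
              rcases hb with hb | hb
              · exact absurd hb.symm (h.1 b hfw)
              · exact hb
            rw [hbx] at hfw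
            obtain ⟨n, h1, h2⟩ := first_occ (Ne.symm hxy) w hfw
            rcases ih a x hx h.2 with hd | hd
            · have := (hd n).1; omega
            · exact hd
        exact Or.inr ((dom_cons_self (Ne.symm hxy)).mpr hd')
      · rw [FL_cons, if_neg (by simp [hx, hy])] at h
        rcases ih x y hxy h with hd | hd
        · exact Or.inl ((dom_cons_ne hx hy).mpr hd)
        · exact Or.inr ((dom_cons_ne hy hx).mpr hd)

theorem alternate_iff {w : List V} {x y : V} (hxy : x ≠ y) :
    Alternate w x y ↔ Dom w x y ∨ Dom w y x := by
  rw [alternate_iff_chain]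
  constructor
  · exact dom_of_chain w x y hxy
  · rintro (hd | hd)
    · exact chain_of_dom w x y hxy hd
    · rw [FL_comm]; exact chain_of_dom w y x hxy.symm hd


theorem exists_step {w : List V} {v : V} (hv : v ∈ w) :
    ∃ n, cnt w v (n + 1) = cnt w v n + 1 ∧ ∀ u, u ≠ v → cnt w u (n + 1) = cnt w u n := by
  induction w with
  | nil => cases hv
  | cons a w ih =>
    by_cases hav : a = v
    · refine ⟨0, by simp [cnt_cons_succ, cnt_zero, hav], fun u hu => ?_⟩
      simp [cnt_cons_succ, cnt_zero, hav, Ne.symm hu]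
    · have hv' : v ∈ w := by
        rcases List.mem_cons.mp hv with h | h
        · exact absurd h.symm hav
        · exact h
      obtain ⟨n, h1, h2⟩ := ih hv'
      refine ⟨n + 1, ?_, fun u hu => ?_⟩
      · simp only [cnt_cons_succ, h1]; omega
      · simp only [cnt_cons_succ, h2 u hu]

theorem cnt_not_all_eq {w : List V} {x y : V} (hxy : x ≠ y) (hx : x ∈ w) :
    ¬ ∀ n, cnt w x n = cnt w y n := by
  intro h
  obtain ⟨n, h1, h2⟩ := exists_step hx
  have := h2 y (Ne.symm hxy)
  have e1 := h n
  have e2 := h (n + 1)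
  omega

theorem sigma_exists {l : ℕ} {w : List V} {C : Fin l → V}
    (hCinj : Function.Injective C) (hCw : ∀ i, C i ∈ w)
    (hpair : ∀ i j, i ≠ j → Dom w (C i) (C j) ∨ Dom w (C j) (C i)) :
    ∃ σ : Fin l → Fin l, Function.Injective σ ∧
      ∀ (i : Fin l) (n : ℕ),
        (∑ j, (cnt w (C j) n : ℤ)) - (σ i).val ≤ l * cnt w (C i) n ∧
        (l : ℤ) * cnt w (C i) n ≤ (∑ j, (cnt w (C j) n : ℤ)) + l - 1 - (σ i).val := by
  classical
  have hanti : ∀ i j : Fin l, i ≠ j → ¬ ∀ n, cnt w (C i) n = cnt w (C j) n :=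
    fun i j hij => cnt_not_all_eq (fun h => hij (hCinj h)) (hCw i)
  set T : Fin l → Finset (Fin l) :=
    fun i => Finset.univ.filter (fun j => j ≠ i ∧ ∀ n, cnt w (C i) n ≤ cnt w (C j) n) with hT
  have hiT : ∀ i, i ∉ T i := by intro i; simp [hT]
  have hTcard : ∀ i, (T i).card < l := by
    intro i
    have hsub : T i ⊆ Finset.univ.erase i := by
      intro j hj
      rw [hT, Finset.mem_filter] at hj
      exact Finset.mem_erase.mpr ⟨hj.2.1, Finset.mem_univ j⟩
    have := Finset.card_le_card hsub
    have hcard : (Finset.univ.erase i).card = l - 1 := by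
      rw [Finset.card_erase_of_mem (Finset.mem_univ i)]
      simp
    have hl : 0 < l := Fin.pos i
    omega
  have hmono : ∀ i j : Fin l, i ≠ j → (∀ n, cnt w (C j) n ≤ cnt w (C i) n) →
      (T i).card < (T j).card := by
    intro i j hij hdom
    have hsub : insert i (T i) ⊆ T j := by
      intro k hk
      rcases Finset.mem_insert.mp hk with hk | hk
      · subst hk
        rw [hT, Finset.mem_filter]
        exact ⟨Finset.mem_univ _, hij, hdom⟩
      · rw [hT, Finset.mem_filter] at hk ⊢
        obtain ⟨_, hki, hkd⟩ := hk
        have hkj : k ≠ j := by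
          rintro rfl
          exact hanti i k (Ne.symm hki) (fun n => le_antisymm (hkd n) (hdom n))
        exact ⟨Finset.mem_univ _, hkj, fun n => le_trans (hdom n) (hkd n)⟩
    have := Finset.card_le_card hsub
    rw [Finset.card_insert_of_notMem (hiT i)] at this
    omega
  refine ⟨fun i => ⟨(T i).card, hTcard i⟩, ?_, ?_⟩
  · intro i j hσ
    by_contra hne
    have hv : (T i).card = (T j).card := congrArg Fin.val hσ
    rcases hpair i j hne with hd | hd
    · have := hmono i j hne (fun n => (hd n).1); omega
    · have := hmono j i (Ne.symm hne) (fun n => (hd n).1); omega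
  · intro i n
    simp only
    have hpb : ∀ j : Fin l, j ≠ i →
        (cnt w (C j) n : ℤ) ≤ cnt w (C i) n + 1 ∧ (cnt w (C i) n : ℤ) ≤ cnt w (C j) n + 1 := by
      intro j hji
      rcases hpair i j (Ne.symm hji) with hd | hd
      · have h1 := (hd n).1; have h2 := (hd n).2
        constructor <;> [exact_mod_cast le_trans h1 (by omega); exact_mod_cast h2]
      · have h1 := (hd n).1; have h2 := (hd n).2
        constructor <;> [exact_mod_cast h2; exact_mod_cast le_trans h1 (by omega)]
    have hb1 : ∀ j : Fin l, (cnt w (C j) n : ℤ) - cnt w (C i) n ≤ if j ∈ T i then 1 else 0 := by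
      intro j
      by_cases hji : j = i
      · subst hji; simp [hiT j]
      · by_cases hTi : j ∈ T i
        · rw [if_pos hTi]
          have := (hpb j hji).1; omega
        · rw [if_neg hTi]
          rcases hpair i j (fun h => hji h.symm) with hd | hd
          · have := (hd n).1
            have : (cnt w (C j) n : ℤ) ≤ cnt w (C i) n := by exact_mod_cast this
            omega
          · exfalso
            apply hTi
            rw [hT, Finset.mem_filter]
            exact ⟨Finset.mem_univ _, hji, fun m => (hd m).1⟩
    have hb2 : ∀ j : Fin l,
        (cnt w (C i) n : ℤ) - cnt w (C j) n ≤ if j ∈ T i ∨ j = i then 0 else 1 := by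
      intro j
      by_cases hji : j = i
      · subst hji; simp
      · by_cases hTi : j ∈ T i
        · rw [if_pos (Or.inl hTi)]
          rw [hT, Finset.mem_filter] at hTi
          have := hTi.2.2 n
          have : (cnt w (C i) n : ℤ) ≤ cnt w (C j) n := by exact_mod_cast this
          omega
        · rw [if_neg (by tauto)]
          have := (hpb j hji).2; omega
    have hsum1 := Finset.sum_le_sum (fun j (_ : j ∈ Finset.univ) => hb1 j)
    have hsum2 := Finset.sum_le_sum (fun j (_ : j ∈ Finset.univ) => hb2 j)
    have hite1 : (∑ j, if j ∈ T i then (1 : ℤ) else 0) = (T i).card := by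
      rw [Finset.sum_ite_mem, Finset.univ_inter, Finset.sum_const]
      simp
    have hfil : Finset.univ.filter (fun j => j ∈ T i ∨ j = i) = insert i (T i) := by
      ext k
      simp [Finset.mem_insert, or_comm]
    have hite2 : (∑ j, if j ∈ T i ∨ j = i then (0 : ℤ) else 1) = (l : ℤ) - ((T i).card + 1) := by
      have hcards := Finset.card_filter_add_card_filter_not
        (s := (Finset.univ : Finset (Fin l))) (p := fun k => k ∈ T i ∨ k = i)
      rw [hfil, Finset.card_insert_of_notMem (hiT i), Finset.card_univ, Fintype.card_fin] at hcards
      rw [Finset.sum_ite, Finset.sum_const, Finset.sum_const]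
      simp only [smul_zero, nsmul_eq_mul, smul_eq_mul, mul_one, zero_add]
      omega
    have hsplit1 : (∑ j, ((cnt w (C j) n : ℤ) - cnt w (C i) n))
        = (∑ j, (cnt w (C j) n : ℤ)) - l * cnt w (C i) n := by
      rw [Finset.sum_sub_distrib, Finset.sum_const, Finset.card_univ, Fintype.card_fin]
      ring
    have hsplit2 : (∑ j, ((cnt w (C i) n : ℤ) - cnt w (C j) n))
        = (l : ℤ) * cnt w (C i) n - (∑ j, (cnt w (C j) n : ℤ)) := by
      rw [Finset.sum_sub_distrib, Finset.sum_const, Finset.card_univ, Fintype.card_fin]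
      ring
    rw [hsplit1, hite1] at hsum1
    rw [hsplit2, hite2] at hsum2
    constructor <;> linarith


theorem key {l : ℕ} (hl : 4 ≤ l) {w : List V} {σ : Fin l → Fin l}
    (hσinj : Function.Injective σ) {C : Fin l → V}
    (hF : ∀ (i : Fin l) (n : ℕ),
        (∑ j, (cnt w (C j) n : ℤ)) - (σ i).val ≤ l * cnt w (C i) n ∧
        (l : ℤ) * cnt w (C i) n ≤ (∑ j, (cnt w (C j) n : ℤ)) + l - 1 - (σ i).val)
    {z : V} {c d : Fin l} (hcd : c ≠ d)
    (hc : Dom w z (C c) ∨ Dom w (C c) z) (hd : Dom w z (C d) ∨ Dom w (C d) z)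
    (hnone : ∀ e : Fin l, e ≠ c → e ≠ d → ¬(Dom w z (C e) ∨ Dom w (C e) z)) :
    ((σ c).val : ZMod l) = ((σ d).val : ZMod l) + 1 ∨
      ((σ d).val : ZMod l) = ((σ c).val : ZMod l) + 1 := by
  have hl0 : (0 : ℤ) < l := by exact_mod_cast (by omega : 0 < l)
  set N : ℕ → ℤ := fun n => ∑ j, (cnt w (C j) n : ℤ) with hN
  set Win : ℤ → Prop := fun u => ∀ n, u + N n ≤ l * cnt w z n ∧
    (l : ℤ) * cnt w z n ≤ u + N n + 2 * l - 1 with hWin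
  have hmulZ : ∀ a b : ℤ, a ≤ b → (l : ℤ) * a ≤ l * b :=
    fun a b h => mul_le_mul_of_nonneg_left h (le_of_lt hl0)
  -- A: from alternation with a clique letter, get a window
  have hwinOf : ∀ e : Fin l, (Dom w z (C e) ∨ Dom w (C e) z) →
      ∃ u : ℤ, (u = -((σ e).val : ℤ) ∨ u = -((σ e).val : ℤ) - l) ∧ Win u := by
    intro e he
    rcases he with he | he
    · refine ⟨-((σ e).val : ℤ), Or.inl rfl, fun n => ?_⟩
      obtain ⟨hF1, hF2⟩ := hF e n
      obtain ⟨h1, h2⟩ := he n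
      have h1' : ((cnt w (C e) n : ℤ)) ≤ cnt w z n := by exact_mod_cast h1
      have h2' : ((cnt w z n : ℤ)) ≤ cnt w (C e) n + 1 := by exact_mod_cast h2
      have m1 := hmulZ _ _ h1'
      have m2 := hmulZ _ _ h2'
      constructor <;> [linarith; nlinarith [m2]]
    · refine ⟨-((σ e).val : ℤ) - l, Or.inr rfl, fun n => ?_⟩
      obtain ⟨hF1, hF2⟩ := hF e n
      obtain ⟨h1, h2⟩ := he n
      have h1' : ((cnt w z n : ℤ)) ≤ cnt w (C e) n := by exact_mod_cast h1
      have h2' : ((cnt w (C e) n : ℤ)) ≤ cnt w z n + 1 := by exact_mod_cast h2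
      have m1 := hmulZ _ _ h1'
      have m2 := hmulZ _ _ h2'
      constructor <;> nlinarith [m1, m2]
  -- B: converse, a window at a letter's residue forces alternation
  have hdomOf : ∀ (e : Fin l) (u : ℤ), Win u →
      (u = -((σ e).val : ℤ) ∨ u = -((σ e).val : ℤ) - l) →
      (Dom w z (C e) ∨ Dom w (C e) z) := by
    intro e u hW hu
    rcases hu with hu | hu
    · left
      intro n
      obtain ⟨hF1, hF2⟩ := hF e n
      obtain ⟨hW1, hW2⟩ := hW n
      subst hu
      constructor
      · by_contra hcon
        have : cnt w z n + 1 ≤ cnt w (C e) n := by omega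
        have : ((cnt w z n : ℤ)) + 1 ≤ cnt w (C e) n := by exact_mod_cast this
        have := hmulZ _ _ this
        nlinarith
      · by_contra hcon
        have : cnt w (C e) n + 2 ≤ cnt w z n := by omega
        have : ((cnt w (C e) n : ℤ)) + 2 ≤ cnt w z n := by exact_mod_cast this
        have := hmulZ _ _ this
        nlinarith
    · right
      intro n
      obtain ⟨hF1, hF2⟩ := hF e n
      obtain ⟨hW1, hW2⟩ := hW n
      subst hu
      constructor
      · by_contra hcon
        have : cnt w (C e) n + 1 ≤ cnt w z n := by omega
        have : ((cnt w (C e) n : ℤ)) + 1 ≤ cnt w z n := by exact_mod_cast this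
        have := hmulZ _ _ this
        nlinarith
      · by_contra hcon
        have : cnt w z n + 2 ≤ cnt w (C e) n := by omega
        have : ((cnt w z n : ℤ)) + 2 ≤ cnt w (C e) n := by exact_mod_cast this
        have := hmulZ _ _ this
        nlinarith
  obtain ⟨uc, hucEq, hucW⟩ := hwinOf c hc
  obtain ⟨ud, hudEq, hudW⟩ := hwinOf d hd
  have hρc0 : (0 : ℤ) ≤ ((σ c).val : ℤ) := Int.natCast_nonneg _
  have hρcl : ((σ c).val : ℤ) < l := by exact_mod_cast (σ c).isLt
  have hρd0 : (0 : ℤ) ≤ ((σ d).val : ℤ) := Int.natCast_nonneg _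
  have hρdl : ((σ d).val : ℤ) < l := by exact_mod_cast (σ d).isLt
  have hρne : ((σ c).val : ℤ) ≠ ((σ d).val : ℤ) := by
    intro h
    have : (σ c).val = (σ d).val := by exact_mod_cast h
    exact hcd (hσinj (Fin.ext this))
  by_cases h1 : ud - uc = 1 ∨ uc - ud = 1
  · -- conclusion case
    obtain ⟨k, hk⟩ : ∃ k : ℤ, ((σ c).val : ℤ) - (σ d).val = k * l + 1 ∨
        ((σ c).val : ℤ) - (σ d).val = k * l - 1 := by
      rcases hucEq with h | h <;> rcases hudEq with h' | h' <;>
        first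
          | exact ⟨0, by omega⟩
          | exact ⟨1, by omega⟩
          | exact ⟨-1, by omega⟩
    rcases hk with hk | hk
    · left
      have hcast := congrArg (fun t : ℤ => (t : ZMod l)) hk
      push_cast at hcast
      rw [ZMod.natCast_self] at hcast
      linear_combination hcast
    · right
      have hcast := congrArg (fun t : ℤ => (t : ZMod l)) hk
      push_cast at hcast
      rw [ZMod.natCast_self] at hcast
      linear_combination -hcast
  · exfalso
    by_cases h0 : uc = ud
    · rcases hucEq with h | h <;> rcases hudEq with h' | h' <;> omega
    · -- gap at least 2 : find a middle residue
      have hmain : ∀ u1 u2 ρ1 ρ2 : ℤ, (u1 = -ρ1 ∨ u1 = -ρ1 - l) →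
          (u2 = -ρ2 ∨ u2 = -ρ2 - l) → 0 ≤ ρ1 → ρ1 < l → 0 ≤ ρ2 → ρ2 < l → ρ1 ≠ ρ2 →
          Win u1 → Win u2 → u1 + 2 ≤ u2 →
          ∃ u r : ℤ, Win u ∧ (u = -r ∨ u = -r - l) ∧ 0 ≤ r ∧ r < l ∧ r ≠ ρ1 ∧ r ≠ ρ2 := by
        intro u1 u2 ρ1 ρ2 h1e h2e hρ10 hρ1l hρ20 hρ2l hρ12 hW1 hW2 hgap
        have hbet : ∀ u, u1 ≤ u → u ≤ u2 → Win u := by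
          intro u ha hb n
          obtain ⟨ha1, ha2⟩ := hW1 n
          obtain ⟨hb1, hb2⟩ := hW2 n
          constructor <;> linarith
        set r1 : ℤ := if -(u1 + 1) < l then -(u1 + 1) else -(u1 + 1) - l with hr1
        set r2 : ℤ := if -(u1 + 2) < l then -(u1 + 2) else -(u1 + 2) - l with hr2
        have hf1 : (u1 + 1 = -r1 ∨ u1 + 1 = -r1 - l) ∧ 0 ≤ r1 ∧ r1 < l := by
          rw [hr1]; split <;> omega
        have hf2 : (u1 + 2 = -r2 ∨ u1 + 2 = -r2 - l) ∧ 0 ≤ r2 ∧ r2 < l := by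
          rw [hr2]; split <;> omega
        have hgood : (r1 ≠ ρ1 ∧ r1 ≠ ρ2) ∨ (r2 ≠ ρ1 ∧ r2 ≠ ρ2) := by
          rcases h1e with h | h <;> rcases h2e with h' | h' <;> omega
        rcases hgood with ⟨hga, hgb⟩ | ⟨hga, hgb⟩
        · exact ⟨u1 + 1, r1, hbet _ (by omega) (by omega), hf1.1, hf1.2.1, hf1.2.2, hga, hgb⟩
        · exact ⟨u1 + 2, r2, hbet _ (by omega) (by omega), hf2.1, hf2.2.1, hf2.2.2, hga, hgb⟩
      have hres : ∃ u r : ℤ, Win u ∧ (u = -r ∨ u = -r - l) ∧ 0 ≤ r ∧ r < l ∧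
          r ≠ ((σ c).val : ℤ) ∧ r ≠ ((σ d).val : ℤ) := by
        rcases le_total uc ud with hle | hle
        · have hgap : uc + 2 ≤ ud := by omega
          exact hmain uc ud _ _ hucEq hudEq hρc0 hρcl hρd0 hρdl hρne hucW hudW hgap
        · have hgap : ud + 2 ≤ uc := by omega
          obtain ⟨u, r, h⟩ := hmain ud uc _ _ hudEq hucEq hρd0 hρdl hρc0 hρcl
            (Ne.symm hρne) hudW hucW hgap
          exact ⟨u, r, h.1, h.2.1, h.2.2.1, h.2.2.2.1, h.2.2.2.2.2, h.2.2.2.2.1⟩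
      obtain ⟨u, r, hWu, hur, hr0, hrl, hrc, hrd⟩ := hres
      have hσsurj : Function.Surjective σ := Finite.surjective_of_injective hσinj
      obtain ⟨e, he⟩ := hσsurj ⟨r.toNat, by omega⟩
      have hρe : ((σ e).val : ℤ) = r := by
        rw [he]
        simp [Int.toNat_of_nonneg hr0]
      have hec : e ≠ c := fun h => hrc (by rw [← hρe, h])
      have hed : e ≠ d := fun h => hrd (by rw [← hρe, h])
      exact hnone e hec hed (hdomOf e u hWu (by rw [hρe]; exact hur))


end KTP

section AdjacencyFacts

theorem KTP.adjP_inl_inl {l : ℕ} (p q : ℕ) {a b : Fin l} (hab : a ≠ b) :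
    (KTriPlus l p q).Adj (some (Sum.inl a)) (some (Sum.inl b)) := by
  simp [KTriPlus, KTri, SimpleGraph.fromRel_adj, hab]

theorem KTP.adjP_none_inl {l : ℕ} (p q : ℕ) (a : Fin l) :
    (KTriPlus l p q).Adj none (some (Sum.inl a)) ↔ (a.val = p ∨ a.val = q) := by
  simp [KTriPlus, SimpleGraph.fromRel_adj]

theorem KTP.adjP_inr_inl {l : ℕ} (p q : ℕ) (j a : Fin l) :
    (KTriPlus l p q).Adj (some (Sum.inr j)) (some (Sum.inl a)) ↔
      (a.val = j.val ∨ a.val = (j.val + 1) % l) := by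
  simp [KTriPlus, KTri, SimpleGraph.fromRel_adj]

end AdjacencyFacts

/-- For every `ℓ ≥ 4` and every `i` with `2 < i < ℓ`, the graph obtained from `K^△_ℓ`
by adding a new vertex `x` adjacent exactly to the vertices `1` and `i` (0-based: `0`
and `i - 1`) is not word-representable. -/
theorem KTriPlus_not_wordRepresentable (l i : ℕ) (hl : 4 ≤ l) (hi2 : 2 < i) (hil : i < l) :
    ¬ WordRepresentable (KTriPlus l 0 (i - 1)) := by
  rintro ⟨w, hw⟩
  classical
  set G := KTriPlus l 0 (i - 1) with hG
  set C : Fin l → Option (Fin l ⊕ Fin l) := fun j => some (Sum.inl j) with hC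
  have hCinj : Function.Injective C := by
    intro a b h
    simpa [hC] using h
  have hAlt : ∀ x y : Option (Fin l ⊕ Fin l), x ≠ y → G.Adj x y →
      (KTP.Dom w x y ∨ KTP.Dom w y x) := fun x y hxy hadj =>
    (KTP.alternate_iff hxy).mp ((hw.2 x y hxy).mpr hadj)
  have hNAlt : ∀ x y : Option (Fin l ⊕ Fin l), x ≠ y → ¬ G.Adj x y →
      ¬ (KTP.Dom w x y ∨ KTP.Dom w y x) := fun x y hxy hnadj hdd =>
    hnadj ((hw.2 x y hxy).mp ((KTP.alternate_iff hxy).mpr hdd))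
  have hpair : ∀ a b : Fin l, a ≠ b →
      (KTP.Dom w (C a) (C b) ∨ KTP.Dom w (C b) (C a)) := by
    intro a b hab
    exact hAlt _ _ (by simp [hC, hab]) (KTP.adjP_inl_inl _ _ hab)
  obtain ⟨σ, hσinj, hF⟩ := KTP.sigma_exists hCinj (fun j => hw.1 _) hpair
  haveI : NeZero l := ⟨by omega⟩
  have hminj : ∀ a b : Fin l, ((σ a).val : ZMod l) = ((σ b).val : ZMod l) → a = b := by
    intro a b h
    have h2 := congrArg ZMod.val h
    rw [ZMod.val_cast_of_lt (σ a).isLt, ZMod.val_cast_of_lt (σ b).isLt] at h2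
    exact hσinj (Fin.ext h2)
  set succ : Fin l → Fin l := fun j => ⟨(j.val + 1) % l, Nat.mod_lt _ (by omega)⟩ with hsucc
  have hsuccval : ∀ j : Fin l, (succ j).val = (j.val + 1) % l := fun j => rfl
  have hsuccne : ∀ j : Fin l, j ≠ succ j := by
    intro j h
    have h2 := congrArg Fin.val h
    rw [hsuccval] at h2
    have hj := j.isLt
    rcases Nat.lt_or_ge (j.val + 1) l with h' | h'
    · rw [Nat.mod_eq_of_lt h'] at h2; omega
    · have h3 : j.val + 1 = l := by omega
      rw [h3, Nat.mod_self] at h2; omega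
  -- the prime vertices force the cyclic structure on σ
  have hcyc : ∀ j : Fin l, ((σ j).val : ZMod l) = ((σ (succ j)).val : ZMod l) + 1 ∨
      ((σ (succ j)).val : ZMod l) = ((σ j).val : ZMod l) + 1 := by
    intro j
    have hzne : ∀ e : Fin l, (some (Sum.inr j) : Option (Fin l ⊕ Fin l)) ≠ C e := by
      intro e; simp [hC]
    refine KTP.key (z := some (Sum.inr j)) hl hσinj hF (hsuccne j) ?_ ?_ ?_
    · exact hAlt _ _ (hzne j) ((KTP.adjP_inr_inl _ _ j j).mpr (Or.inl rfl))
    · exact hAlt _ _ (hzne (succ j))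
        ((KTP.adjP_inr_inl _ _ j (succ j)).mpr (Or.inr (hsuccval j)))
    · intro e hej hes
      apply hNAlt _ _ (hzne e)
      rw [hG, KTP.adjP_inr_inl]
      rintro (h | h)
      · exact hej (Fin.ext h)
      · exact hes (Fin.ext (h.trans (hsuccval j).symm))
  -- the extra vertex x = none
  set c0 : Fin l := ⟨0, by omega⟩ with hc0
  set qv : Fin l := ⟨i - 1, by omega⟩ with hqv
  have hc0v : c0.val = 0 := rfl
  have hqvv : qv.val = i - 1 := rfl
  have hc0q : c0 ≠ qv := by
    intro h
    have := congrArg Fin.val h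
    rw [hc0v, hqvv] at this
    omega
  have hx : ((σ c0).val : ZMod l) = ((σ qv).val : ZMod l) + 1 ∨
      ((σ qv).val : ZMod l) = ((σ c0).val : ZMod l) + 1 := by
    have hzne : ∀ e : Fin l, (none : Option (Fin l ⊕ Fin l)) ≠ C e := by
      intro e; simp [hC]
    refine KTP.key (z := (none : Option (Fin l ⊕ Fin l))) hl hσinj hF hc0q ?_ ?_ ?_
    · exact hAlt _ _ (hzne c0) ((KTP.adjP_none_inl _ _ c0).mpr (Or.inl hc0v))
    · exact hAlt _ _ (hzne qv) ((KTP.adjP_none_inl _ _ qv).mpr (Or.inr hqvv))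
    · intro e hec heq
      apply hNAlt _ _ (hzne e)
      rw [hG, KTP.adjP_none_inl]
      rintro (h | h)
      · exact hec (Fin.ext h)
      · exact heq (Fin.ext h)
  -- endgame
  set e1 : Fin l := ⟨1, by omega⟩ with he1
  set el : Fin l := ⟨l - 1, by omega⟩ with hel
  have hs0 : succ c0 = e1 := by
    apply Fin.ext
    rw [hsuccval]
    show (0 + 1) % l = 1
    rw [Nat.mod_eq_of_lt (by omega)]
  have hsl : succ el = c0 := by
    apply Fin.ext
    rw [hsuccval]
    show (l - 1 + 1) % l = 0
    rw [Nat.sub_add_cancel (by omega), Nat.mod_self]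
  have hA := hcyc c0
  rw [hs0] at hA
  have hB := hcyc el
  rw [hsl] at hB
  have hq1 : qv ≠ e1 := by
    intro h; have := congrArg Fin.val h; rw [hqvv] at this
    have : i - 1 = 1 := this
    omega
  have hql : qv ≠ el := by
    intro h; have := congrArg Fin.val h; rw [hqvv] at this
    have : i - 1 = l - 1 := this
    omega
  have h1l : e1 ≠ el := by
    intro h; have := congrArg Fin.val h
    have : (1 : ℕ) = l - 1 := this
    omega
  rcases hx with hx | hx
  · rcases hA with hA | hA
    · exact hq1 (hminj _ _ (by linear_combination hA - hx))
    · rcases hB with hB | hB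
      · exact h1l (hminj _ _ (by linear_combination hA - hB))
      · exact hql (hminj _ _ (by linear_combination hB - hx))
  · rcases hA with hA | hA
    · rcases hB with hB | hB
      · exact hql (hminj _ _ (by linear_combination hx - hB))
      · exact h1l (hminj _ _ (by linear_combination hB - hA))
    · exact hq1 (hminj _ _ (by linear_combination hx - hA))
end
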